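/- arXiv:1605.02930 — 12 statements merged into one kernel-verified Lean document; each statement's English description precedes it below -/
import Mathlib

section
/- Let p : ℝ → ℝ be a C^∞ function with p(θ + 2π) = p(θ) for all θ and p(θ) + p''(θ) > 0 for all θ, set L = ∫₀^{2π} p(θ) dθ and Q(θ) = p(θ) + p(θ+π) − L/π, and let f = Q + Q''. Suppose f is not identically zero and all zeros of f are simple (f'(θ) ≠ 0 whenever f(θ) = 0). Then the number of zeros of f in [0, 2π) is a positive multiple of 4. (These zeros are exactly the cusp singularities of the Constant Width Measure Set CWMS(M), so for a generic oval M the number of cusps of CWMS(M) is a positive multiple of 4.) -/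
open Real

open Set Filter Topology
open scoped ContDiff

/-- Near a simple zero, `f y * deriv f x * (y - x) > 0`. -/
lemma sign_near_simple_zero {f : ℝ → ℝ} (hd : Differentiable ℝ f)
    {x : ℝ} (hx : f x = 0) (hdx : deriv f x ≠ 0) :
    ∀ᶠ y in 𝓝[≠] x, 0 < f y * deriv f x * (y - x) := by
  have h : Tendsto (slope f x) (𝓝[≠] x) (𝓝 (deriv f x)) :=
    hasDerivAt_iff_tendsto_slope.mp (hd x).hasDerivAt
  have hopen : IsOpen {z : ℝ | 0 < z * deriv f x} := by
    have : {z : ℝ | 0 < z * deriv f x} = (fun z => z * deriv f x) ⁻¹' (Set.Ioi 0) := rfl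
    rw [this]; exact (isOpen_Ioi).preimage (continuous_id.mul continuous_const)
  have hmem : {z : ℝ | 0 < z * deriv f x} ∈ 𝓝 (deriv f x) :=
    hopen.mem_nhds (by simpa [Set.mem_setOf_eq] using mul_self_pos.mpr hdx)
  filter_upwards [h hmem, self_mem_nhdsWithin] with y hy hy'
  have hyne : y - x ≠ 0 := sub_ne_zero.mpr hy'
  have hslope : slope f x y = f y / (y - x) := by
    simp [slope_def_field, hx]
  have hy2 : 0 < slope f x y * deriv f x := hy
  rw [hslope] at hy2
  have : 0 < f y / (y - x) * deriv f x := hy2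
  have h2 : 0 < (f y / (y - x) * deriv f x) * ((y - x) * (y - x)) :=
    mul_pos this (mul_self_pos.mpr hyne)
  calc (0:ℝ) < (f y / (y - x) * deriv f x) * ((y - x) * (y - x)) := h2
    _ = f y * deriv f x * (y - x) := by field_simp

lemma zeros_finite {f : ℝ → ℝ} (hc : Continuous f) (hd : Differentiable ℝ f)
    (hs : ∀ θ, f θ = 0 → deriv f θ ≠ 0) (u v : ℝ) :
    (Set.Icc u v ∩ {x | f x = 0}).Finite := by
  set S : Set ℝ := Set.Icc u v ∩ {x | f x = 0} with hS
  have hcl : IsClosed S := (isClosed_Icc).inter (isClosed_eq hc continuous_const)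
  have hcomp : IsCompact S := (isCompact_Icc).of_isClosed_subset hcl inter_subset_left
  refine hcomp.finite ?_
  rw [isDiscrete_iff_discreteTopology, discreteTopology_subtype_iff]
  intro x hx
  have hx0 : f x = 0 := hx.2
  have hev : ∀ᶠ y in 𝓝[≠] x, 0 < f y * deriv f x * (y - x) :=
    sign_near_simple_zero hd hx0 (hs x hx0)
  have : ∀ᶠ y in 𝓝[≠] x ⊓ Filter.principal S, False := by
    rw [Filter.eventually_inf_principal]
    filter_upwards [hev] with y h1 h2
    have : f y = 0 := h2.2
    rw [this] at h1; simp at h1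
  exact Filter.eventually_false_iff_eq_bot.mp this

lemma sign_const_of_no_zero {f : ℝ → ℝ} (hc : Continuous f) {a b : ℝ} (hab : a ≤ b)
    (h : ∀ x ∈ Set.Icc a b, f x ≠ 0) : 0 < f a * f b := by
  have ha : f a ≠ 0 := h a ⟨le_refl a, hab⟩
  have hb : f b ≠ 0 := h b ⟨hab, le_refl b⟩
  rcases lt_or_gt_of_ne ha with ha' | ha' <;> rcases lt_or_gt_of_ne hb with hb' | hb'
  · exact mul_pos_of_neg_of_neg ha' hb'
  · exfalso
    obtain ⟨c, hc1, hc2⟩ := intermediate_value_Ioo hab hc.continuousOn ⟨ha', hb'⟩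
    exact h c ⟨le_of_lt hc1.1, le_of_lt hc1.2⟩ hc2
  · exfalso
    obtain ⟨c, hc1, hc2⟩ := intermediate_value_Ioo' hab hc.continuousOn ⟨hb', ha'⟩
    exact h c ⟨le_of_lt hc1.1, le_of_lt hc1.2⟩ hc2
  · exact mul_pos ha' hb'

lemma parity_lemma {f : ℝ → ℝ} (hc : Continuous f) (hd : Differentiable ℝ f)
    (hs : ∀ θ, f θ = 0 → deriv f θ ≠ 0) :
    ∀ n : ℕ, ∀ a b : ℝ, a < b → f a ≠ 0 → f b ≠ 0 →
      (Set.Ioo a b ∩ {x | f x = 0}).ncard = n → (Even n ↔ 0 < f a * f b) := by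
  intro n
  induction n with
  | zero =>
    intro a b hab ha hb hcard
    have hfin : (Set.Ioo a b ∩ {x | f x = 0}).Finite :=
      (zeros_finite hc hd hs a b).subset (inter_subset_inter_left _ Ioo_subset_Icc_self)
    have hempty : Set.Ioo a b ∩ {x | f x = 0} = ∅ := (Set.ncard_eq_zero hfin).mp hcard
    simp only [Even.zero, true_iff]
    apply sign_const_of_no_zero hc (le_of_lt hab)
    intro x hx hfx
    rcases eq_or_lt_of_le hx.1 with rfl | h1
    · exact ha hfx
    rcases eq_or_lt_of_le hx.2 with rfl | h2
    · exact hb hfx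
    have := Set.eq_empty_iff_forall_notMem.mp hempty x
    exact this ⟨⟨h1, h2⟩, hfx⟩
  | succ n ih =>
    intro a b hab ha hb hcard
    set S := Set.Ioo a b ∩ {x | f x = 0} with hSdef
    have hfin : S.Finite :=
      (zeros_finite hc hd hs a b).subset (inter_subset_inter_left _ Ioo_subset_Icc_self)
    have hSne : S.Nonempty := Set.nonempty_of_ncard_ne_zero (by rw [hcard]; exact Nat.succ_ne_zero n)
    obtain ⟨θ, hθS, hθmin⟩ := Set.exists_min_image S id hfin hSne
    simp only [id] at hθmin
    have hθab : θ ∈ Set.Ioo a b := hθS.1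
    have hfθ : f θ = 0 := hθS.2
    have hdθ : deriv f θ ≠ 0 := hs θ hfθ
    have hev := sign_near_simple_zero hd hfθ hdθ
    rw [eventually_nhdsWithin_iff, Metric.eventually_nhds_iff] at hev
    obtain ⟨δ, hδ, hδ'⟩ := hev
    -- left test point y₀
    set y₀ := max ((a + θ)/2) (θ - δ/2) with hy₀def
    have hy₀lt : y₀ < θ := max_lt (by linarith [hθab.1]) (by linarith)
    have hy₀gt : a < y₀ := lt_of_lt_of_le (by linarith [hθab.1]) (le_max_left _ _)
    have hy₀dist : dist y₀ θ < δ := by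
      rw [Real.dist_eq, abs_lt]
      constructor
      · have := le_max_right ((a + θ)/2) (θ - δ/2); linarith
      · linarith
    have hy₀sign : 0 < f y₀ * deriv f θ * (y₀ - θ) :=
      hδ' hy₀dist (by simp only [Set.mem_compl_iff, Set.mem_singleton_iff]; exact ne_of_lt hy₀lt)
    have hy₀ne : f y₀ ≠ 0 := by
      intro h; rw [h] at hy₀sign; simp at hy₀sign
    have hay₀ : 0 < f a * f y₀ := by
      apply sign_const_of_no_zero hc (le_of_lt hy₀gt)
      intro x hx hfx
      rcases eq_or_lt_of_le hx.1 with rfl | h1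
      · exact ha hfx
      · have hxS : x ∈ S := ⟨⟨h1, lt_trans (lt_of_le_of_lt hx.2 hy₀lt) hθab.2⟩, hfx⟩
        have := hθmin x hxS
        have hxlt : x < θ := lt_of_le_of_lt hx.2 hy₀lt
        linarith
    have hF0D : f y₀ * deriv f θ < 0 := by
      nlinarith [hy₀sign, hy₀lt]
    have hfa_d : f a * deriv f θ < 0 := by
      nlinarith [hF0D, hay₀, mul_self_pos.mpr hy₀ne]
    -- next zero / upper bound u
    set S' := S \ {θ} with hS'def
    have hS'fin : S'.Finite := hfin.diff
    have hS'card : S'.ncard = n := by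
      have := Set.ncard_diff_singleton_of_mem hθS
      rw [hcard] at this
      simpa [hS'def] using this
    have hu : ∃ u, θ < u ∧ u ≤ b ∧ ∀ s ∈ S', u ≤ s := by
      rcases S'.eq_empty_or_nonempty with hE | hNE
      · exact ⟨b, hθab.2, le_refl b, by simp [hE]⟩
      · obtain ⟨θ₂, hθ₂S, hθ₂min⟩ := Set.exists_min_image S' id hS'fin hNE
        simp only [id] at hθ₂min
        have hθ₂S'' : θ₂ ∈ S := hθ₂S.1
        refine ⟨θ₂, ?_, le_of_lt hθ₂S''.1.2, hθ₂min⟩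
        rcases lt_or_eq_of_le (hθmin θ₂ hθ₂S'') with h | h
        · exact h
        · exact absurd h.symm hθ₂S.2
    obtain ⟨u, huθ, hub, humin⟩ := hu
    -- right test point a'
    set a' := min ((θ + u)/2) (θ + δ/2) with ha'def
    have ha'gt : θ < a' := lt_min (by linarith) (by linarith)
    have ha'ltu : a' < u := lt_of_le_of_lt (min_le_left _ _) (by linarith)
    have ha'b : a' < b := lt_of_lt_of_le ha'ltu hub
    have ha'dist : dist a' θ < δ := by
      rw [Real.dist_eq, abs_lt]
      constructor
      · linarith
      · have := min_le_right ((θ + u)/2) (θ + δ/2); linarith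
    have ha'sign : 0 < f a' * deriv f θ * (a' - θ) :=
      hδ' ha'dist (by simp only [Set.mem_compl_iff, Set.mem_singleton_iff]; exact ne_of_gt ha'gt)
    have hfa'_d : 0 < f a' * deriv f θ := by
      nlinarith [ha'sign, ha'gt]
    have hfa' : f a' ≠ 0 := by
      intro h; rw [h] at hfa'_d; simp at hfa'_d
    -- zeros in (a', b) are exactly S'
    have hSnew : Set.Ioo a' b ∩ {x | f x = 0} = S' := by
      ext x
      constructor
      · rintro ⟨⟨h1, h2⟩, hfx⟩
        refine ⟨⟨⟨lt_trans (lt_trans hθab.1 ha'gt) h1, h2⟩, hfx⟩, ?_⟩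
        simp only [Set.mem_singleton_iff]
        intro h; rw [h] at h1; exact absurd h1 (not_lt.mpr (le_of_lt ha'gt))
      · rintro ⟨hxS, hxne⟩
        refine ⟨⟨lt_of_lt_of_le ha'ltu (humin x ⟨hxS, hxne⟩), hxS.1.2⟩, hxS.2⟩
    have hIH := ih a' b ha'b hfa' hb (by rw [hSnew]; exact hS'card)
    rw [Nat.even_add_one, hIH]
    have hbne : f b ≠ 0 := hb
    constructor
    · intro h
      have h1 : f a' * f b < 0 :=
        lt_of_le_of_ne (not_lt.mp h) (mul_ne_zero hfa' hbne)
      nlinarith [hfa_d, hfa'_d, h1]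
    · intro h h'
      nlinarith [hfa_d, hfa'_d, h, h']

theorem stmt_2 (p Q f : ℝ → ℝ) (hp : ContDiff ℝ (⊤ : ℕ∞) p)
    (hper : ∀ θ : ℝ, p (θ + 2 * π) = p θ)
    (hpos : ∀ θ : ℝ, p θ + deriv (deriv p) θ > 0)
    (L : ℝ) (hL : L = ∫ θ in (0:ℝ)..(2 * π), p θ)
    (hQ : ∀ θ : ℝ, Q θ = p θ + p (θ + π) - L / π)
    (hf : ∀ θ : ℝ, f θ = Q θ + deriv (deriv Q) θ)
    (hne : ∃ θ : ℝ, f θ ≠ 0)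
    (hsimple : ∀ θ : ℝ, f θ = 0 → deriv f θ ≠ 0) :
    ∃ m : ℕ, 0 < m ∧ {θ ∈ Set.Ico (0:ℝ) (2 * π) | f θ = 0}.ncard = 4 * m := by
  have hπ : (0:ℝ) < π := pi_pos
  have hQdef : Q = fun θ => p θ + p (θ + π) - L / π := funext hQ
  have hp1 : ContDiff ℝ ∞ p := hp.of_le (by simp)
  have hQc : ContDiff ℝ ∞ Q := by
    rw [hQdef]
    exact (hp1.add (hp1.comp ((contDiff_id).add contDiff_const))).sub contDiff_const
  have hQ'c : ContDiff ℝ ∞ (deriv Q) := (contDiff_infty_iff_deriv.mp hQc).2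
  have hQ''c : ContDiff ℝ ∞ (deriv (deriv Q)) := (contDiff_infty_iff_deriv.mp hQ'c).2
  have hfdef : f = fun θ => Q θ + deriv (deriv Q) θ := funext hf
  have hfc : Continuous f := by
    rw [hfdef]; exact hQc.continuous.add hQ''c.continuous
  have hfd : Differentiable ℝ f := by
    rw [hfdef]
    exact (hQc.differentiable (by simp)).add (hQ''c.differentiable (by simp))
  -- periodicity
  have hQper : ∀ θ, Q (θ + π) = Q θ := by
    intro θ
    rw [hQ, hQ, show θ + π + π = θ + 2*π by ring, hper θ]
    ring
  have hQ'per : ∀ θ, deriv Q (θ + π) = deriv Q θ := by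
    intro θ
    have h : (fun x => Q (x + π)) = Q := funext hQper
    calc deriv Q (θ + π) = deriv (fun x => Q (x + π)) θ := (deriv_comp_add_const Q π θ).symm
      _ = deriv Q θ := by rw [h]
  have hQ''per : ∀ θ, deriv (deriv Q) (θ + π) = deriv (deriv Q) θ := by
    intro θ
    have h : (fun x => deriv Q (x + π)) = deriv Q := funext hQ'per
    calc deriv (deriv Q) (θ + π) = deriv (fun x => deriv Q (x + π)) θ :=
          (deriv_comp_add_const (deriv Q) π θ).symm
      _ = deriv (deriv Q) θ := by rw [h]
  have hfper : ∀ θ, f (θ + π) = f θ := by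
    intro θ; rw [hf, hf, hQper, hQ''per]
  have hfperP : Function.Periodic f π := hfper
  -- integral of f over a period is zero
  have hpc : Continuous p := hp1.continuous
  have hQ'd : Differentiable ℝ (deriv Q) := hQ'c.differentiable (by simp)
  have hint2 : ∫ θ in (0:ℝ)..π, deriv (deriv Q) θ = 0 := by
    rw [intervalIntegral.integral_deriv_eq_sub (fun x _ => (hQ'd x))
      (hQ''c.continuous.intervalIntegrable 0 π)]
    have h := hQ'per 0
    rw [zero_add] at h
    rw [h, sub_self]
  have hintp1 : ∫ θ in (0:ℝ)..π, p (θ + π) = ∫ θ in π..(2*π), p θ := by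
    rw [intervalIntegral.integral_comp_add_right p π]
    norm_num [two_mul]
  have hintQ : ∫ θ in (0:ℝ)..π, Q θ = 0 := by
    have h1 : ∫ θ in (0:ℝ)..π, Q θ
        = (∫ θ in (0:ℝ)..π, (p θ + p (θ + π))) - ∫ θ in (0:ℝ)..π, (L/π : ℝ) := by
      rw [hQdef]
      exact intervalIntegral.integral_sub
        ((hpc.add (hpc.comp (continuous_id.add continuous_const))).intervalIntegrable 0 π)
        intervalIntegrable_const
    have h2 : ∫ θ in (0:ℝ)..π, (p θ + p (θ + π))
        = (∫ θ in (0:ℝ)..π, p θ) + ∫ θ in (0:ℝ)..π, p (θ + π) :=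
      intervalIntegral.integral_add (hpc.intervalIntegrable 0 π)
        ((hpc.comp (continuous_id.add continuous_const)).intervalIntegrable 0 π)
    have h3 : (∫ θ in (0:ℝ)..π, p θ) + ∫ θ in π..(2*π), p θ = ∫ θ in (0:ℝ)..(2*π), p θ :=
      intervalIntegral.integral_add_adjacent_intervals (hpc.intervalIntegrable 0 π)
        (hpc.intervalIntegrable π (2*π))
    have h4 : ∫ θ in (0:ℝ)..π, (L/π : ℝ) = L := by
      rw [intervalIntegral.integral_const]
      rw [sub_zero, smul_eq_mul]
      field_simp
    rw [h1, h2, hintp1, h3, ← hL, h4, sub_self]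
  have hintf : ∫ θ in (0:ℝ)..π, f θ = 0 := by
    have : ∫ θ in (0:ℝ)..π, f θ = ∫ θ in (0:ℝ)..π, (Q θ + deriv (deriv Q) θ) := by
      simp only [hf]
    rw [this, intervalIntegral.integral_add (hQc.continuous.intervalIntegrable 0 π)
      (hQ''c.continuous.intervalIntegrable 0 π), hintQ, hint2, add_zero]
  -- f takes both signs
  have hexneg : ∃ x, f x < 0 := by
    by_contra h
    push_neg at h
    rcases em (∃ z, f z = 0) with ⟨z, hz⟩ | hnozero
    · have hmin : IsLocalMin f z := Filter.Eventually.of_forall (fun x => hz ▸ h x)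
      exact hsimple z hz hmin.deriv_eq_zero
    · push_neg at hnozero
      have hpos' : ∀ x ∈ Set.Ioo (0:ℝ) π, 0 < f x :=
        fun x _ => lt_of_le_of_ne (h x) (Ne.symm (hnozero x))
      have := intervalIntegral.intervalIntegral_pos_of_pos_on
        (hfc.intervalIntegrable 0 π) hpos' hπ
      rw [hintf] at this
      exact lt_irrefl 0 this
  have hexpos : ∃ x, 0 < f x := by
    by_contra h
    push_neg at h
    rcases em (∃ z, f z = 0) with ⟨z, hz⟩ | hnozero
    · have hmax : IsLocalMax f z := Filter.Eventually.of_forall (fun x => hz ▸ h x)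
      exact hsimple z hz hmax.deriv_eq_zero
    · push_neg at hnozero
      have hneg' : ∀ x ∈ Set.Ioo (0:ℝ) π, 0 < (-f) x :=
        fun x _ => by simpa using lt_of_le_of_ne (h x) (hnozero x)
      have := intervalIntegral.intervalIntegral_pos_of_pos_on
        (hfc.neg.intervalIntegrable 0 π) hneg' hπ
      simp only [Pi.neg_apply] at this
      rw [intervalIntegral.integral_neg, hintf] at this
      simp at this
  -- a zero of f exists
  have hzero : ∃ z, f z = 0 := by
    obtain ⟨x₁, hx₁⟩ := hexneg
    obtain ⟨x₂, hx₂⟩ := hexpos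
    have h0 : (0:ℝ) ∈ Set.uIcc (f x₁) (f x₂) :=
      Set.mem_uIcc.mpr (Or.inl ⟨le_of_lt hx₁, le_of_lt hx₂⟩)
    obtain ⟨z, _, hz⟩ := intermediate_value_uIcc hfc.continuousOn h0
    exact ⟨z, hz⟩
  -- shift invariance
  have hshift : ∀ (x : ℝ) (n : ℤ), f (x - n * π) = f x := fun x n => hfperP.sub_int_mul_eq n
  -- pick a ∈ [0, π) with f a ≠ 0
  obtain ⟨θ₀, hθ₀⟩ := hne
  set a := θ₀ - ⌊θ₀ / π⌋ * π with hadef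
  have hfa : f a ≠ 0 := by rw [hadef, hshift]; exact hθ₀
  have ha0 : 0 ≤ a := Int.sub_floor_div_mul_nonneg θ₀ hπ
  have haπ : a < π := Int.sub_floor_div_mul_lt θ₀ hπ
  -- a zero z' in (a, a+π)
  obtain ⟨z, hz⟩ := hzero
  set z' := a + ((z - a) - ⌊(z - a) / π⌋ * π) with hz'def
  have hz'zero : f z' = 0 := by
    have : z' = z - ⌊(z - a) / π⌋ * π := by rw [hz'def]; ring
    rw [this, hshift]; exact hz
  have hz'1 : 0 ≤ z' - a := by
    have h := Int.sub_floor_div_mul_nonneg (z - a) hπ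
    rw [hz'def]; linarith
  have hz'2 : z' - a < π := by
    have h := Int.sub_floor_div_mul_lt (z - a) hπ
    rw [hz'def]; linarith
  have hz'ne : z' ≠ a := fun h => hfa (h ▸ hz'zero)
  -- counting
  set Z := {x : ℝ | f x = 0} with hZdef
  have hfin : ∀ u v : ℝ, (Set.Icc u v ∩ Z).Finite := zeros_finite hfc hfd hsimple
  have hfinIco : ∀ u v : ℝ, (Set.Ico u v ∩ Z).Finite :=
    fun u v => (hfin u v).subset (Set.inter_subset_inter_left _ Set.Ico_subset_Icc_self)
  have hshiftZ : ∀ u v : ℝ, (Set.Ico u v ∩ Z).ncard = (Set.Ico (u+π) (v+π) ∩ Z).ncard := by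
    intro u v
    have himg : (fun x => x + π) '' (Set.Ico u v ∩ Z) = Set.Ico (u+π) (v+π) ∩ Z := by
      ext y
      simp only [Set.mem_image, Set.mem_inter_iff, Set.mem_Ico, hZdef, Set.mem_setOf_eq]
      constructor
      · rintro ⟨x, ⟨⟨h1, h2⟩, h3⟩, rfl⟩
        exact ⟨⟨by linarith, by linarith⟩, by rw [hfper x]; exact h3⟩
      · rintro ⟨⟨h1, h2⟩, h3⟩
        refine ⟨y - π, ⟨⟨by linarith, by linarith⟩, ?_⟩, by ring⟩
        have := hfper (y - π)
        rw [sub_add_cancel] at this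
        rw [← this]; exact h3
    rw [← himg, Set.ncard_image_of_injective _ (add_left_injective π)]
  -- Even count in one period
  have hfaπ : f (a + π) ≠ 0 := by rw [hfper]; exact hfa
  set k := (Set.Ioo a (a+π) ∩ Z).ncard with hkdef
  have hk := parity_lemma hfc hfd hsimple k a (a+π) (by linarith) hfa hfaπ rfl
  have hkeven : Even k := hk.mpr (by rw [hfper]; exact mul_self_pos.mpr hfa)
  have hfinIoo : (Set.Ioo a (a+π) ∩ Z).Finite :=
    (hfin a (a+π)).subset (Set.inter_subset_inter_left _ Set.Ioo_subset_Icc_self)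
  have hkpos : 0 < k := by
    rw [hkdef, Set.ncard_pos hfinIoo]
    refine ⟨z', ⟨?_, by linarith⟩, hz'zero⟩
    rcases eq_or_lt_of_le (by linarith : a ≤ z') with h | h
    · exact absurd h.symm hz'ne
    · exact h
  -- decompose [0, 2π)
  have hIcoIoo : Set.Ico a (a+π) ∩ Z = Set.Ioo a (a+π) ∩ Z := by
    ext x
    constructor
    · rintro ⟨⟨h1, h2⟩, h3⟩
      rcases eq_or_lt_of_le h1 with rfl | h1'
      · exact absurd h3 hfa
      · exact ⟨⟨h1', h2⟩, h3⟩
    · rintro ⟨⟨h1, h2⟩, h3⟩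
      exact ⟨⟨le_of_lt h1, h2⟩, h3⟩
  have e1 : Set.Ico (0:ℝ) (2*π) ∩ Z
      = ((Set.Ico 0 a ∩ Z) ∪ (Set.Ico a (a+π) ∩ Z)) ∪ (Set.Ico (a+π) (2*π) ∩ Z) := by
    rw [← Set.union_inter_distrib_right, ← Set.union_inter_distrib_right,
      Set.Ico_union_Ico_eq_Ico ha0 (by linarith),
      Set.Ico_union_Ico_eq_Ico (by linarith) (by linarith)]
  have e2 : Set.Ico a (a+π) ∩ Z = (Set.Ico a π ∩ Z) ∪ (Set.Ico π (a+π) ∩ Z) := by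
    rw [← Set.union_inter_distrib_right, Set.Ico_union_Ico_eq_Ico (le_of_lt haπ) (by linarith)]
  have hd12 : Disjoint (Set.Ico (0:ℝ) a ∩ Z) (Set.Ico a (a+π) ∩ Z) :=
    (Set.Ico_disjoint_Ico_same : Disjoint (Set.Ico (0:ℝ) a) (Set.Ico a (a+π))).mono Set.inter_subset_left Set.inter_subset_left
  have hd123 : Disjoint ((Set.Ico (0:ℝ) a ∩ Z) ∪ (Set.Ico a (a+π) ∩ Z)) (Set.Ico (a+π) (2*π) ∩ Z) := by
    apply Set.disjoint_union_left.mpr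
    constructor
    · exact ((Set.Ico_disjoint_Ico_same :
          Disjoint (Set.Ico (0:ℝ) (a+π)) (Set.Ico (a+π) (2*π))).mono_left
        (Set.Ico_subset_Ico_right (by linarith))).mono Set.inter_subset_left Set.inter_subset_left
    · exact (Set.Ico_disjoint_Ico_same : Disjoint (Set.Ico a (a+π)) (Set.Ico (a+π) (2*π))).mono Set.inter_subset_left
        Set.inter_subset_left
  have hdab : Disjoint (Set.Ico a π ∩ Z) (Set.Ico π (a+π) ∩ Z) :=
    (Set.Ico_disjoint_Ico_same : Disjoint (Set.Ico a π) (Set.Ico π (a+π))).mono Set.inter_subset_left Set.inter_subset_left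
  have hc1 : (Set.Ico (0:ℝ) a ∩ Z).ncard = (Set.Ico π (a+π) ∩ Z).ncard := by
    have := hshiftZ 0 a
    rwa [zero_add] at this
  have hc3 : (Set.Ico (a+π) (2*π) ∩ Z).ncard = (Set.Ico a π ∩ Z).ncard := by
    have := hshiftZ a π
    rw [show π + π = 2*π by ring] at this
    exact this.symm
  have e2card : k = (Set.Ico a π ∩ Z).ncard + (Set.Ico π (a+π) ∩ Z).ncard := by
    rw [hkdef, ← hIcoIoo, e2, Set.ncard_union_eq hdab (hfinIco a π) (hfinIco π (a+π))]
  have htotal : (Set.Ico (0:ℝ) (2*π) ∩ Z).ncard = 2 * k := by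
    rw [e1, Set.ncard_union_eq hd123 ((hfinIco 0 a).union (hfinIco a (a+π)))
      (hfinIco (a+π) (2*π)),
      Set.ncard_union_eq hd12 (hfinIco 0 a) (hfinIco a (a+π))]
    have hn2 : (Set.Ico a (a+π) ∩ Z).ncard = k := by rw [hkdef, hIcoIoo]
    rw [hn2, hc1, hc3, e2card]
    ring
  obtain ⟨m, hm⟩ := hkeven
  refine ⟨m, ?_, ?_⟩
  · by_contra h
    push_neg at h
    interval_cases m
    · rw [hm] at hkpos; exact lt_irrefl 0 hkpos
  · have hsep : {θ ∈ Set.Ico (0:ℝ) (2 * π) | f θ = 0} = Set.Ico (0:ℝ) (2*π) ∩ Z := by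
      ext x
      simp only [Set.mem_setOf_eq, Set.mem_inter_iff, hZdef, Set.mem_sep_iff]
    rw [hsep, htotal, hm]
    ring
end

section
/- Fix a positive integer n and let p(θ) = 4n² + 2 + cos(2nθ). Then p(θ) + p''(θ) > 0 for all θ (so p is the Minkowski support function of an oval M_{4n}), and, with L = ∫₀^{2π} p(θ) dθ and Q(θ) = p(θ) + p(θ+π) − L/π, the function Q + Q'' has exactly 4n zeros in [0, 2π). Hence the Constant Width Measure Set of M_{4n} has exactly 4n cusp singularities. -/
open Real

lemma hd_cos_aux (a θ : ℝ) : HasDerivAt (fun x => Real.cos (a * x)) (-a * Real.sin (a * θ)) θ := by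
  have h := (Real.hasDerivAt_cos (a * θ)).comp θ ((hasDerivAt_id θ).const_mul a)
  simpa [Function.comp_def, mul_comm, mul_one] using h

lemma hd_sin_aux (a θ : ℝ) : HasDerivAt (fun x => Real.sin (a * x)) (a * Real.cos (a * θ)) θ := by
  have h := (Real.hasDerivAt_sin (a * θ)).comp θ ((hasDerivAt_id θ).const_mul a)
  simpa [Function.comp_def, mul_comm, mul_one] using h

lemma card_aux (n : ℕ) (hn : 0 < n) :
    {θ ∈ Set.Ico (0:ℝ) (2 * π) | Real.cos (2 * n * θ) = 0}.ncard = 4 * n := by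
  have hπ := Real.pi_pos
  have hπ0 : π ≠ 0 := ne_of_gt hπ
  have hn' : (0:ℝ) < n := by exact_mod_cast hn
  have hset : {θ ∈ Set.Ico (0:ℝ) (2 * π) | Real.cos (2 * n * θ) = 0}
      = (fun k : ℕ => (2*(k:ℝ)+1)*π/(4*n)) '' (Finset.range (4*n) : Finset ℕ) := by
    ext θ
    simp only [Set.mem_setOf_eq, Set.mem_Ico, Set.mem_image, Finset.coe_range, Set.mem_Iio]
    constructor
    · rintro ⟨⟨h0, h2⟩, hc⟩
      rw [Real.cos_eq_zero_iff] at hc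
      obtain ⟨k, hk⟩ := hc
      have hθ : θ = (2*(k:ℝ)+1)*π/(4*n) := by
        field_simp at hk ⊢
        linarith
      have hk0 : 0 ≤ k := by
        by_contra hneg
        push_neg at hneg
        have hk1 : k ≤ -1 := by omega
        have hk1' : (k:ℝ) ≤ -1 := by exact_mod_cast hk1
        have hlt : (2*(k:ℝ)+1)*π/(4*n) < 0 := by
          apply div_neg_of_neg_of_pos
          · nlinarith
          · positivity
        rw [hθ] at h0; linarith
      have hklt : k < 4*n := by
        by_contra hge
        push_neg at hge
        have hge' : (4*(n:ℝ)) ≤ (k:ℝ) := by exact_mod_cast hge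
        have : 2*π ≤ (2*(k:ℝ)+1)*π/(4*n) := by
          rw [le_div_iff₀ (by positivity)]
          nlinarith
        rw [hθ] at h2; linarith
      refine ⟨k.toNat, by omega, ?_⟩
      have hkk : ((k.toNat : ℕ) : ℝ) = (k:ℝ) := by exact_mod_cast Int.toNat_of_nonneg hk0
      rw [hθ, hkk]
    · rintro ⟨k, hk, rfl⟩
      have hkr : (k:ℝ) + 1 ≤ 4*n := by exact_mod_cast hk
      refine ⟨⟨by positivity, ?_⟩, ?_⟩
      · rw [div_lt_iff₀ (by positivity)]
        nlinarith
      · rw [Real.cos_eq_zero_iff]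
        refine ⟨k, ?_⟩
        field_simp
        push_cast; ring
  rw [hset]
  rw [Set.ncard_image_of_injective _ ?_, Set.ncard_coe_finset, Finset.card_range]
  intro a b hab
  simp only at hab
  field_simp at hab
  have h : (a:ℝ) = b := by linarith
  exact_mod_cast h

theorem stmt_3 (n : ℕ) (hn : 0 < n) (p Q : ℝ → ℝ)
    (hp : ∀ θ : ℝ, p θ = 4 * (n : ℝ) ^ 2 + 2 + Real.cos (2 * n * θ))
    (L : ℝ) (hL : L = ∫ θ in (0:ℝ)..(2 * π), p θ)
    (hQ : ∀ θ : ℝ, Q θ = p θ + p (θ + π) - L / π) :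
    (∀ θ : ℝ, p θ + deriv (deriv p) θ > 0) ∧
    {θ ∈ Set.Ico (0:ℝ) (2 * π) | Q θ + deriv (deriv Q) θ = 0}.ncard = 4 * n := by
  have hπ := Real.pi_pos
  have hπ0 : π ≠ 0 := ne_of_gt hπ
  have hn1 : (1:ℝ) ≤ n := by exact_mod_cast hn
  have hpf : p = fun θ => 4 * (n : ℝ) ^ 2 + 2 + Real.cos (2 * n * θ) := funext hp
  -- second derivative of p
  have hp1 : deriv p = fun θ => -(2*(n:ℝ)) * Real.sin (2*n*θ) := by
    funext θ
    rw [hpf]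
    exact ((hd_cos_aux (2*n) θ).const_add _).deriv
  have hp2 : ∀ θ, deriv (deriv p) θ = -(2*(n:ℝ)) * (2*n * Real.cos (2*n*θ)) := by
    intro θ
    rw [hp1]
    exact ((hd_sin_aux (2*n) θ).const_mul (-(2*(n:ℝ)))).deriv
  constructor
  · intro θ
    rw [hp θ, hp2 θ]
    have hc1 := Real.cos_le_one (2*(n:ℝ)*θ)
    have hc2 := Real.neg_one_le_cos (2*(n:ℝ)*θ)
    nlinarith [mul_nonneg (by nlinarith : (0:ℝ) ≤ 4*(n:ℝ)^2-1)
      (by linarith : (0:ℝ) ≤ 1 - Real.cos (2*(n:ℝ)*θ))]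
  -- value of L
  have hLval : L = (4*(n:ℝ)^2+2) * (2*π) := by
    rw [hL, hpf]
    have hn2 : (2*(n:ℝ)) ≠ 0 := by positivity
    rw [intervalIntegral.integral_add (intervalIntegrable_const) (by
      apply Continuous.intervalIntegrable; continuity)]
    rw [intervalIntegral.integral_const]
    have h2 : (∫ θ in (0:ℝ)..(2*π), Real.cos (2 * n * θ)) = 0 := by
      rw [intervalIntegral.integral_comp_mul_left Real.cos hn2, integral_cos]
      have h3 : (2*(n:ℝ))*(2*π) = ((4*n : ℕ):ℝ) * π := by push_cast; ring
      rw [h3, Real.sin_nat_mul_pi (4*n)]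
      simp
    rw [h2]
    simp [mul_comm]
  -- Q is 2 cos(2nθ)
  have hQf : Q = fun θ => 2 * Real.cos (2*(n:ℝ)*θ) := by
    funext θ
    rw [hQ θ, hp θ, hp (θ + π), hLval]
    have h4 : 2*(n:ℝ)*(θ+π) = 2*n*θ + n*(2*π) := by ring
    rw [h4, Real.cos_add_nat_mul_two_pi]
    field_simp
    ring
  have hQ2 : ∀ θ, deriv (deriv Q) θ = 2 * (-(2*(n:ℝ)) * (2*n * Real.cos (2*n*θ))) := by
    have hQ1 : deriv Q = fun θ => 2 * (-(2*(n:ℝ)) * Real.sin (2*n*θ)) := by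
      funext θ
      rw [hQf]
      exact ((hd_cos_aux (2*n) θ).const_mul 2).deriv
    intro θ
    rw [hQ1]
    have : HasDerivAt (fun θ => 2 * (-(2*(n:ℝ)) * Real.sin (2*n*θ)))
        (2 * (-(2*(n:ℝ)) * (2*n * Real.cos (2*n*θ)))) θ := by
      have := ((hd_sin_aux (2*n) θ).const_mul (-(2*(n:ℝ)))).const_mul 2
      simpa [mul_assoc] using this
    exact this.deriv
  -- set equality
  have hsets : {θ ∈ Set.Ico (0:ℝ) (2 * π) | Q θ + deriv (deriv Q) θ = 0}
      = {θ ∈ Set.Ico (0:ℝ) (2 * π) | Real.cos (2 * n * θ) = 0} := by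
    ext θ
    simp only [Set.mem_setOf_eq, and_congr_right_iff]
    intro _
    have hqθ : Q θ = 2 * Real.cos (2*(n:ℝ)*θ) := by rw [hQf]
    rw [hQ2 θ, hqθ]
    constructor
    · intro h
      have h5 : (2 - 8*(n:ℝ)^2) * Real.cos (2*n*θ) = 0 := by linarith
      rcases mul_eq_zero.mp h5 with h6 | h6
      · exfalso; nlinarith
      · exact h6
    · intro h
      rw [h]; ring
  rw [hsets]
  exact card_aux n hn
end

section
/- Let p : ℝ → ℝ be a C^∞ function with p(θ + 2π) = p(θ) for all θ and p(θ) + p''(θ) > 0 for all θ, and set L = ∫₀^{2π} p(θ) dθ and Q(θ) = p(θ) + p(θ+π) − L/π. Then ∫₀^{2π} |Q(θ) + Q''(θ)| dθ ≤ 4L; that is, the length of the Constant Width Measure Set of the oval M satisfies L_{CWMS(M)} ≤ 4 L_M. -/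
open Real

theorem stmt_4 (p Q : ℝ → ℝ) (hp : ContDiff ℝ (⊤ : ℕ∞) p)
    (hper : ∀ θ : ℝ, p (θ + 2 * π) = p θ)
    (hpos : ∀ θ : ℝ, p θ + deriv (deriv p) θ > 0)
    (L : ℝ) (hL : L = ∫ θ in (0:ℝ)..(2 * π), p θ)
    (hQ : ∀ θ : ℝ, Q θ = p θ + p (θ + π) - L / π) :
    (∫ θ in (0:ℝ)..(2 * π), |Q θ + deriv (deriv Q) θ|) ≤ 4 * L := by
  have hp0 : ContDiff ℝ (↑(⊤:ℕ∞)) p := hp.of_le (by simp)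
  have hp1 : ContDiff ℝ (↑(⊤:ℕ∞)) (deriv p) := (contDiff_infty_iff_deriv.mp hp0).2
  have hp2 : ContDiff ℝ (↑(⊤:ℕ∞)) (deriv (deriv p)) := (contDiff_infty_iff_deriv.mp hp1).2
  have hdp : Differentiable ℝ p := (contDiff_infty_iff_deriv.mp hp0).1
  have hdp1 : Differentiable ℝ (deriv p) := (contDiff_infty_iff_deriv.mp hp1).1
  -- periodicity
  have hperP : Function.Periodic p (2 * π) := hper
  have hperd : Function.Periodic (deriv p) (2 * π) := by
    intro x
    have h1 : (fun y => p (y + 2 * π)) = p := funext hper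
    have := deriv_comp_add_const p (2 * π) x
    rw [h1] at this
    exact this.symm
  -- derivative of shifted function
  have hshift : ∀ c : ℝ, deriv (fun θ => p (θ + c)) = fun θ => deriv p (θ + c) := by
    intro c; funext x; exact deriv_comp_add_const p c x
  have hshift1 : ∀ c : ℝ, deriv (fun θ => deriv p (θ + c)) = fun θ => deriv (deriv p) (θ + c) := by
    intro c; funext x; exact deriv_comp_add_const (deriv p) c x
  have hQfun : Q = fun θ => p θ + p (θ + π) - L / π := funext hQ
  have hdshift : ∀ x : ℝ, DifferentiableAt ℝ (fun θ : ℝ => p (θ + π)) x := by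
    intro x
    exact (hdp (x + π)).comp x (differentiableAt_id.add_const π)
  have hdshift1 : ∀ x : ℝ, DifferentiableAt ℝ (fun θ : ℝ => deriv p (θ + π)) x := by
    intro x
    exact (hdp1 (x + π)).comp x (differentiableAt_id.add_const π)
  have hderivQ : deriv Q = fun θ => deriv p θ + deriv p (θ + π) := by
    rw [hQfun]; funext x
    rw [deriv_sub_const, deriv_fun_add (hdp x) (hdshift x), deriv_comp_add_const]
  have hderiv2Q : deriv (deriv Q) = fun θ => deriv (deriv p) θ + deriv (deriv p) (θ + π) := by
    rw [hderivQ]; funext x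
    rw [deriv_fun_add (hdp1 x) (hdshift1 x), deriv_comp_add_const]
  set f : ℝ → ℝ := fun θ => p θ + deriv (deriv p) θ with hf
  have hfc : Continuous f := hp0.continuous.add hp2.continuous
  have hQQ : ∀ θ, Q θ + deriv (deriv Q) θ = f θ + f (θ + π) - L / π := by
    intro θ
    rw [hQ, hderiv2Q]; simp only [hf]; ring
  -- ∫ deriv (deriv p) over [a, a+2π] = 0
  have hintpp : ∀ a : ℝ, (∫ θ in a..(a + 2 * π), deriv (deriv p) θ) = 0 := by
    intro a
    rw [intervalIntegral.integral_deriv_eq_sub (fun x _ => hdp1 x)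
      (hp2.continuous.intervalIntegrable _ _)]
    rw [hperd a]; ring
  have hπ : (0:ℝ) < π := Real.pi_pos
  -- ∫ f over any period = L
  have hintf : ∀ a : ℝ, (∫ θ in a..(a + 2 * π), f θ) = L := by
    intro a
    have h1 : (∫ θ in a..(a + 2 * π), f θ)
        = (∫ θ in a..(a + 2 * π), p θ) + ∫ θ in a..(a + 2 * π), deriv (deriv p) θ := by
      exact intervalIntegral.integral_add (hp0.continuous.intervalIntegrable _ _)
        (hp2.continuous.intervalIntegrable _ _)
    rw [h1, hintpp a, add_zero]
    have := hperP.intervalIntegral_add_eq a 0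
    rw [this, hL]; norm_num
  -- L ≥ 0
  have hLpos : 0 < L := by
    have h0 : (0:ℝ) < 0 + 2 * π := by positivity
    calc 0 < ∫ θ in (0:ℝ)..(0 + 2 * π), f θ := by
          apply intervalIntegral.intervalIntegral_pos_of_pos_on
            (hfc.intervalIntegrable _ _)
          · intro x _; exact hpos x
          · linarith
      _ = L := hintf 0
  have hLdiv : 0 ≤ L / π := le_of_lt (div_pos hLpos hπ)
  -- pointwise bound
  have hbound : ∀ θ ∈ Set.Icc (0:ℝ) (2 * π),
      |Q θ + deriv (deriv Q) θ| ≤ f θ + f (θ + π) + L / π := by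
    intro θ _
    rw [hQQ θ]
    have h1 : 0 ≤ f θ + f (θ + π) := by
      have := hpos θ; have := hpos (θ + π); simp only [hf]; linarith
    have h2 : |f θ + f (θ + π) - L / π| ≤ |f θ + f (θ + π)| + |L / π| := abs_sub _ _
    rw [abs_of_nonneg h1, abs_of_nonneg hLdiv] at h2
    exact h2
  -- integrability of |Q + Q''|
  have hQc : Continuous fun θ => Q θ + deriv (deriv Q) θ := by
    have : (fun θ => Q θ + deriv (deriv Q) θ) = fun θ => f θ + f (θ + π) - L / π :=
      funext hQQ
    rw [this]
    exact (hfc.add (hfc.comp (continuous_id.add continuous_const))).sub continuous_const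
  have hfs : Continuous (fun θ : ℝ => f (θ + π)) :=
    hfc.comp (continuous_id.add continuous_const)
  have hGc : Continuous fun θ => f θ + f (θ + π) + L / π := (hfc.add hfs).add continuous_const
  have hmono : (∫ θ in (0:ℝ)..(2 * π), |Q θ + deriv (deriv Q) θ|)
      ≤ ∫ θ in (0:ℝ)..(2 * π), (f θ + f (θ + π) + L / π) := by
    apply intervalIntegral.integral_mono_on (by positivity)
      (hQc.abs.intervalIntegrable _ _) (hGc.intervalIntegrable _ _) hbound
  -- compute RHS
  have hint2 : (∫ θ in (0:ℝ)..(2 * π), f (θ + π)) = L := by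
    rw [intervalIntegral.integral_comp_add_right f π]
    have := hintf π
    rw [show π + 2 * π = 2 * π + π by ring] at this
    simpa using this
  have hint1 : (∫ θ in (0:ℝ)..(2 * π), f θ) = L := by
    have := hintf 0; simpa using this
  have hrhs : (∫ θ in (0:ℝ)..(2 * π), (f θ + f (θ + π) + L / π)) = 4 * L := by
    rw [intervalIntegral.integral_add (f := fun θ => f θ + f (θ + π)) ((hfc.add hfs).intervalIntegrable _ _)
      (intervalIntegrable_const),
      intervalIntegral.integral_add (hfc.intervalIntegrable _ _) (hfs.intervalIntegrable _ _),
      hint1, hint2, intervalIntegral.integral_const, smul_eq_mul]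
    field_simp
    ring
  linarith [hmono, hrhs.le, hrhs.ge]
end

section
/- Let p : ℝ → ℝ be a C^∞ function with p(θ + 2π) = p(θ) for all θ and p(θ) + p''(θ) > 0 for all θ, and set L = ∫₀^{2π} p(θ) dθ. Then there exist at least 4 distinct values θ ∈ [0, 2π) with p(θ) + p''(θ) = L/(2π). (Equivalently, the radius of curvature of the oval M attains the value L_M/(2π) at least 4 times, so for a generic oval the Spherical Measure Set SMS(M) has at least 4 cusp singularities.) -/
open Real intervalIntegral Set
open scoped ContDiff

open Real intervalIntegral Set
open scoped ContDiff

lemma sh_per_deriv {F : ℝ → ℝ} {T : ℝ} (h : Function.Periodic F T) :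
    Function.Periodic (deriv F) T := by
  intro x
  have h1 : (fun y : ℝ => F (y + T)) = F := funext h
  calc deriv F (x + T) = deriv (fun y => F (y + T)) x := (deriv_comp_add_const F T x).symm
    _ = deriv F x := by rw [h1]

lemma sh_constSign {f : ℝ → ℝ} (hf : Continuous f) {u v : ℝ}
    (h : ∀ x ∈ Ioo u v, f x ≠ 0) :
    (∀ x ∈ Ioo u v, 0 < f x) ∨ (∀ x ∈ Ioo u v, f x < 0) := by
  by_contra hcon
  push_neg at hcon
  obtain ⟨⟨x, hx, hx2⟩, ⟨y, hy, hy2⟩⟩ := hcon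
  have hxneg : f x < 0 := lt_of_le_of_ne hx2 (h x hx)
  have hypos : 0 < f y := lt_of_le_of_ne hy2 (fun e => h y hy e.symm)
  rcases le_total x y with hxy | hyx
  · obtain ⟨c, hc, hfc⟩ := intermediate_value_Icc hxy hf.continuousOn
      (Set.mem_Icc.2 ⟨hxneg.le, hypos.le⟩)
    exact h c ⟨lt_of_lt_of_le hx.1 hc.1, lt_of_le_of_lt hc.2 hy.2⟩ hfc
  · obtain ⟨c, hc, hfc⟩ := intermediate_value_Icc' hyx hf.continuousOn
      (Set.mem_Icc.2 ⟨hxneg.le, hypos.le⟩)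
    exact h c ⟨lt_of_lt_of_le hy.1 hc.1, lt_of_le_of_lt hc.2 hx.2⟩ hfc

lemma sh_intPos {F : ℝ → ℝ} (hF : Continuous F) {u v x₀ : ℝ}
    (hx : x₀ ∈ Ioo u v) (hnn : ∀ x ∈ Icc u v, 0 ≤ F x) (hpos : 0 < F x₀) :
    0 < ∫ x in u..v, F x := by
  obtain ⟨ε, hε, hball⟩ := Metric.isOpen_iff.1 (isOpen_lt continuous_const hF) x₀ hpos
  set δ : ℝ := min (ε/2) (min ((x₀ - u)/2) ((v - x₀)/2)) with hδdef
  have hδ : 0 < δ := by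
    refine lt_min (by linarith) (lt_min (by linarith [hx.1]) (by linarith [hx.2]))
  have hδε : δ < ε := lt_of_le_of_lt (min_le_left _ _) (by linarith)
  have hδu : u < x₀ - δ := by
    have h2 : δ ≤ (x₀ - u)/2 := le_trans (min_le_right _ _) (min_le_left _ _)
    linarith [hx.1]
  have hδv : x₀ + δ < v := by
    have h2 : δ ≤ (v - x₀)/2 := le_trans (min_le_right _ _) (min_le_right _ _)
    linarith [hx.2]
  have hmidpos : ∀ x ∈ Ioo (x₀ - δ) (x₀ + δ), 0 < F x := by
    intro x hx'
    apply hball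
    simp only [Metric.mem_ball, Real.dist_eq]
    have := hx'.1; have := hx'.2
    rw [abs_lt]; constructor <;> linarith
  have hint : ∀ a b : ℝ, IntervalIntegrable F MeasureTheory.volume a b :=
    fun a b => hF.intervalIntegrable a b
  have e1 : ∫ x in u..v, F x =
      (∫ x in u..(x₀ - δ), F x) + (∫ x in (x₀-δ)..(x₀+δ), F x) + ∫ x in (x₀+δ)..v, F x := by
    rw [integral_add_adjacent_intervals (hint _ _) (hint _ _),
      integral_add_adjacent_intervals (hint _ _) (hint _ _)]
  have p1 : 0 ≤ ∫ x in u..(x₀ - δ), F x :=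
    integral_nonneg (by linarith) (fun x hx' => hnn x ⟨hx'.1, by linarith [hx'.2]⟩)
  have p2 : 0 < ∫ x in (x₀-δ)..(x₀+δ), F x :=
    intervalIntegral_pos_of_pos_on (hint _ _) hmidpos (by linarith)
  have p3 : 0 ≤ ∫ x in (x₀+δ)..v, F x :=
    integral_nonneg (by linarith) (fun x hx' => hnn x ⟨by linarith [hx'.1], hx'.2⟩)
  rw [e1]; linarith

lemma sh_gsign_pos {a b : ℝ} (hab : a ≤ b) (hba : b ≤ a + 2*π) {θ : ℝ}
    (hθ : θ ∈ Ioo a b) :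
    Real.cos ((b-a)/2) < Real.cos (θ - (a+b)/2) := by
  have hπ := Real.pi_pos
  have hd0 : (0:ℝ) ≤ (b-a)/2 := by linarith
  have hdπ : (b-a)/2 ≤ π := by linarith
  have habs : |θ - (a+b)/2| < (b-a)/2 := by
    rw [abs_lt]; constructor <;> [linarith [hθ.1]; linarith [hθ.2]]
  calc Real.cos ((b-a)/2) < Real.cos |θ - (a+b)/2| :=
        Real.cos_lt_cos_of_nonneg_of_le_pi (abs_nonneg _) hdπ habs
    _ = Real.cos (θ - (a+b)/2) := Real.cos_abs _

lemma sh_gsign_neg {a b : ℝ} (hab : a ≤ b) (hba : b ≤ a + 2*π) {θ : ℝ}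
    (hθ : θ ∈ Ioo b (a + 2*π)) :
    Real.cos (θ - (a+b)/2) < Real.cos ((b-a)/2) := by
  have hπ := Real.pi_pos
  set d := (b-a)/2 with hd
  set x := θ - (a+b)/2 with hx
  have hd0 : (0:ℝ) ≤ d := by rw [hd]; linarith
  have hx1 : d < x := by rw [hd, hx]; have := hθ.1; linarith
  have hx2 : x < 2*π - d := by rw [hd, hx]; have := hθ.2; linarith
  rcases le_or_gt x π with hxπ | hxπ
  · exact Real.cos_lt_cos_of_nonneg_of_le_pi hd0 hxπ hx1
  · have h1 : Real.cos x = Real.cos (2*π - x) := by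
      rw [show 2*π - x = -(x - 2*π) by ring, Real.cos_neg, Real.cos_sub_two_pi]
    rw [h1]
    exact Real.cos_lt_cos_of_nonneg_of_le_pi hd0 (by linarith) (by linarith)

lemma sh_kernel {f : ℝ → ℝ} (hf : Continuous f) (hper : Function.Periodic f (2*π))
    (h0 : (∫ θ in (0:ℝ)..(2*π), f θ) = 0)
    (hc : (∫ θ in (0:ℝ)..(2*π), f θ * Real.cos θ) = 0)
    (hs : (∫ θ in (0:ℝ)..(2*π), f θ * Real.sin θ) = 0)
    {a b : ℝ} (hab : a ≤ b) (hba : b ≤ a + 2*π)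
    (hfpos : ∀ x ∈ Icc a b, 0 ≤ f x)
    (hfneg : ∀ x ∈ Icc b (a + 2*π), f x ≤ 0)
    {x₀ : ℝ} (hx₀ : x₀ ∈ Ioo a (a + 2*π)) (hx₀b : x₀ ≠ b) (hfx₀ : f x₀ ≠ 0) :
    False := by
  have hπ := Real.pi_pos
  set m : ℝ := (a+b)/2 with hm
  set k : ℝ := Real.cos ((b-a)/2) with hk
  set g : ℝ → ℝ := fun θ => Real.cos (θ - m) - k with hg
  have hgcont : Continuous g := by
    exact (Real.continuous_cos.comp (continuous_id.sub continuous_const)).sub continuous_const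
  have hga : g a = 0 := by
    simp only [hg, hm, hk]
    rw [show a - (a+b)/2 = -((b-a)/2) by ring, Real.cos_neg, sub_self]
  have hgb : g b = 0 := by
    simp only [hg, hm, hk]
    rw [show b - (a+b)/2 = (b-a)/2 by ring, sub_self]
  have hga2 : g (a + 2*π) = 0 := by
    simp only [hg, hm, hk]
    rw [show a + 2*π - (a+b)/2 = -((b-a)/2) + 2*π by ring, Real.cos_add_two_pi,
      Real.cos_neg, sub_self]
  have hgpos : ∀ θ ∈ Ioo a b, 0 < g θ := by
    intro θ hθ
    have := sh_gsign_pos hab hba hθ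
    simp only [hg, hm, hk]; linarith
  have hgneg : ∀ θ ∈ Ioo b (a + 2*π), g θ < 0 := by
    intro θ hθ
    have := sh_gsign_neg hab hba hθ
    simp only [hg, hm, hk]; linarith
  -- nonnegativity of f * g on the window
  have hFnn : ∀ x ∈ Icc a (a + 2*π), 0 ≤ f x * g x := by
    intro x hx
    rcases le_total x b with hxb | hbx
    · rcases eq_or_lt_of_le hx.1 with h1 | h1
      · rw [← h1, hga, mul_zero]
      rcases eq_or_lt_of_le hxb with h2 | h2
      · rw [h2, hgb, mul_zero]
      exact mul_nonneg (hfpos x ⟨hx.1, hxb⟩) (hgpos x ⟨h1, h2⟩).le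
    · rcases eq_or_lt_of_le hbx with h1 | h1
      · rw [← h1, hgb, mul_zero]
      rcases eq_or_lt_of_le hx.2 with h2 | h2
      · rw [h2, hga2, mul_zero]
      exact mul_nonneg_of_nonpos_of_nonpos (hfneg x ⟨hbx, hx.2⟩) (hgneg x ⟨h1, h2⟩).le
  have hFx₀ : 0 < f x₀ * g x₀ := by
    rcases lt_trichotomy x₀ b with h | h | h
    · have hf0 : 0 < f x₀ := lt_of_le_of_ne (hfpos x₀ ⟨hx₀.1.le, h.le⟩) (Ne.symm hfx₀)
      exact mul_pos hf0 (hgpos x₀ ⟨hx₀.1, h⟩)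
    · exact absurd h hx₀b
    · have hf0 : f x₀ < 0 := lt_of_le_of_ne (hfneg x₀ ⟨h.le, hx₀.2.le⟩) hfx₀
      exact mul_pos_of_neg_of_neg hf0 (hgneg x₀ ⟨h, hx₀.2⟩)
  have hpos : 0 < ∫ x in a..(a + 2*π), f x * g x :=
    sh_intPos (hf.mul hgcont) hx₀ hFnn hFx₀
  -- but the integral is zero
  have hgper : Function.Periodic g (2*π) := by
    intro x
    simp only [hg]
    rw [show x + 2*π - m = x - m + 2*π by ring, Real.cos_add_two_pi]
  have hFper : Function.Periodic (fun x => f x * g x) (2*π) := hper.mul hgper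
  have hshift : (∫ x in a..(a + 2*π), f x * g x) = ∫ x in (0:ℝ)..(2*π), f x * g x := by
    have := hFper.intervalIntegral_add_eq a 0
    simpa using this
  have hexp : ∀ θ : ℝ, f θ * g θ =
      Real.cos m * (f θ * Real.cos θ) + Real.sin m * (f θ * Real.sin θ) + (-k) * f θ := by
    intro θ
    simp only [hg, Real.cos_sub]
    ring
  have hzero : (∫ x in (0:ℝ)..(2*π), f x * g x) = 0 := by
    have hi1 : IntervalIntegrable (fun θ => f θ * Real.cos θ) MeasureTheory.volume 0 (2*π) :=
      (hf.mul Real.continuous_cos).intervalIntegrable _ _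
    have hi2 : IntervalIntegrable (fun θ => f θ * Real.sin θ) MeasureTheory.volume 0 (2*π) :=
      (hf.mul Real.continuous_sin).intervalIntegrable _ _
    have hi3 : IntervalIntegrable f MeasureTheory.volume 0 (2*π) :=
      hf.intervalIntegrable _ _
    calc (∫ x in (0:ℝ)..(2*π), f x * g x)
        = ∫ x in (0:ℝ)..(2*π), (Real.cos m * (f x * Real.cos x)
            + Real.sin m * (f x * Real.sin x) + (-k) * f x) := by
          congr 1; funext θ; exact hexp θ
      _ = (∫ x in (0:ℝ)..(2*π), Real.cos m * (f x * Real.cos x))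
            + (∫ x in (0:ℝ)..(2*π), Real.sin m * (f x * Real.sin x))
            + ∫ x in (0:ℝ)..(2*π), (-k) * f x := by
          rw [integral_add ((hi1.const_mul _).add (hi2.const_mul _)) (hi3.const_mul _),
            integral_add (hi1.const_mul _) (hi2.const_mul _)]
      _ = Real.cos m * 0 + Real.sin m * 0 + (-k) * 0 := by
          rw [integral_const_mul, integral_const_mul, integral_const_mul, hc, hs, h0]
      _ = 0 := by ring
  rw [hshift, hzero] at hpos
  exact lt_irrefl 0 hpos

lemma sh_aux {f : ℝ → ℝ} (hf : Continuous f) (hper : Function.Periodic f (2*π))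
    (h0 : (∫ θ in (0:ℝ)..(2*π), f θ) = 0)
    (hc : (∫ θ in (0:ℝ)..(2*π), f θ * Real.cos θ) = 0)
    (hs : (∫ θ in (0:ℝ)..(2*π), f θ * Real.sin θ) = 0)
    {z₁ z₂ z₃ : ℝ} (h12 : z₁ ≤ z₂) (h23 : z₂ ≤ z₃) (h3 : z₃ < z₁ + 2*π)
    (hz1 : f z₁ = 0) (hz2 : f z₂ = 0) (hz3 : f z₃ = 0)
    {x₀ : ℝ} (hx₀ : x₀ ∈ Ioo z₁ (z₁ + 2*π)) (hfx₀ : f x₀ ≠ 0)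
    (hA1 : ∀ x ∈ Ioo z₁ z₂, 0 < f x)
    (hA2 : (∀ x ∈ Ioo z₂ z₃, 0 < f x) ∨ (∀ x ∈ Ioo z₂ z₃, f x < 0))
    (hA3 : (∀ x ∈ Ioo z₃ (z₁ + 2*π), 0 < f x) ∨ (∀ x ∈ Ioo z₃ (z₁ + 2*π), f x < 0)) :
    False := by
  have hπ := Real.pi_pos
  have hz1' : f (z₁ + 2*π) = 0 := by rw [hper z₁]; exact hz1
  have hx₀2 : x₀ ≠ z₂ := fun h => hfx₀ (h ▸ hz2)
  have hx₀3 : x₀ ≠ z₃ := fun h => hfx₀ (h ▸ hz3)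
  rcases hA2 with h2p | h2n
  · rcases hA3 with h3p | h3n
    · -- (+,+,+): f ≥ 0 on window, integral positive
      have hnn : ∀ x ∈ Icc z₁ (z₁ + 2*π), 0 ≤ f x := by
        intro x hx
        rcases lt_trichotomy x z₂ with h | h | h
        · rcases eq_or_lt_of_le hx.1 with h1 | h1
          · rw [← h1, hz1]
          · exact (hA1 x ⟨h1, h⟩).le
        · rw [h, hz2]
        rcases lt_trichotomy x z₃ with h' | h' | h'
        · exact (h2p x ⟨h, h'⟩).le
        · rw [h', hz3]
        rcases eq_or_lt_of_le hx.2 with h2 | h2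
        · rw [h2, hz1']
        · exact (h3p x ⟨h', h2⟩).le
      have hfx₀pos : 0 < f x₀ := lt_of_le_of_ne (hnn x₀ ⟨hx₀.1.le, hx₀.2.le⟩) (Ne.symm hfx₀)
      have hpos := sh_intPos hf hx₀ hnn hfx₀pos
      have hshift : (∫ x in z₁..(z₁ + 2*π), f x) = ∫ x in (0:ℝ)..(2*π), f x := by
        have := hper.intervalIntegral_add_eq z₁ 0
        simpa using this
      rw [hshift, h0] at hpos
      exact lt_irrefl 0 hpos
    · -- (+,+,-): kernel with a = z₁, b = z₃
      refine sh_kernel hf hper h0 hc hs (le_trans h12 h23) h3.le ?_ ?_ hx₀ hx₀3 hfx₀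
      · intro x hx
        rcases lt_trichotomy x z₂ with h | h | h
        · rcases eq_or_lt_of_le hx.1 with h1 | h1
          · rw [← h1, hz1]
          · exact (hA1 x ⟨h1, h⟩).le
        · rw [h, hz2]
        · rcases eq_or_lt_of_le hx.2 with h2 | h2
          · rw [h2, hz3]
          · exact (h2p x ⟨h, h2⟩).le
      · intro x hx
        rcases eq_or_lt_of_le hx.1 with h1 | h1
        · rw [← h1, hz3]
        rcases eq_or_lt_of_le hx.2 with h2 | h2
        · rw [h2, hz1']
        · exact (h3n x ⟨h1, h2⟩).le
  · rcases hA3 with h3p | h3n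
    · -- (+,-,+): kernel with a = z₃, b = z₂ + 2π
      have hab : z₃ ≤ z₂ + 2*π := by linarith
      have hba : z₂ + 2*π ≤ z₃ + 2*π := by linarith
      have hz2' : f (z₂ + 2*π) = 0 := by rw [hper z₂]; exact hz2
      have hfpos : ∀ x ∈ Icc z₃ (z₂ + 2*π), 0 ≤ f x := by
        intro x hx
        rcases le_total x (z₁ + 2*π) with h | h
        · rcases eq_or_lt_of_le hx.1 with h1 | h1
          · rw [← h1, hz3]
          rcases eq_or_lt_of_le h with h2 | h2
          · rw [h2, hz1']
          · exact (h3p x ⟨h1, h2⟩).le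
        · have hfx : f x = f (x - 2*π) := by
            rw [← hper (x - 2*π)]; ring_nf
          rw [hfx]
          rcases eq_or_lt_of_le h with h1 | h1
          · rw [← h1]; simpa using hz1.ge
          rcases eq_or_lt_of_le hx.2 with h2 | h2
          · rw [h2]; simpa using hz2.ge
          · exact (hA1 (x - 2*π) ⟨by linarith, by linarith⟩).le
      have hfneg : ∀ x ∈ Icc (z₂ + 2*π) (z₃ + 2*π), f x ≤ 0 := by
        intro x hx
        have hfx : f x = f (x - 2*π) := by rw [← hper (x - 2*π)]; ring_nf
        rw [hfx]
        rcases eq_or_lt_of_le hx.1 with h1 | h1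
        · rw [← h1]; simpa using hz2.le
        rcases eq_or_lt_of_le hx.2 with h2 | h2
        · rw [h2]; simpa using hz3.le
        · exact (h2n (x - 2*π) ⟨by linarith, by linarith⟩).le
      rcases lt_trichotomy x₀ z₃ with h | h | h
      · have hy : f (x₀ + 2*π) ≠ 0 := by rw [hper x₀]; exact hfx₀
        refine sh_kernel hf hper h0 hc hs hab hba hfpos hfneg
          (x₀ := x₀ + 2*π) ⟨by linarith [hx₀.1], by linarith [hx₀.2]⟩ ?_ hy
        intro he
        exact hx₀2 (by linarith [he])
      · exact hfx₀ (h ▸ hz3)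
      · refine sh_kernel hf hper h0 hc hs hab hba hfpos hfneg
          (x₀ := x₀) ⟨h, by linarith [hx₀.2]⟩ ?_ hfx₀
        intro he
        have := hx₀.2; linarith [he]
    · -- (+,-,-): kernel with a = z₁, b = z₂
      refine sh_kernel hf hper h0 hc hs h12 (by linarith) ?_ ?_ hx₀ hx₀2 hfx₀
      · intro x hx
        rcases eq_or_lt_of_le hx.1 with h1 | h1
        · rw [← h1, hz1]
        rcases eq_or_lt_of_le hx.2 with h2 | h2
        · rw [h2, hz2]
        · exact (hA1 x ⟨h1, h2⟩).le
      · intro x hx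
        rcases lt_trichotomy x z₃ with h | h | h
        · rcases eq_or_lt_of_le hx.1 with h1 | h1
          · rw [← h1, hz2]
          · exact (h2n x ⟨h1, h⟩).le
        · rw [h, hz3]
        · rcases eq_or_lt_of_le hx.2 with h2 | h2
          · rw [h2, hz1']
          · exact (h3n x ⟨h, h2⟩).le

lemma sh_case {f : ℝ → ℝ} (hf : Continuous f) (hper : Function.Periodic f (2*π))
    (h0 : (∫ θ in (0:ℝ)..(2*π), f θ) = 0)
    (hc : (∫ θ in (0:ℝ)..(2*π), f θ * Real.cos θ) = 0)
    (hs : (∫ θ in (0:ℝ)..(2*π), f θ * Real.sin θ) = 0)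
    {z₁ z₂ z₃ : ℝ} (h12 : z₁ ≤ z₂) (h23 : z₂ ≤ z₃) (h3 : z₃ < z₁ + 2*π)
    (hz1 : f z₁ = 0) (hz2 : f z₂ = 0) (hz3 : f z₃ = 0)
    (hnz : ∀ x ∈ Ioo z₁ (z₁ + 2*π), f x = 0 → x = z₂ ∨ x = z₃)
    {x₀ : ℝ} (hx₀ : x₀ ∈ Ioo z₁ (z₁ + 2*π)) (hfx₀ : f x₀ ≠ 0) :
    False := by
  have hne1 : ∀ x ∈ Ioo z₁ z₂, f x ≠ 0 := by
    intro x hx he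
    rcases hnz x ⟨hx.1, by linarith [hx.2]⟩ he with h | h
    · exact absurd h (ne_of_lt hx.2)
    · exact absurd h (ne_of_lt (lt_of_lt_of_le hx.2 h23))
  have hne2 : ∀ x ∈ Ioo z₂ z₃, f x ≠ 0 := by
    intro x hx he
    rcases hnz x ⟨lt_of_le_of_lt h12 hx.1, by linarith [hx.2]⟩ he with h | h
    · exact absurd h (ne_of_gt hx.1)
    · exact absurd h (ne_of_lt hx.2)
  have hne3 : ∀ x ∈ Ioo z₃ (z₁ + 2*π), f x ≠ 0 := by
    intro x hx he
    rcases hnz x ⟨lt_of_le_of_lt (le_trans h12 h23) hx.1, hx.2⟩ he with h | h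
    · exact absurd h (ne_of_gt (lt_of_le_of_lt h23 hx.1))
    · exact absurd h (ne_of_gt hx.1)
  have hA2 := sh_constSign hf hne2
  have hA3 := sh_constSign hf hne3
  rcases sh_constSign hf hne1 with h1p | h1n
  · exact sh_aux hf hper h0 hc hs h12 h23 h3 hz1 hz2 hz3 hx₀ hfx₀ h1p hA2 hA3
  · -- apply sh_aux to -f
    set F : ℝ → ℝ := fun x => -(f x) with hF
    have hFc : Continuous F := hf.neg
    have hFper : Function.Periodic F (2*π) := by
      intro x; simp only [hF, hper x]
    have hF0 : (∫ θ in (0:ℝ)..(2*π), F θ) = 0 := by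
      simp only [hF, integral_neg, h0, neg_zero]
    have hFcos : (∫ θ in (0:ℝ)..(2*π), F θ * Real.cos θ) = 0 := by
      simp only [hF, neg_mul, integral_neg, hc, neg_zero]
    have hFsin : (∫ θ in (0:ℝ)..(2*π), F θ * Real.sin θ) = 0 := by
      simp only [hF, neg_mul, integral_neg, hs, neg_zero]
    refine sh_aux hFc hFper hF0 hFcos hFsin h12 h23 h3 (by simp [hF, hz1]) (by simp [hF, hz2])
      (by simp [hF, hz3]) hx₀ (by simp [hF, hfx₀]) ?_ ?_ ?_
    · intro x hx; simpa [hF] using h1n x hx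
    · rcases hA2 with h | h
      · right; intro x hx; simpa [hF] using h x hx
      · left; intro x hx; simpa [hF] using h x hx
    · rcases hA3 with h | h
      · right; intro x hx; simpa [hF] using h x hx
      · left; intro x hx; simpa [hF] using h x hx

lemma sh_int_one {p : ℝ → ℝ} (hp : ContDiff ℝ ∞ p) (hper : Function.Periodic p (2*π)) :
    (∫ θ in (0:ℝ)..(2*π), deriv (deriv p) θ) = 0 := by
  have hπ := Real.pi_pos
  have hdp : ContDiff ℝ ∞ (deriv p) := (contDiff_infty_iff_deriv.mp hp).2
  have hd2 : ∀ x : ℝ, HasDerivAt (deriv p) (deriv (deriv p) x) x :=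
    fun x => (hdp.differentiable (by norm_num) x).hasDerivAt
  have h := integral_eq_sub_of_hasDerivAt (f := deriv p) (a := (0:ℝ)) (b := 2*π)
    (fun x _ => hd2 x)
    (((contDiff_infty_iff_deriv.mp hdp).2.continuous).intervalIntegrable _ _)
  rw [h]
  have := sh_per_deriv hper 0
  simp only [zero_add] at this
  rw [this, sub_self]

lemma sh_int_cos {p : ℝ → ℝ} (hp : ContDiff ℝ ∞ p) (hper : Function.Periodic p (2*π)) :
    (∫ θ in (0:ℝ)..(2*π), (p θ + deriv (deriv p) θ) * Real.cos θ) = 0 := by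
  have hπ := Real.pi_pos
  have hdp : ContDiff ℝ ∞ (deriv p) := (contDiff_infty_iff_deriv.mp hp).2
  have hd1 : ∀ x : ℝ, HasDerivAt p (deriv p x) x :=
    fun x => (hp.differentiable (by norm_num) x).hasDerivAt
  have hd2 : ∀ x : ℝ, HasDerivAt (deriv p) (deriv (deriv p) x) x :=
    fun x => (hdp.differentiable (by norm_num) x).hasDerivAt
  have hu : ∀ x : ℝ, HasDerivAt (fun θ => deriv p θ * Real.cos θ + p θ * Real.sin θ)
      ((p x + deriv (deriv p) x) * Real.cos x) x := by
    intro x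
    have h1 := ((hd2 x).mul (Real.hasDerivAt_cos x)).add ((hd1 x).mul (Real.hasDerivAt_sin x))
    exact h1.congr_deriv (by ring)
  have hcont : Continuous fun θ => (p θ + deriv (deriv p) θ) * Real.cos θ :=
    (hp.continuous.add (contDiff_infty_iff_deriv.mp hdp).2.continuous).mul Real.continuous_cos
  have h := integral_eq_sub_of_hasDerivAt (a := (0:ℝ)) (b := 2*π)
    (fun x _ => hu x) (hcont.intervalIntegrable _ _)
  rw [h]
  have e1 : deriv p (2*π) = deriv p 0 := by
    have := sh_per_deriv hper 0; simpa using this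
  have e2 : p (2*π) = p 0 := by have := hper 0; simpa using this
  simp [e1, e2, Real.cos_two_pi, Real.sin_two_pi]

lemma sh_int_sin {p : ℝ → ℝ} (hp : ContDiff ℝ ∞ p) (hper : Function.Periodic p (2*π)) :
    (∫ θ in (0:ℝ)..(2*π), (p θ + deriv (deriv p) θ) * Real.sin θ) = 0 := by
  have hπ := Real.pi_pos
  have hdp : ContDiff ℝ ∞ (deriv p) := (contDiff_infty_iff_deriv.mp hp).2
  have hd1 : ∀ x : ℝ, HasDerivAt p (deriv p x) x :=
    fun x => (hp.differentiable (by norm_num) x).hasDerivAt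
  have hd2 : ∀ x : ℝ, HasDerivAt (deriv p) (deriv (deriv p) x) x :=
    fun x => (hdp.differentiable (by norm_num) x).hasDerivAt
  have hu : ∀ x : ℝ, HasDerivAt (fun θ => deriv p θ * Real.sin θ - p θ * Real.cos θ)
      ((p x + deriv (deriv p) x) * Real.sin x) x := by
    intro x
    have h1 := ((hd2 x).mul (Real.hasDerivAt_sin x)).sub ((hd1 x).mul (Real.hasDerivAt_cos x))
    exact h1.congr_deriv (by ring)
  have hcont : Continuous fun θ => (p θ + deriv (deriv p) θ) * Real.sin θ :=
    (hp.continuous.add (contDiff_infty_iff_deriv.mp hdp).2.continuous).mul Real.continuous_sin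
  have h := integral_eq_sub_of_hasDerivAt (a := (0:ℝ)) (b := 2*π)
    (fun x _ => hu x) (hcont.intervalIntegrable _ _)
  rw [h]
  have e1 : deriv p (2*π) = deriv p 0 := by
    have := sh_per_deriv hper 0; simpa using this
  have e2 : p (2*π) = p 0 := by have := hper 0; simpa using this
  simp [e1, e2, Real.cos_two_pi, Real.sin_two_pi]

lemma sh_sort3 {P : ℝ → Prop} {u v w : ℝ} (hu : P u) (hv : P v) (hw : P w) :
    ∃ a b d, a ≤ b ∧ b ≤ d ∧ P a ∧ P b ∧ P d ∧
      ∀ y, (y = u ∨ y = v ∨ y = w) → (y = a ∨ y = b ∨ y = d) := by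
  rcases le_total u v with h1 | h1
  · rcases le_total v w with h2 | h2
    · exact ⟨u, v, w, h1, h2, hu, hv, hw, by tauto⟩
    · rcases le_total u w with h3 | h3
      · exact ⟨u, w, v, h3, h2, hu, hw, hv, by tauto⟩
      · exact ⟨w, u, v, h3, h1, hw, hu, hv, by tauto⟩
  · rcases le_total u w with h3 | h3
    · exact ⟨v, u, w, h1, h3, hv, hu, hw, by tauto⟩
    · rcases le_total v w with h2 | h2
      · exact ⟨v, w, u, h2, h3, hv, hw, hu, by tauto⟩
      · exact ⟨w, v, u, h2, h1, hw, hv, hu, by tauto⟩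



open Real

theorem stmt_7 (p : ℝ → ℝ) (hp : ContDiff ℝ (⊤ : ℕ∞) p)
    (hper : ∀ θ : ℝ, p (θ + 2 * π) = p θ)
    (hpos : ∀ θ : ℝ, p θ + deriv (deriv p) θ > 0)
    (L : ℝ) (hL : L = ∫ θ in (0:ℝ)..(2 * π), p θ) :
    ∃ θ₁ θ₂ θ₃ θ₄ : ℝ,
      θ₁ ∈ Set.Ico (0:ℝ) (2 * π) ∧ θ₂ ∈ Set.Ico (0:ℝ) (2 * π) ∧
      θ₃ ∈ Set.Ico (0:ℝ) (2 * π) ∧ θ₄ ∈ Set.Ico (0:ℝ) (2 * π) ∧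
      θ₁ ≠ θ₂ ∧ θ₁ ≠ θ₃ ∧ θ₁ ≠ θ₄ ∧ θ₂ ≠ θ₃ ∧ θ₂ ≠ θ₄ ∧ θ₃ ≠ θ₄ ∧
      p θ₁ + deriv (deriv p) θ₁ = L / (2 * π) ∧
      p θ₂ + deriv (deriv p) θ₂ = L / (2 * π) ∧
      p θ₃ + deriv (deriv p) θ₃ = L / (2 * π) ∧
      p θ₄ + deriv (deriv p) θ₄ = L / (2 * π) := by
  classical
  have hπ := Real.pi_pos
  have hp' : ContDiff ℝ ∞ p := hp.of_le (by simp)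
  have hpper : Function.Periodic p (2*π) := hper
  set c : ℝ := L / (2*π) with hcdef
  set f : ℝ → ℝ := fun θ => p θ + deriv (deriv p) θ - c with hfdef
  have hdcont : Continuous (deriv (deriv p)) :=
    (contDiff_infty_iff_deriv.mp (contDiff_infty_iff_deriv.mp hp').2).2.continuous
  have hfcont : Continuous f := (hp'.continuous.add hdcont).sub continuous_const
  have hfper : Function.Periodic f (2*π) := by
    intro x
    have h1 := hpper x
    have h2 := sh_per_deriv (sh_per_deriv hpper) x
    simp only [hfdef]
    rw [h1, h2]
  have hiρ : IntervalIntegrable (fun θ => p θ + deriv (deriv p) θ)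
      MeasureTheory.volume 0 (2*π) := (hp'.continuous.add hdcont).intervalIntegrable _ _
  have h0 : (∫ θ in (0:ℝ)..(2*π), f θ) = 0 := by
    have hsplit : (∫ θ in (0:ℝ)..(2*π), f θ)
        = (∫ θ in (0:ℝ)..(2*π), (p θ + deriv (deriv p) θ)) - ∫ θ in (0:ℝ)..(2*π), c := by
      exact integral_sub hiρ (continuous_const.intervalIntegrable _ _)
    have hsplit2 : (∫ θ in (0:ℝ)..(2*π), (p θ + deriv (deriv p) θ))
        = (∫ θ in (0:ℝ)..(2*π), p θ) + ∫ θ in (0:ℝ)..(2*π), deriv (deriv p) θ :=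
      integral_add (hp'.continuous.intervalIntegrable _ _) (hdcont.intervalIntegrable _ _)
    rw [hsplit, hsplit2, sh_int_one hp' hpper, integral_const, ← hL, hcdef]
    rw [smul_eq_mul]
    field_simp
    ring
  have hcos : (∫ θ in (0:ℝ)..(2*π), f θ * Real.cos θ) = 0 := by
    have hsplit : (∫ θ in (0:ℝ)..(2*π), f θ * Real.cos θ)
        = (∫ θ in (0:ℝ)..(2*π), (p θ + deriv (deriv p) θ) * Real.cos θ)
          - ∫ θ in (0:ℝ)..(2*π), c * Real.cos θ := by
      rw [← integral_sub (f := fun θ => (p θ + deriv (deriv p) θ) * Real.cos θ) (g := fun θ => c * Real.cos θ) (((hp'.continuous.add hdcont).mul Real.continuous_cos).intervalIntegrable _ _)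
        ((continuous_const.mul Real.continuous_cos).intervalIntegrable _ _)]
      congr 1; funext θ; simp only [hfdef]; ring
    rw [hsplit, sh_int_cos hp' hpper, integral_const_mul, integral_cos]
    simp
  have hsin : (∫ θ in (0:ℝ)..(2*π), f θ * Real.sin θ) = 0 := by
    have hsplit : (∫ θ in (0:ℝ)..(2*π), f θ * Real.sin θ)
        = (∫ θ in (0:ℝ)..(2*π), (p θ + deriv (deriv p) θ) * Real.sin θ)
          - ∫ θ in (0:ℝ)..(2*π), c * Real.sin θ := by
      rw [← integral_sub (f := fun θ => (p θ + deriv (deriv p) θ) * Real.sin θ) (g := fun θ => c * Real.sin θ) (((hp'.continuous.add hdcont).mul Real.continuous_sin).intervalIntegrable _ _)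
        ((continuous_const.mul Real.continuous_sin).intervalIntegrable _ _)]
      congr 1; funext θ; simp only [hfdef]; ring
    rw [hsplit, sh_int_sin hp' hpper, integral_const_mul, integral_sin]
    simp
  have hfeq : ∀ t : ℝ, f t = 0 → p t + deriv (deriv p) t = L / (2 * π) := by
    intro t ht
    simp only [hfdef] at ht
    rw [show L / (2 * π) = c from rfl]
    linarith
  have h2π3 : (3:ℝ) < 2 * π := by nlinarith [Real.pi_gt_three]
  by_contra hcon
  by_cases hallzero : ∀ x ∈ Ico (0:ℝ) (2*π), f x = 0
  · apply hcon
    refine ⟨0, 1, 2, 3, ⟨le_refl _, by linarith⟩, ⟨by norm_num, by linarith⟩,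
      ⟨by norm_num, by linarith⟩, ⟨by norm_num, by linarith⟩,
      by norm_num, by norm_num, by norm_num, by norm_num, by norm_num, by norm_num,
      hfeq 0 (hallzero 0 ⟨le_refl _, by linarith⟩),
      hfeq 1 (hallzero 1 ⟨by norm_num, by linarith⟩),
      hfeq 2 (hallzero 2 ⟨by norm_num, by linarith⟩),
      hfeq 3 (hallzero 3 ⟨by norm_num, by linarith⟩)⟩
  push_neg at hallzero
  obtain ⟨x₀, hx₀Ico, hfx₀⟩ := hallzero
  -- there is at least one zero in [0, 2π)
  have hzero_ex : ∃ z ∈ Ico (0:ℝ) (2*π), f z = 0 := by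
    by_contra hno
    push_neg at hno
    have hne : ∀ x ∈ Ioo (0:ℝ) (2*π), f x ≠ 0 := fun x hx => hno x ⟨hx.1.le, hx.2⟩
    rcases sh_constSign hfcont hne with hpo | hne'
    · have := intervalIntegral_pos_of_pos_on (hfcont.intervalIntegrable _ _) hpo (by linarith)
      rw [h0] at this
      exact lt_irrefl 0 this
    · have := intervalIntegral_pos_of_pos_on (f := fun x => -(f x))
        ((hfcont.neg).intervalIntegrable _ _) (fun x hx => neg_pos.2 (hne' x hx)) (by linarith)
      rw [integral_neg, h0, neg_zero] at this
      exact lt_irrefl 0 this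
  obtain ⟨z, hzIco, hfz⟩ := hzero_ex
  -- there are at most three zeros in [0, 2π)
  have h3 : ∃ u v w : ℝ, ∀ y ∈ Ico (0:ℝ) (2*π), f y = 0 → y = u ∨ y = v ∨ y = w := by
    by_contra hcc
    push_neg at hcc
    obtain ⟨w₁, hw₁, hfw₁, _, _, _⟩ := hcc 0 0 0
    obtain ⟨w₂, hw₂, hfw₂, hw₂1, -, -⟩ := hcc w₁ w₁ w₁
    obtain ⟨w₃, hw₃, hfw₃, hw₃1, hw₃2, -⟩ := hcc w₁ w₂ w₂
    obtain ⟨w₄, hw₄, hfw₄, hw₄1, hw₄2, hw₄3⟩ := hcc w₁ w₂ w₃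
    exact hcon ⟨w₁, w₂, w₃, w₄, hw₁, hw₂, hw₃, hw₄,
      (Ne.symm hw₂1), (Ne.symm hw₃1), (Ne.symm hw₄1), (Ne.symm hw₃2), (Ne.symm hw₄2),
      (Ne.symm hw₄3), hfeq _ hfw₁, hfeq _ hfw₂, hfeq _ hfw₃, hfeq _ hfw₄⟩
  obtain ⟨u, v, w, hall⟩ := h3
  set P : ℝ → Prop := fun t => t ∈ Ico (0:ℝ) (2*π) ∧ f t = 0 with hPdef
  have hPz : P z := ⟨hzIco, hfz⟩
  set u' : ℝ := if P u then u else z with hu'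
  set v' : ℝ := if P v then v else z with hv'
  set w' : ℝ := if P w then w else z with hw'
  have hPu' : P u' := by
    by_cases h : P u
    · rw [hu', if_pos h]; exact h
    · rw [hu', if_neg h]; exact hPz
  have hPv' : P v' := by
    by_cases h : P v
    · rw [hv', if_pos h]; exact h
    · rw [hv', if_neg h]; exact hPz
  have hPw' : P w' := by
    by_cases h : P w
    · rw [hw', if_pos h]; exact h
    · rw [hw', if_neg h]; exact hPz
  have hall' : ∀ y ∈ Ico (0:ℝ) (2*π), f y = 0 → y = u' ∨ y = v' ∨ y = w' := by
    intro y hy hfy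
    have hPy : P y := ⟨hy, hfy⟩
    rcases hall y hy hfy with rfl | rfl | rfl
    · left; rw [hu', if_pos hPy]
    · right; left; rw [hv', if_pos hPy]
    · right; right; rw [hw', if_pos hPy]
  obtain ⟨a, b, d, hab, hbd, hPa, hPb, hPd, hmap⟩ := sh_sort3 hPu' hPv' hPw'
  have hall2 : ∀ y ∈ Ico (0:ℝ) (2*π), f y = 0 → y = a ∨ y = b ∨ y = d :=
    fun y hy hfy => hmap y (hall' y hy hfy)
  have ha0 : (0:ℝ) ≤ a := hPa.1.1
  have hd2π : d < a + 2*π := lt_of_lt_of_le hPd.1.2 (by linarith)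
  have hnz : ∀ x ∈ Ioo a (a + 2*π), f x = 0 → x = b ∨ x = d := by
    intro x hx hfx
    rcases lt_or_ge x (2*π) with h | h
    · rcases hall2 x ⟨le_trans ha0 hx.1.le, h⟩ hfx with h' | h' | h'
      · exact absurd h' (ne_of_gt hx.1)
      · exact Or.inl h'
      · exact Or.inr h'
    · have hfx2 : f (x - 2*π) = 0 := by
        have he : f x = f (x - 2*π) := by
          rw [← hfper (x - 2*π)]; ring_nf
        rw [← he]; exact hfx
    -- x - 2π is a zero in [0, 2π) strictly below a: impossible
      have hx2Ico : x - 2*π ∈ Ico (0:ℝ) (2*π) := ⟨by linarith, by linarith [hx.2, hPa.1.2]⟩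
      have hx2a : x - 2*π < a := by linarith [hx.2]
      rcases hall2 (x - 2*π) hx2Ico hfx2 with h' | h' | h'
      · linarith
      · linarith
      · linarith
  -- a point in the window where f is nonzero
  have hx₀a : x₀ ≠ a := fun he => hfx₀ (he ▸ hPa.2)
  have hwin : ∃ y ∈ Ioo a (a + 2*π), f y ≠ 0 := by
    rcases lt_or_gt_of_ne hx₀a with h | h
    · refine ⟨x₀ + 2*π, ⟨by linarith [hPa.1.2, hx₀Ico.1], by linarith⟩, ?_⟩
      rw [hfper x₀]; exact hfx₀
    · exact ⟨x₀, ⟨h, by linarith [hx₀Ico.2]⟩, hfx₀⟩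
  obtain ⟨y, hy, hfy⟩ := hwin
  exact sh_case hfcont hfper h0 hcos hsin hab hbd hd2π hPa.2 hPb.2 hPd.2 hnz hy hfy
end

section
/- (Four-Vertex Theorem for ovals.) Let p : ℝ → ℝ be a C^∞ function with p(θ + 2π) = p(θ) for all θ and p(θ) + p''(θ) > 0 for all θ. Then the function ρ'(θ) = p'(θ) + p'''(θ) has at least 4 distinct zeros in [0, 2π); that is, the curvature function of the oval with support function p has at least four critical points (vertices). -/
open Real

namespace FourVertexAux

open Set intervalIntegral

lemma pos_int (φ : ℝ → ℝ) (hφ : Continuous φ) (a b : ℝ) (hab : a < b)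
    (hnn : ∀ x ∈ Icc a b, 0 ≤ φ x) (x₀ : ℝ) (hx₀ : x₀ ∈ Ioo a b) (hpx : 0 < φ x₀) :
    0 < ∫ x in a..b, φ x := by
  obtain ⟨δ, hδ, hball⟩ := Metric.isOpen_iff.1 (isOpen_lt continuous_const hφ) x₀ hpx
  set c := max a (x₀ - δ/2) with hc
  set d := min b (x₀ + δ/2) with hd
  have hcx : c < x₀ := max_lt hx₀.1 (by linarith)
  have hxd : x₀ < d := lt_min hx₀.2 (by linarith)
  have hac : a ≤ c := le_max_left _ _
  have hdb : d ≤ b := min_le_left _ _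
  have hsub : ∀ x ∈ Ioo c d, 0 < φ x := by
    intro x hx
    apply hball
    rw [Metric.mem_ball, Real.dist_eq, abs_lt]
    have h1 : x₀ - δ/2 ≤ c := le_max_right _ _
    have h2 : d ≤ x₀ + δ/2 := min_le_right _ _
    constructor <;> [linarith [hx.1]; linarith [hx.2]]
  have i1 : 0 ≤ ∫ x in a..c, φ x :=
    integral_nonneg hac (fun u hu => hnn u ⟨hu.1, le_trans hu.2 (le_trans (le_of_lt (hcx.trans hxd)) hdb)⟩)
  have i2 : 0 < ∫ x in c..d, φ x :=
    intervalIntegral_pos_of_pos_on (hφ.intervalIntegrable _ _) hsub (hcx.trans hxd)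
  have i3 : 0 ≤ ∫ x in d..b, φ x :=
    integral_nonneg hdb (fun u hu => hnn u ⟨le_trans hac (le_trans (le_of_lt (hcx.trans hxd)) hu.1), hu.2⟩)
  have e1 : (∫ x in a..c, φ x) + (∫ x in c..d, φ x) = ∫ x in a..d, φ x :=
    integral_add_adjacent_intervals (hφ.intervalIntegrable _ _) (hφ.intervalIntegrable _ _)
  have e2 : (∫ x in a..d, φ x) + (∫ x in d..b, φ x) = ∫ x in a..b, φ x :=
    integral_add_adjacent_intervals (hφ.intervalIntegrable _ _) (hφ.intervalIntegrable _ _)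
  linarith

lemma sign_const (g : ℝ → ℝ) (hg : Continuous g) (u v : ℝ)
    (hz : ∀ θ ∈ Ioo u v, g θ ≠ 0) :
    (∀ θ ∈ Ioo u v, 0 < g θ) ∨ (∀ θ ∈ Ioo u v, g θ < 0) := by
  by_contra hcon
  push_neg at hcon
  obtain ⟨⟨x, hx, hx'⟩, ⟨y, hy, hy'⟩⟩ := hcon
  have hxneg : g x < 0 := lt_of_le_of_ne hx' (hz x hx)
  have hypos : 0 < g y := lt_of_le_of_ne hy' (Ne.symm (hz y hy))
  rcases le_total x y with h | h
  · obtain ⟨w, hw1, hw2⟩ := intermediate_value_Ioo h hg.continuousOn ⟨hxneg, hypos⟩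
    exact hz w ⟨lt_trans hx.1 hw1.1, lt_trans hw1.2 hy.2⟩ hw2
  · obtain ⟨w, hw1, hw2⟩ := intermediate_value_Ioo' h hg.continuousOn ⟨hxneg, hypos⟩
    exact hz w ⟨lt_trans hy.1 hw1.1, lt_trans hw1.2 hx.2⟩ hw2

lemma nonpos_Icc (g : ℝ → ℝ) (u v : ℝ) (hu : g u = 0) (hv : g v = 0)
    (h : ∀ θ ∈ Ioo u v, g θ < 0) : ∀ θ ∈ Icc u v, g θ ≤ 0 := by
  intro θ ⟨h1, h2⟩
  rcases eq_or_lt_of_le h1 with rfl | h1'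
  · exact le_of_eq hu
  rcases eq_or_lt_of_le h2 with rfl | h2'
  · exact le_of_eq hv
  exact le_of_lt (h θ ⟨h1', h2'⟩)

lemma nonneg_Icc (g : ℝ → ℝ) (u v : ℝ) (hu : g u = 0) (hv : g v = 0)
    (h : ∀ θ ∈ Ioo u v, 0 < g θ) : ∀ θ ∈ Icc u v, 0 ≤ g θ := by
  intro θ ⟨h1, h2⟩
  rcases eq_or_lt_of_le h1 with rfl | h1'
  · exact ge_of_eq hu
  rcases eq_or_lt_of_le h2 with rfl | h2'
  · exact ge_of_eq hv
  exact le_of_lt (h θ ⟨h1', h2'⟩)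

lemma glue {P : ℝ → Prop} (u v w : ℝ) (h1 : ∀ θ ∈ Icc u v, P θ) (h2 : ∀ θ ∈ Icc v w, P θ) :
    ∀ θ ∈ Icc u w, P θ := by
  intro θ ⟨ha, hb⟩
  rcases le_total θ v with h | h
  · exact h1 θ ⟨ha, h⟩
  · exact h2 θ ⟨h, hb⟩

lemma shift_nonneg (g : ℝ → ℝ) (hper : Function.Periodic g (2*π)) (u v : ℝ)
    (h : ∀ θ ∈ Icc u v, 0 ≤ g θ) :
    ∀ θ ∈ Icc (u + 2*π) (v + 2*π), 0 ≤ g θ := by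
  intro θ ⟨h1, h2⟩
  have e : g θ = g (θ - 2*π) := (hper.sub_eq θ).symm
  rw [e]; exact h (θ - 2*π) ⟨by linarith, by linarith⟩

lemma shift_nonpos (g : ℝ → ℝ) (hper : Function.Periodic g (2*π)) (u v : ℝ)
    (h : ∀ θ ∈ Icc u v, g θ ≤ 0) :
    ∀ θ ∈ Icc (u + 2*π) (v + 2*π), g θ ≤ 0 := by
  intro θ ⟨h1, h2⟩
  have e : g θ = g (θ - 2*π) := (hper.sub_eq θ).symm
  rw [e]; exact h (θ - 2*π) ⟨by linarith, by linarith⟩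

/-- The key integral-obstruction lemma. -/
lemma key (g : ℝ → ℝ) (hg : Continuous g) (α β : ℝ) (hαβ : α < β) (hβα : β < α + 2*π)
    (hint : ∀ a b c : ℝ, (∫ θ in α..(α + 2*π), g θ * (a + b * Real.cos θ + c * Real.sin θ)) = 0)
    (hneg : ∀ θ ∈ Icc α β, g θ ≤ 0) (hpos : ∀ θ ∈ Icc β (α + 2*π), 0 ≤ g θ)
    (θ₀ : ℝ) (hθ₀ : θ₀ ∈ Ioo α (α + 2*π)) (hgθ₀ : g θ₀ ≠ 0) : False := by
  set A := Real.cos ((β - α)/2) / 2 with hA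
  set B := -(Real.cos ((α + β)/2) / 2) with hB
  set C := -(Real.sin ((α + β)/2) / 2) with hC
  set h : ℝ → ℝ := fun θ => Real.sin ((θ - α)/2) * Real.sin ((θ - β)/2) with hh
  have hident : ∀ θ, A + B * Real.cos θ + C * Real.sin θ = h θ := by
    intro θ
    have h1 : Real.cos ((β - α)/2)
        = Real.cos ((θ - α)/2) * Real.cos ((θ - β)/2) + Real.sin ((θ - α)/2) * Real.sin ((θ - β)/2) := by
      rw [show (β - α)/2 = (θ - α)/2 - (θ - β)/2 by ring, Real.cos_sub]
    have h2 : Real.cos ((α + β)/2) * Real.cos θ + Real.sin ((α + β)/2) * Real.sin θ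
        = Real.cos ((θ - α)/2) * Real.cos ((θ - β)/2) - Real.sin ((θ - α)/2) * Real.sin ((θ - β)/2) := by
      have e1 : Real.cos (θ - (α + β)/2)
          = Real.cos θ * Real.cos ((α + β)/2) + Real.sin θ * Real.sin ((α + β)/2) := Real.cos_sub θ _
      have e2 : Real.cos ((θ - α)/2 + (θ - β)/2)
          = Real.cos ((θ - α)/2) * Real.cos ((θ - β)/2) - Real.sin ((θ - α)/2) * Real.sin ((θ - β)/2) :=
        Real.cos_add _ _
      rw [show θ - (α + β)/2 = (θ - α)/2 + (θ - β)/2 by ring] at e1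
      rw [e2] at e1
      linarith
    simp only [hh, hA, hB, hC]
    linarith
  have hπ : 0 < π := Real.pi_pos
  have hhneg : ∀ θ ∈ Icc α β, h θ ≤ 0 := by
    intro θ ⟨h1, h2⟩
    have s1 : 0 ≤ Real.sin ((θ - α)/2) :=
      Real.sin_nonneg_of_nonneg_of_le_pi (by linarith) (by linarith)
    have s2 : Real.sin ((θ - β)/2) ≤ 0 := by
      have := Real.sin_nonneg_of_nonneg_of_le_pi (x := -((θ - β)/2)) (by linarith) (by linarith)
      rw [Real.sin_neg] at this; linarith
    exact mul_nonpos_of_nonneg_of_nonpos s1 s2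
  have hhpos : ∀ θ ∈ Icc β (α + 2*π), 0 ≤ h θ := by
    intro θ ⟨h1, h2⟩
    have s1 : 0 ≤ Real.sin ((θ - α)/2) :=
      Real.sin_nonneg_of_nonneg_of_le_pi (by linarith) (by linarith)
    have s2 : 0 ≤ Real.sin ((θ - β)/2) :=
      Real.sin_nonneg_of_nonneg_of_le_pi (by linarith) (by linarith)
    exact mul_nonneg s1 s2
  set φ : ℝ → ℝ := fun θ => g θ * h θ with hφdef
  have hφcont : Continuous φ := by
    apply hg.mul
    exact ((Real.continuous_sin.comp (by continuity)).mul (Real.continuous_sin.comp (by continuity)))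
  have hφnn : ∀ θ ∈ Icc α (α + 2*π), 0 ≤ φ θ := by
    intro θ ⟨h1, h2⟩
    rcases le_total θ β with h3 | h3
    · exact mul_nonneg_of_nonpos_of_nonpos (hneg θ ⟨h1, h3⟩) (hhneg θ ⟨h1, h3⟩)
    · exact mul_nonneg (hpos θ ⟨h3, h2⟩) (hhpos θ ⟨h3, h2⟩)
  have hβ0 : g β = 0 :=
    le_antisymm (hneg β ⟨le_of_lt hαβ, le_refl β⟩) (hpos β ⟨le_refl β, le_of_lt hβα⟩)
  have hφθ₀ : 0 < φ θ₀ := by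
    obtain ⟨h1, h2⟩ := hθ₀
    rcases lt_trichotomy θ₀ β with h3 | h3 | h3
    · have hgneg : g θ₀ < 0 := lt_of_le_of_ne (hneg θ₀ ⟨le_of_lt h1, le_of_lt h3⟩) hgθ₀
      have s1 : 0 < Real.sin ((θ₀ - α)/2) :=
        Real.sin_pos_of_pos_of_lt_pi (by linarith) (by linarith)
      have s2 : Real.sin ((θ₀ - β)/2) < 0 := by
        have := Real.sin_pos_of_pos_of_lt_pi (x := -((θ₀ - β)/2)) (by linarith) (by linarith)
        rw [Real.sin_neg] at this; linarith
      exact mul_pos_of_neg_of_neg hgneg (mul_neg_of_pos_of_neg s1 s2)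
    · exact absurd (h3 ▸ hβ0) hgθ₀
    · have hgpos : 0 < g θ₀ := lt_of_le_of_ne (hpos θ₀ ⟨le_of_lt h3, le_of_lt h2⟩) (Ne.symm hgθ₀)
      have s1 : 0 < Real.sin ((θ₀ - α)/2) :=
        Real.sin_pos_of_pos_of_lt_pi (by linarith) (by linarith)
      have s2 : 0 < Real.sin ((θ₀ - β)/2) :=
        Real.sin_pos_of_pos_of_lt_pi (by linarith) (by linarith)
      exact mul_pos hgpos (mul_pos s1 s2)
  have hzero : (∫ θ in α..(α + 2*π), φ θ) = 0 := by
    have h' := hint A B C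
    have e : (fun θ => g θ * (A + B * Real.cos θ + C * Real.sin θ)) = φ :=
      funext fun θ => by rw [hident θ]
    rwa [e] at h'
  have := pos_int φ hφcont α (α + 2*π) (by linarith) hφnn θ₀ ⟨hθ₀.1, hθ₀.2⟩ hφθ₀
  rw [hzero] at this
  exact lt_irrefl 0 this

lemma exists_zero (g : ℝ → ℝ) (hg : Continuous g) (hper : Function.Periodic g (2*π))
    (h0 : ∀ s : ℝ, (∫ θ in s..(s + 2*π), g θ) = 0) :
    ∃ z, z ∈ Ico (0:ℝ) (2*π) ∧ g z = 0 := by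
  have h2π : (0:ℝ) < 2*π := Real.two_pi_pos
  have hπ : (0:ℝ) < π := Real.pi_pos
  by_contra hno
  push_neg at hno
  have hno' : ∀ θ ∈ Ico (0:ℝ) (2*π), g θ ≠ 0 := fun θ hθ => hno θ hθ
  have hI : (∫ θ in (0:ℝ)..(0 + 2*π), g θ) = 0 := h0 0
  have hsg := sign_const g hg 0 (2*π) (fun θ hθ => hno' θ ⟨le_of_lt hθ.1, hθ.2⟩)
  have h0ne : g 0 ≠ 0 := hno' 0 ⟨le_refl 0, h2π⟩
  have hgπ : π ∈ Ioo (0:ℝ) (2*π) := ⟨hπ, by linarith⟩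
  rcases hsg with hsg | hsg
  · have h0pos : 0 < g 0 := by
      rcases lt_or_gt_of_ne h0ne with h | h
      · exfalso
        obtain ⟨w, hw1, hw2⟩ := intermediate_value_Ioo (le_of_lt hπ) hg.continuousOn
          (show (0:ℝ) ∈ Ioo (g 0) (g π) from ⟨h, hsg π hgπ⟩)
        exact hno' w ⟨le_of_lt hw1.1, by linarith [hw1.2]⟩ hw2
      · exact h
    have hnn : ∀ x ∈ Icc (0:ℝ) (0 + 2*π), 0 ≤ g x := by
      intro x ⟨hx1, hx2⟩
      rcases eq_or_lt_of_le hx1 with rfl | hx1'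
      · exact le_of_lt h0pos
      rcases eq_or_lt_of_le hx2 with he | hx2'
      · have hgx : g x = g 0 := by rw [he]; simpa using hper 0
        rw [hgx]; exact le_of_lt h0pos
      · exact le_of_lt (hsg x ⟨hx1', by linarith⟩)
    have := pos_int g hg 0 (0 + 2*π) (by linarith) hnn π ⟨hπ, by linarith⟩ (hsg π hgπ)
    rw [hI] at this; exact lt_irrefl 0 this
  · have h0neg : g 0 < 0 := by
      rcases lt_or_gt_of_ne h0ne with h | h
      · exact h
      · exfalso
        obtain ⟨w, hw1, hw2⟩ := intermediate_value_Ioo' (le_of_lt hπ) hg.continuousOn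
          (show (0:ℝ) ∈ Ioo (g π) (g 0) from ⟨hsg π hgπ, h⟩)
        exact hno' w ⟨le_of_lt hw1.1, by linarith [hw1.2]⟩ hw2
    have hnn : ∀ x ∈ Icc (0:ℝ) (0 + 2*π), 0 ≤ -g x := by
      intro x ⟨hx1, hx2⟩
      rcases eq_or_lt_of_le hx1 with rfl | hx1'
      · linarith
      rcases eq_or_lt_of_le hx2 with he | hx2'
      · have hgx : g x = g 0 := by rw [he]; simpa using hper 0
        rw [hgx]; linarith
      · linarith [hsg x ⟨hx1', by linarith⟩]
    have hposneg := pos_int (fun x => -g x) hg.neg 0 (0 + 2*π) (by linarith) hnn π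
      ⟨hπ, by linarith⟩ (neg_pos.mpr (hsg π hgπ))
    rw [intervalIntegral.integral_neg, hI] at hposneg
    simp at hposneg

lemma both_signs (g : ℝ → ℝ) (hg : Continuous g)
    (h0 : ∀ s : ℝ, (∫ θ in s..(s + 2*π), g θ) = 0)
    (θs : ℝ) (hθs : g θs ≠ 0) : (∃ x, 0 < g x) ∧ (∃ x, g x < 0) := by
  have hπ : (0:ℝ) < π := Real.pi_pos
  constructor
  · by_contra hc
    push_neg at hc
    have hθneg : g θs < 0 := lt_of_le_of_ne (hc θs) hθs
    have hnn : ∀ x ∈ Icc (θs - π) (θs - π + 2*π), 0 ≤ -g x := fun x _ => neg_nonneg.2 (hc x)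
    have := pos_int (fun x => -g x) hg.neg (θs - π) (θs - π + 2*π) (by linarith) hnn θs
      ⟨by linarith, by linarith⟩ (neg_pos.mpr hθneg)
    rw [intervalIntegral.integral_neg, h0 (θs - π)] at this
    simp at this
  · by_contra hc
    push_neg at hc
    have hθpos : 0 < g θs := lt_of_le_of_ne (hc θs) (Ne.symm hθs)
    have hnn : ∀ x ∈ Icc (θs - π) (θs - π + 2*π), 0 ≤ g x := fun x _ => hc x
    have := pos_int g hg (θs - π) (θs - π + 2*π) (by linarith) hnn θs
      ⟨by linarith, by linarith⟩ hθpos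
    rw [h0 (θs - π)] at this
    exact lt_irrefl 0 this

lemma sort3 {Q : ℝ → Prop} (a b c : ℝ) (ha : Q a) (hb : Q b) (hc : Q c) :
    ∃ x y z : ℝ, Q x ∧ Q y ∧ Q z ∧ x ≤ y ∧ y ≤ z ∧
      ∀ t : ℝ, (t = a ∨ t = b ∨ t = c) → (t = x ∨ t = y ∨ t = z) := by
  rcases le_total a b with h1 | h1 <;> rcases le_total b c with h2 | h2 <;>
    rcases le_total a c with h3 | h3
  all_goals first
    | exact ⟨a, b, c, ha, hb, hc, by linarith, by linarith, fun t ht => by tauto⟩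
    | exact ⟨a, c, b, ha, hc, hb, by linarith, by linarith, fun t ht => by tauto⟩
    | exact ⟨b, a, c, hb, ha, hc, by linarith, by linarith, fun t ht => by tauto⟩
    | exact ⟨b, c, a, hb, hc, ha, by linarith, by linarith, fun t ht => by tauto⟩
    | exact ⟨c, a, b, hc, ha, hb, by linarith, by linarith, fun t ht => by tauto⟩
    | exact ⟨c, b, a, hc, hb, ha, by linarith, by linarith, fun t ht => by tauto⟩

end FourVertexAux

open FourVertexAux Set intervalIntegral in
open scoped ContDiff in
theorem stmt_8 (p : ℝ → ℝ) (hp : ContDiff ℝ (⊤ : ℕ∞) p)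
    (hper : ∀ θ : ℝ, p (θ + 2 * π) = p θ)
    (hpos : ∀ θ : ℝ, p θ + deriv (deriv p) θ > 0) :
    ∃ θ₁ θ₂ θ₃ θ₄ : ℝ,
      θ₁ ∈ Set.Ico (0:ℝ) (2 * π) ∧ θ₂ ∈ Set.Ico (0:ℝ) (2 * π) ∧
      θ₃ ∈ Set.Ico (0:ℝ) (2 * π) ∧ θ₄ ∈ Set.Ico (0:ℝ) (2 * π) ∧
      θ₁ ≠ θ₂ ∧ θ₁ ≠ θ₃ ∧ θ₁ ≠ θ₄ ∧ θ₂ ≠ θ₃ ∧ θ₂ ≠ θ₄ ∧ θ₃ ≠ θ₄ ∧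
      deriv p θ₁ + deriv (deriv (deriv p)) θ₁ = 0 ∧
      deriv p θ₂ + deriv (deriv (deriv p)) θ₂ = 0 ∧
      deriv p θ₃ + deriv (deriv (deriv p)) θ₃ = 0 ∧
      deriv p θ₄ + deriv (deriv (deriv p)) θ₄ = 0 := by
  have h2π : (0:ℝ) < 2*π := Real.two_pi_pos
  have hπ : (0:ℝ) < π := Real.pi_pos
  have hπ3 : (3:ℝ) < π := Real.pi_gt_three
  set q1 := deriv p with hq1def
  set q2 := deriv q1 with hq2def
  set q3 := deriv q2 with hq3def
  have hp0 : ContDiff ℝ ∞ p := hp.of_le (by simp)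
  have hp1 : ContDiff ℝ ∞ q1 := (contDiff_infty_iff_deriv.1 hp0).2
  have hp2 : ContDiff ℝ ∞ q2 := (contDiff_infty_iff_deriv.1 hp1).2
  have hp3 : ContDiff ℝ ∞ q3 := (contDiff_infty_iff_deriv.1 hp2).2
  have hd0 : ∀ θ, HasDerivAt p (q1 θ) θ := fun θ =>
    (hp0.differentiable (by simp) θ).hasDerivAt
  have hd1 : ∀ θ, HasDerivAt q1 (q2 θ) θ := fun θ =>
    (hp1.differentiable (by simp) θ).hasDerivAt
  have hd2 : ∀ θ, HasDerivAt q2 (q3 θ) θ := fun θ =>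
    (hp2.differentiable (by simp) θ).hasDerivAt
  have hperf : ∀ f : ℝ → ℝ, (∀ θ, f (θ + 2*π) = f θ) → ∀ θ, deriv f (θ + 2*π) = deriv f θ := by
    intro f hf θ
    have e : (fun x => f (x + 2*π)) = f := funext hf
    calc deriv f (θ + 2*π) = deriv (fun x => f (x + 2*π)) θ := (deriv_comp_add_const f (2*π) θ).symm
    _ = deriv f θ := by rw [e]
  have hper' : ∀ θ, p (θ + 2*π) = p θ := hper
  have hper1 : ∀ θ, q1 (θ + 2*π) = q1 θ := hperf p hper'
  have hper2 : ∀ θ, q2 (θ + 2*π) = q2 θ := hperf q1 hper1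
  have hper3 : ∀ θ, q3 (θ + 2*π) = q3 θ := hperf q2 hper2
  set g : ℝ → ℝ := fun θ => q1 θ + q3 θ with hgdef
  have hgcont : Continuous g := ((hp1.continuous).add (hp3.continuous))
  have hgper : Function.Periodic g (2*π) := fun θ => by simp only [hgdef, hper1, hper3]
  have hint : ∀ a b c s : ℝ,
      (∫ θ in s..(s + 2*π), g θ * (a + b * Real.cos θ + c * Real.sin θ)) = 0 := by
    intro a b c s
    set F : ℝ → ℝ := fun θ =>
      a * (p θ + q2 θ) + b * (q2 θ * Real.cos θ + q1 θ * Real.sin θ)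
        + c * (q2 θ * Real.sin θ - q1 θ * Real.cos θ) with hF
    have hFd : ∀ θ, HasDerivAt F (g θ * (a + b * Real.cos θ + c * Real.sin θ)) θ := by
      intro θ
      have h1 : HasDerivAt (fun θ => a * (p θ + q2 θ)) (a * (q1 θ + q3 θ)) θ :=
        (((hd0 θ).add (hd2 θ))).const_mul a
      have hcos : HasDerivAt Real.cos (-Real.sin θ) θ := Real.hasDerivAt_cos θ
      have hsin : HasDerivAt Real.sin (Real.cos θ) θ := Real.hasDerivAt_sin θ
      have h2 : HasDerivAt (fun θ => b * (q2 θ * Real.cos θ + q1 θ * Real.sin θ))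
          (b * ((q3 θ * Real.cos θ + q2 θ * (-Real.sin θ)) + (q2 θ * Real.sin θ + q1 θ * Real.cos θ))) θ :=
        (((hd2 θ).mul hcos).add ((hd1 θ).mul hsin)).const_mul b
      have h3 : HasDerivAt (fun θ => c * (q2 θ * Real.sin θ - q1 θ * Real.cos θ))
          (c * ((q3 θ * Real.sin θ + q2 θ * Real.cos θ) - (q2 θ * Real.cos θ + q1 θ * (-Real.sin θ)))) θ :=
        (((hd2 θ).mul hsin).sub ((hd1 θ).mul hcos)).const_mul c
      have hsum := (h1.add h2).add h3
      refine hsum.congr_deriv ?_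
      simp only [hgdef]
      ring
    have hcont : Continuous fun θ => g θ * (a + b * Real.cos θ + c * Real.sin θ) := by
      apply hgcont.mul
      continuity
    have hFtc := integral_eq_sub_of_hasDerivAt (f := F)
      (fun x _ => hFd x) (hcont.intervalIntegrable s (s + 2*π))
    rw [hFtc]
    simp only [hF]
    rw [hper' s, hper1 s, hper2 s, Real.cos_add_two_pi, Real.sin_add_two_pi]
    ring
  have hint0 : ∀ s : ℝ, (∫ θ in s..(s + 2*π), g θ) = 0 := by
    intro s
    have h' := hint 1 0 0 s
    simpa using h'
  by_contra hcon
  have hZ4 : ∀ t1 t2 t3 t4 : ℝ, t1 ∈ Set.Ico (0:ℝ) (2*π) → t2 ∈ Set.Ico (0:ℝ) (2*π) →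
      t3 ∈ Set.Ico (0:ℝ) (2*π) → t4 ∈ Set.Ico (0:ℝ) (2*π) →
      t1 ≠ t2 → t1 ≠ t3 → t1 ≠ t4 → t2 ≠ t3 → t2 ≠ t4 → t3 ≠ t4 →
      g t1 = 0 → g t2 = 0 → g t3 = 0 → g t4 = 0 → False := by
    intro t1 t2 t3 t4 m1 m2 m3 m4 d12 d13 d14 d23 d24 d34 e1 e2 e3 e4
    exact hcon ⟨t1, t2, t3, t4, m1, m2, m3, m4, d12, d13, d14, d23, d24, d34, e1, e2, e3, e4⟩
  by_cases hgz : ∀ θ, g θ = 0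
  · exact hZ4 0 1 2 3 ⟨le_refl 0, h2π⟩ ⟨by norm_num, by linarith⟩ ⟨by norm_num, by linarith⟩
      ⟨by norm_num, by linarith⟩ (by norm_num) (by norm_num) (by norm_num) (by norm_num)
      (by norm_num) (by norm_num) (hgz 0) (hgz 1) (hgz 2) (hgz 3)
  push_neg at hgz
  obtain ⟨θs, hθs⟩ := hgz
  obtain ⟨⟨θP, hθP⟩, ⟨θN, hθN⟩⟩ := both_signs g hgcont hint0 θs hθs
  obtain ⟨z, hzmem⟩ := exists_zero g hgcont hgper hint0
  have htrip : ∃ z1 z2 z3 : ℝ, (z1 ∈ Ico (0:ℝ) (2*π) ∧ g z1 = 0) ∧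
      (z2 ∈ Ico (0:ℝ) (2*π) ∧ g z2 = 0) ∧ (z3 ∈ Ico (0:ℝ) (2*π) ∧ g z3 = 0) ∧
      z1 ≤ z2 ∧ z2 ≤ z3 ∧
      ∀ θ, θ ∈ Ico (0:ℝ) (2*π) → g θ = 0 → (θ = z1 ∨ θ = z2 ∨ θ = z3) := by
    set Q : ℝ → Prop := fun t => t ∈ Ico (0:ℝ) (2*π) ∧ g t = 0 with hQ
    by_cases H1 : ∀ θ, Q θ → θ = z
    · exact ⟨z, z, z, hzmem, hzmem, hzmem, le_refl _, le_refl _,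
        fun θ h1 h2 => Or.inl (H1 θ ⟨h1, h2⟩)⟩
    push_neg at H1
    obtain ⟨z', hz', hzne⟩ := H1
    by_cases H2 : ∀ θ, Q θ → θ = z ∨ θ = z'
    · rcases le_total z z' with h | h
      · exact ⟨z, z', z', hzmem, hz', hz', h, le_refl _, fun θ h1 h2 => by
          rcases H2 θ ⟨h1, h2⟩ with h' | h'
          exacts [Or.inl h', Or.inr (Or.inl h')]⟩
      · exact ⟨z', z, z, hz', hzmem, hzmem, h, le_refl _, fun θ h1 h2 => by
          rcases H2 θ ⟨h1, h2⟩ with h' | h'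
          exacts [Or.inr (Or.inl h'), Or.inl h']⟩
    push_neg at H2
    obtain ⟨z'', hz'', hne2⟩ := H2
    by_cases H3 : ∀ θ, Q θ → θ = z ∨ θ = z' ∨ θ = z''
    · obtain ⟨x, y, w, hx, hy, hw, hxy, hyw, hperm⟩ := sort3 (Q := Q) z z' z'' hzmem hz' hz''
      exact ⟨x, y, w, hx, hy, hw, hxy, hyw, fun θ h1 h2 => hperm θ (H3 θ ⟨h1, h2⟩)⟩
    push_neg at H3
    obtain ⟨w, hw, hne3⟩ := H3
    exact (hZ4 z z' z'' w hzmem.1 hz'.1 hz''.1 hw.1 (Ne.symm hzne) (Ne.symm hne2.1)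
      (Ne.symm hne3.1) (Ne.symm hne2.2) (Ne.symm hne3.2.1) (Ne.symm hne3.2.2)
      hzmem.2 hz'.2 hz''.2 hw.2).elim
  obtain ⟨z1, z2, z3, ⟨hz1I, hz1⟩, ⟨hz2I, hz2⟩, ⟨hz3I, hz3⟩, h12, h23, honly⟩ := htrip
  obtain ⟨hz1a, hz1b⟩ := hz1I
  obtain ⟨hz2a, hz2b⟩ := hz2I
  obtain ⟨hz3a, hz3b⟩ := hz3I
  have hz1p : g (z1 + 2*π) = 0 := by rw [hgper z1]; exact hz1
  have hz2p : g (z2 + 2*π) = 0 := by rw [hgper z2]; exact hz2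
  have hrep : ∀ t : ℝ, ∃ t', t' ∈ Ico z1 (z1 + 2*π) ∧ g t' = g t := by
    intro t
    refine ⟨toIcoMod h2π z1 t, toIcoMod_mem_Ico h2π z1 t, ?_⟩
    rw [← self_sub_toIcoDiv_zsmul h2π z1 t]
    exact hgper.sub_zsmul_eq _
  obtain ⟨P, hPI, hPe⟩ := hrep θP
  have hP : 0 < g P := by rw [hPe]; exact hθP
  obtain ⟨N, hNI, hNe⟩ := hrep θN
  have hN : g N < 0 := by rw [hNe]; exact hθN
  have hPne : P ≠ z1 := fun h => by rw [h, hz1] at hP; exact lt_irrefl 0 hP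
  have hNne : N ≠ z1 := fun h => by rw [h, hz1] at hN; exact lt_irrefl 0 hN
  have hPIoo : P ∈ Ioo z1 (z1 + 2*π) := ⟨lt_of_le_of_ne hPI.1 (Ne.symm hPne), hPI.2⟩
  have hNIoo : N ∈ Ioo z1 (z1 + 2*π) := ⟨lt_of_le_of_ne hNI.1 (Ne.symm hNne), hNI.2⟩
  have locP : P ∈ Ioo z1 z2 ∨ P ∈ Ioo z2 z3 ∨ P ∈ Ioo z3 (z1 + 2*π) := by
    rcases lt_trichotomy P z2 with h | h | h
    · exact Or.inl ⟨hPIoo.1, h⟩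
    · exfalso; rw [h, hz2] at hP; exact lt_irrefl 0 hP
    · rcases lt_trichotomy P z3 with h' | h' | h'
      · exact Or.inr (Or.inl ⟨h, h'⟩)
      · exfalso; rw [h', hz3] at hP; exact lt_irrefl 0 hP
      · exact Or.inr (Or.inr ⟨h', hPIoo.2⟩)
  have locN : N ∈ Ioo z1 z2 ∨ N ∈ Ioo z2 z3 ∨ N ∈ Ioo z3 (z1 + 2*π) := by
    rcases lt_trichotomy N z2 with h | h | h
    · exact Or.inl ⟨hNIoo.1, h⟩
    · exfalso; rw [h, hz2] at hN; exact lt_irrefl 0 hN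
    · rcases lt_trichotomy N z3 with h' | h' | h'
      · exact Or.inr (Or.inl ⟨h, h'⟩)
      · exfalso; rw [h', hz3] at hN; exact lt_irrefl 0 hN
      · exact Or.inr (Or.inr ⟨h', hNIoo.2⟩)
  have harc1 : ∀ θ ∈ Ioo z1 z2, g θ ≠ 0 := by
    intro θ hθ h0
    rcases honly θ ⟨by linarith [hθ.1], by linarith [hθ.2]⟩ h0 with rfl | rfl | rfl <;>
      linarith [hθ.1, hθ.2]
  have harc2 : ∀ θ ∈ Ioo z2 z3, g θ ≠ 0 := by
    intro θ hθ h0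
    rcases honly θ ⟨by linarith [hθ.1], by linarith [hθ.2]⟩ h0 with rfl | rfl | rfl <;>
      linarith [hθ.1, hθ.2]
  have harc3 : ∀ θ ∈ Ioo z3 (z1 + 2*π), g θ ≠ 0 := by
    intro θ hθ h0
    rcases lt_or_ge θ (2*π) with h | h
    · rcases honly θ ⟨by linarith [hθ.1], h⟩ h0 with rfl | rfl | rfl <;> linarith [hθ.1, hθ.2]
    · have h0' : g (θ - 2*π) = 0 := by rw [hgper.sub_eq]; exact h0
      rcases honly (θ - 2*π) ⟨by linarith, by linarith [hθ.2]⟩ h0' with h' | h' | h' <;>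
        linarith [hθ.1, hθ.2]
  rcases sign_const g hgcont z1 z2 harc1 with s1 | s1 <;>
    rcases sign_const g hgcont z2 z3 harc2 with s2 | s2 <;>
      rcases sign_const g hgcont z3 (z1 + 2*π) harc3 with s3 | s3
  · -- (+,+,+)
    rcases locN with hL | hL | hL
    · exact absurd (s1 N hL) (lt_asymm hN)
    · exact absurd (s2 N hL) (lt_asymm hN)
    · exact absurd (s3 N hL) (lt_asymm hN)
  · -- (+,+,-) : α = z3, β = z1 + 2π
    have hlt13 : z1 < z3 := by
      rcases locP with hL | hL | hL
      · linarith [hL.1, hL.2]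
      · linarith [hL.1, hL.2]
      · exact absurd hP (lt_asymm (s3 P hL))
    have hNmem : N ∈ Ioo z3 (z3 + 2*π) := by
      rcases locN with hL | hL | hL
      · exact absurd (s1 N hL) (lt_asymm hN)
      · exact absurd (s2 N hL) (lt_asymm hN)
      · exact ⟨hL.1, by linarith [hL.2]⟩
    exact key g hgcont z3 (z1 + 2*π) (by linarith) (by linarith)
      (fun a b c => hint a b c z3)
      (nonpos_Icc g z3 (z1 + 2*π) hz3 hz1p s3)
      (glue (z1 + 2*π) (z2 + 2*π) (z3 + 2*π)
        (shift_nonneg g hgper z1 z2 (nonneg_Icc g z1 z2 hz1 hz2 s1))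
        (shift_nonneg g hgper z2 z3 (nonneg_Icc g z2 z3 hz2 hz3 s2)))
      N hNmem (ne_of_lt hN)
  · -- (+,-,+) : α = z2, β = z3
    have hNmem : N ∈ Ioo z2 z3 := by
      rcases locN with hL | hL | hL
      · exact absurd (s1 N hL) (lt_asymm hN)
      · exact hL
      · exact absurd (s3 N hL) (lt_asymm hN)
    exact key g hgcont z2 z3 (lt_trans hNmem.1 hNmem.2) (by linarith)
      (fun a b c => hint a b c z2)
      (nonpos_Icc g z2 z3 hz2 hz3 s2)
      (glue z3 (z1 + 2*π) (z2 + 2*π)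
        (nonneg_Icc g z3 (z1 + 2*π) hz3 hz1p s3)
        (shift_nonneg g hgper z1 z2 (nonneg_Icc g z1 z2 hz1 hz2 s1)))
      N ⟨hNmem.1, by linarith [hNmem.2]⟩ (ne_of_lt hN)
  · -- (+,-,-) : α = z2, β = z1 + 2π
    have hlt12 : z1 < z2 := by
      rcases locP with hL | hL | hL
      · linarith [hL.1, hL.2]
      · exact absurd hP (lt_asymm (s2 P hL))
      · exact absurd hP (lt_asymm (s3 P hL))
    have hNmem : N ∈ Ioo z2 (z2 + 2*π) := by
      rcases locN with hL | hL | hL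
      · exact absurd (s1 N hL) (lt_asymm hN)
      · exact ⟨hL.1, by linarith [hL.2]⟩
      · exact ⟨by linarith [hL.1], by linarith [hL.2]⟩
    exact key g hgcont z2 (z1 + 2*π) (by linarith) (by linarith)
      (fun a b c => hint a b c z2)
      (glue z2 z3 (z1 + 2*π)
        (nonpos_Icc g z2 z3 hz2 hz3 s2)
        (nonpos_Icc g z3 (z1 + 2*π) hz3 hz1p s3))
      (shift_nonneg g hgper z1 z2 (nonneg_Icc g z1 z2 hz1 hz2 s1))
      N hNmem (ne_of_lt hN)
  · -- (-,+,+) : α = z1, β = z2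
    have hNmem : N ∈ Ioo z1 z2 := by
      rcases locN with hL | hL | hL
      · exact hL
      · exact absurd (s2 N hL) (lt_asymm hN)
      · exact absurd (s3 N hL) (lt_asymm hN)
    exact key g hgcont z1 z2 (lt_trans hNmem.1 hNmem.2) (by linarith)
      (fun a b c => hint a b c z1)
      (nonpos_Icc g z1 z2 hz1 hz2 s1)
      (glue z2 z3 (z1 + 2*π)
        (nonneg_Icc g z2 z3 hz2 hz3 s2)
        (nonneg_Icc g z3 (z1 + 2*π) hz3 hz1p s3))
      N ⟨hNmem.1, by linarith [hNmem.2]⟩ (ne_of_lt hN)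
  · -- (-,+,-) : α = z3, β = z2 + 2π
    have hPmem : P ∈ Ioo z2 z3 := by
      rcases locP with hL | hL | hL
      · exact absurd hP (lt_asymm (s1 P hL))
      · exact hL
      · exact absurd hP (lt_asymm (s3 P hL))
    have hP2 : g (P + 2*π) ≠ 0 := by rw [hgper P]; exact ne_of_gt hP
    exact key g hgcont z3 (z2 + 2*π) (by linarith) (by linarith [hPmem.1, hPmem.2])
      (fun a b c => hint a b c z3)
      (glue z3 (z1 + 2*π) (z2 + 2*π)
        (nonpos_Icc g z3 (z1 + 2*π) hz3 hz1p s3)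
        (shift_nonpos g hgper z1 z2 (nonpos_Icc g z1 z2 hz1 hz2 s1)))
      (shift_nonneg g hgper z2 z3 (nonneg_Icc g z2 z3 hz2 hz3 s2))
      (P + 2*π) ⟨by linarith [hPmem.1], by linarith [hPmem.2]⟩ hP2
  · -- (-,-,+) : α = z1, β = z3
    have hNmem : N ∈ Ioo z1 z3 := by
      rcases locN with hL | hL | hL
      · exact ⟨hL.1, by linarith [hL.2]⟩
      · exact ⟨by linarith [hL.1], hL.2⟩
      · exact absurd (s3 N hL) (lt_asymm hN)
    exact key g hgcont z1 z3 (lt_trans hNmem.1 hNmem.2) (by linarith)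
      (fun a b c => hint a b c z1)
      (glue z1 z2 z3
        (nonpos_Icc g z1 z2 hz1 hz2 s1)
        (nonpos_Icc g z2 z3 hz2 hz3 s2))
      (nonneg_Icc g z3 (z1 + 2*π) hz3 hz1p s3)
      N ⟨hNmem.1, by linarith [hNmem.2]⟩ (ne_of_lt hN)
  · -- (-,-,-)
    rcases locP with hL | hL | hL
    · exact absurd hP (lt_asymm (s1 P hL))
    · exact absurd hP (lt_asymm (s2 P hL))
    · exact absurd hP (lt_asymm (s3 P hL))
end

section
/- Let p : ℝ → ℝ be a C^∞ function with p(θ + 2π) = p(θ) for all θ and p(θ) + p''(θ) > 0 for all θ, set L = ∫₀^{2π} p(θ) dθ, and assume in addition that p(θ) + p(θ + π) = L/π for all θ (i.e. the oval M has constant width). Then ∫₀^{2π} |p(θ) + p''(θ) − L/(2π)| dθ ≤ L; that is, for an oval of constant width, L_{SMS(M)} ≤ L_M. -/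
open Real

theorem stmt_10 (p : ℝ → ℝ) (hp : ContDiff ℝ (⊤ : ℕ∞) p)
    (hper : ∀ θ : ℝ, p (θ + 2 * π) = p θ)
    (hpos : ∀ θ : ℝ, p θ + deriv (deriv p) θ > 0)
    (L : ℝ) (hL : L = ∫ θ in (0:ℝ)..(2 * π), p θ)
    (hcw : ∀ θ : ℝ, p θ + p (θ + π) = L / π) :
    (∫ θ in (0:ℝ)..(2 * π), |p θ + deriv (deriv p) θ - L / (2 * π)|) ≤ L := by
  have hπ : (0:ℝ) < π := Real.pi_pos
  have hdp : Differentiable ℝ p := hp.differentiable (by simp)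
  have hp' : ContDiff ℝ (⊤:ℕ∞) p := hp.of_le (by simp)
  have hdp2 : ContDiff ℝ (⊤:ℕ∞) (deriv p) := (contDiff_infty_iff_deriv.mp hp').2
  have hddp : Differentiable ℝ (deriv p) := hdp2.differentiable (by simp)
  -- p (θ + π) = L/π - p θ
  have h1 : ∀ θ : ℝ, p (θ + π) = L / π - p θ := fun θ => by linarith [hcw θ]
  -- deriv p (θ + π) = - deriv p θ
  have h2 : ∀ θ : ℝ, deriv p (θ + π) = - deriv p θ := by
    intro θ
    have : deriv (fun x => p (x + π)) θ = deriv (fun x => L / π - p x) θ := by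
      congr 1; funext x; exact h1 x
    rwa [deriv_comp_add_const, deriv_const_sub] at this
  -- deriv (deriv p) (θ + π) = - deriv (deriv p) θ
  have h3 : ∀ θ : ℝ, deriv (deriv p) (θ + π) = - deriv (deriv p) θ := by
    intro θ
    have : deriv (fun x => deriv p (x + π)) θ = deriv (fun x => - deriv p x) θ := by
      congr 1; funext x; exact h2 x
    rwa [deriv_comp_add_const, deriv.fun_neg] at this
  -- pointwise bound
  have key : ∀ θ : ℝ, |p θ + deriv (deriv p) θ - L / (2 * π)| ≤ L / (2 * π) := by
    intro θ
    have ha := hpos θ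
    have hb := hpos (θ + π)
    have hsum : (p θ + deriv (deriv p) θ) + (p (θ + π) + deriv (deriv p) (θ + π)) = L / π := by
      rw [h3 θ]; have := hcw θ; linarith
    have h2L : L / π = 2 * (L / (2 * π)) := by field_simp
    rw [abs_le]
    constructor <;> nlinarith [hb, ha, hsum, h2L]
  -- integrate
  have hcont : Continuous fun θ => |p θ + deriv (deriv p) θ - L / (2 * π)| :=
    ((hdp.continuous.add (hdp2.continuous_deriv (by exact_mod_cast le_top))).sub continuous_const).abs
  have hint : IntervalIntegrable (fun θ => |p θ + deriv (deriv p) θ - L / (2 * π)|)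
      MeasureTheory.volume 0 (2 * π) := hcont.intervalIntegrable _ _
  have hmono : (∫ θ in (0:ℝ)..(2 * π), |p θ + deriv (deriv p) θ - L / (2 * π)|)
      ≤ ∫ _ in (0:ℝ)..(2 * π), L / (2 * π) := by
    apply intervalIntegral.integral_mono_on (by positivity) hint
      (intervalIntegrable_const)
    intro x _
    exact key x
  have hconst : (∫ _ in (0:ℝ)..(2 * π), L / (2 * π)) = L := by
    rw [intervalIntegral.integral_const, sub_zero, smul_eq_mul]
    field_simp
  linarith [hmono, hconst.symm ▸ hmono]
end

section
/- (Isoperimetric equality 1.) Let p : ℝ → ℝ be a C^∞ function with p(θ + 2π) = p(θ) for all θ and p(θ) + p''(θ) > 0 for all θ. Set L = ∫₀^{2π} p(θ) dθ, A = (1/2)∫₀^{2π}(p(θ)² − p'(θ)²) dθ, P(θ) = (p(θ) − p(θ+π))/2 and Q(θ) = p(θ) + p(θ+π) − L/π. Then ∫₀^{2π}(P(θ)² − P'(θ)²) dθ ≤ 0, ∫₀^{2π}(Q(θ)² − Q'(θ)²) dθ ≤ 0, and L² = 4πA − 2π ∫₀^{2π}(P(θ)² − P'(θ)²) dθ − (π/2)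 ∫₀^{2π}(Q(θ)² − Q'(θ)²) dθ. (Equivalently, L_M² = 4πA_M + 8π|Ã_{E_{1/2}}(M)| + π|Ã_{CWMS(M)}|.) -/
open Real MeasureTheory intervalIntegral Set

lemma my_shift_integral (h : ℝ → ℝ) (hc : Continuous h)
    (hper : ∀ x, h (x + 2 * π) = h x) :
    (∫ θ in (0:ℝ)..(2 * π), h (θ + π)) = ∫ θ in (0:ℝ)..(2 * π), h θ := by
  rw [intervalIntegral.integral_comp_add_right]
  have hper' : Function.Periodic h (2 * π) := hper
  have := hper'.intervalIntegral_add_eq π 0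
  simpa [add_comm] using this

lemma my_anti_integral (h : ℝ → ℝ) (hc : Continuous h)
    (hanti : ∀ x, h (x + π) = -h x) :
    (∫ θ in (0:ℝ)..(2 * π), h θ) = 0 := by
  have h1 : (∫ θ in (0:ℝ)..π, h θ) + ∫ θ in π..(2 * π), h θ = ∫ θ in (0:ℝ)..(2 * π), h θ :=
    intervalIntegral.integral_add_adjacent_intervals
      (hc.intervalIntegrable _ _) (hc.intervalIntegrable _ _)
  have h2 : (∫ θ in π..(2 * π), h θ) = ∫ θ in (0:ℝ)..π, h (θ + π) := by
    rw [intervalIntegral.integral_comp_add_right]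
    norm_num [two_mul]
  have h3 : (∫ θ in (0:ℝ)..π, h (θ + π)) = -∫ θ in (0:ℝ)..π, h θ := by
    rw [← intervalIntegral.integral_neg]
    exact intervalIntegral.integral_congr fun x _ => hanti x
  rw [h2, h3] at h1
  linarith

open AddCircle Complex
open scoped ENNReal

lemma my_parseval (u : ℝ → ℝ) (hc : Continuous u)
    (hper : ∀ x, u (x + 2 * π) = u x) :
    Summable (fun n : ℤ =>
      ‖fourierCoeffOn (by positivity : (0:ℝ) < 0 + 2 * π) (fun x => (u x : ℂ)) n‖ ^ 2) ∧
    (∑' n : ℤ,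
      ‖fourierCoeffOn (by positivity : (0:ℝ) < 0 + 2 * π) (fun x => (u x : ℂ)) n‖ ^ 2)
      = (1 / (2 * π)) * ∫ x in (0:ℝ)..(2 * π), u x ^ 2 := by
  haveI : Fact (0 < 2 * π) := ⟨by positivity⟩
  set g : ℝ → ℂ := fun x => (u x : ℂ) with hg
  have hgc : Continuous g := Complex.continuous_ofReal.comp hc
  have hg0 : g 0 = g (2 * π) := by simp [hg, ← hper 0]
  set U : C(AddCircle (2 * π), ℂ) :=
    ⟨liftIco (2 * π) 0 g, liftIco_zero_continuous hg0 hgc.continuousOn⟩ with hU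
  have hUc : ∀ n : ℤ, fourierCoeff (⇑U) n
      = fourierCoeffOn (by positivity : (0:ℝ) < 0 + 2 * π) g n := fun n =>
    fourierCoeff_liftIco_eq g n
  have P := tsum_sq_fourierCoeff (ContinuousMap.toLp 2 haarAddCircle ℂ U)
  have hco : ∀ n : ℤ, fourierCoeff (⇑(ContinuousMap.toLp 2 haarAddCircle ℂ U)) n
      = fourierCoeff (⇑U) n := fun n => fourierCoeff_toLp U n
  simp_rw [hco] at P
  have hR1 : (∫ t : AddCircle (2 * π), ‖(ContinuousMap.toLp 2 haarAddCircle ℂ U) t‖ ^ 2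
      ∂haarAddCircle) = ∫ t : AddCircle (2 * π), ‖U t‖ ^ 2 ∂haarAddCircle := by
    apply MeasureTheory.integral_congr_ae
    filter_upwards [ContinuousMap.coeFn_toLp (p := 2) haarAddCircle (𝕜 := ℂ) U] with t ht
    rw [ht]
  have hR2 : (∫ t : AddCircle (2 * π), ‖U t‖ ^ 2)
      = (2 * π) * ∫ t : AddCircle (2 * π), ‖U t‖ ^ 2 ∂haarAddCircle := by
    rw [volume_eq_smul_haarAddCircle, MeasureTheory.integral_smul_measure,
      ENNReal.toReal_ofReal (by positivity : (0:ℝ) ≤ 2 * π), smul_eq_mul]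
  have hR3 : (∫ t : AddCircle (2 * π), ‖U t‖ ^ 2)
      = ∫ x in (0:ℝ)..(2 * π), u x ^ 2 := by
    have h0 := AddCircle.intervalIntegral_preimage (2 * π) 0
      (fun t : AddCircle (2 * π) => ‖U t‖ ^ 2)
    rw [zero_add] at h0
    rw [← h0]
    rw [intervalIntegral.integral_of_le (by positivity),
      intervalIntegral.integral_of_le (by positivity)]
    rw [MeasureTheory.integral_Ioc_eq_integral_Ioo, MeasureTheory.integral_Ioc_eq_integral_Ioo]
    refine setIntegral_congr_fun measurableSet_Ioo fun x hx => ?_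
    have hx' : x ∈ Ico (0:ℝ) (0 + 2 * π) := by
      rw [zero_add]; exact Ioo_subset_Ico_self hx
    have : liftIco (2 * π) 0 g (x : AddCircle (2 * π)) = g x := liftIco_coe_apply hx'
    show ‖liftIco (2 * π) 0 g (x : AddCircle (2 * π))‖ ^ 2 = u x ^ 2
    simp only [this, hg]
    rw [liftIco_coe_apply hx']
    simp [sq_abs]
  have hS : Summable (fun n : ℤ => ‖fourierCoeff (⇑U) n‖ ^ 2) := by
    have hm := lp.memℓp (fourierBasis.repr (ContinuousMap.toLp 2 haarAddCircle ℂ U))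
    have h2 := hm.summable (by norm_num : 0 < (2 : ℝ≥0∞).toReal)
    refine h2.congr fun n => ?_
    have h3 : fourierBasis.repr (ContinuousMap.toLp 2 haarAddCircle ℂ U) n
        = fourierCoeff (⇑U) n := by rw [fourierBasis_repr]; exact hco n
    rw [h3, ENNReal.toReal_ofNat, ← Real.rpow_natCast]
    norm_num
  have key : (∑' n : ℤ, ‖fourierCoeff (⇑U) n‖ ^ 2)
      = (1 / (2 * π)) * ∫ x in (0:ℝ)..(2 * π), u x ^ 2 := by
    rw [P, hR1, ← hR3, hR2]
    have hπ : (2 * π : ℝ) ≠ 0 := by positivity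
    field_simp
  exact ⟨by simpa only [← hUc] using hS, by simpa only [← hUc] using key⟩

lemma my_wirtinger (f : ℝ → ℝ) (hf : ContDiff ℝ (⊤ : ℕ∞) f)
    (hper : ∀ x, f (x + 2 * π) = f x)
    (hmean : (∫ x in (0:ℝ)..(2 * π), f x) = 0) :
    (∫ x in (0:ℝ)..(2 * π), f x ^ 2) ≤ ∫ x in (0:ℝ)..(2 * π), (deriv f x) ^ 2 := by
  have hab : (0:ℝ) < 0 + 2 * π := by positivity
  have hcon : Continuous f := hf.continuous
  have hdiff : Differentiable ℝ f := hf.differentiable (by simp)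
  have hcon' : Continuous (deriv f) := hf.continuous_deriv (by simp)
  have hper' : ∀ x, deriv f (x + 2 * π) = deriv f x := by
    intro x
    have hfun : (fun y => f (y + 2 * π)) = f := funext hper
    conv_lhs => rw [← deriv_comp_add_const f (2 * π) x]
    rw [hfun]
  obtain ⟨S1, E1⟩ := my_parseval f hcon hper
  obtain ⟨S2, E2⟩ := my_parseval (deriv f) hcon' hper'
  set c : ℤ → ℂ := fun n => fourierCoeffOn hab (fun x => (f x : ℂ)) n with hcdef
  set c' : ℤ → ℂ := fun n => fourierCoeffOn hab (fun x => ((deriv f x : ℝ) : ℂ)) n with hc'def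
  have hc0 : c 0 = 0 := by
    rw [hcdef]
    simp only [fourierCoeffOn_eq_integral, neg_zero, fourier_zero, one_smul]
    rw [intervalIntegral.integral_ofReal]
    norm_num
    rw [hmean]
  have hrel : ∀ n : ℤ, n ≠ 0 → ‖c n‖ ≤ ‖c' n‖ := by
    intro n hn
    have hder : ∀ x : ℝ, x ∈ Set.uIcc (0:ℝ) (0 + 2 * π) →
        HasDerivAt (fun y : ℝ => (f y : ℂ)) (((deriv f x : ℝ)) : ℂ) x := fun x _ =>
      ((hdiff x).hasDerivAt).ofReal_comp
    have hint : IntervalIntegrable (fun x : ℝ => ((deriv f x : ℝ) : ℂ)) MeasureTheory.volume 0 (0 + 2*π) :=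
      (Complex.continuous_ofReal.comp hcon').intervalIntegrable _ _
    have key := fourierCoeffOn_of_hasDerivAt hab hn hder hint
    have hfb : ((f (0 + 2 * π) : ℂ) - (f 0 : ℂ)) = 0 := by rw [hper 0]; ring
    rw [hfb, mul_zero, zero_sub] at key
    -- key : c n = 1 / (-2πIn) * (-( (0+2π-0) * c' n))
    have hnz : ((-2) * (π:ℂ) * Complex.I * (n:ℂ)) ≠ 0 := by
      apply mul_ne_zero
      apply mul_ne_zero
      apply mul_ne_zero
      · norm_num
      · exact_mod_cast Complex.ofReal_ne_zero.mpr pi_ne_zero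
      · exact Complex.I_ne_zero
      · exact_mod_cast Int.cast_ne_zero.mpr hn
    have hmul : ((-2) * (π:ℂ) * Complex.I * (n:ℂ)) * fourierCoeffOn hab (fun x => ((f x : ℝ) : ℂ)) n
        = -(2 * (π:ℂ)) * fourierCoeffOn hab (fun x => ((deriv f x : ℝ) : ℂ)) n := by
      rw [key, ← mul_assoc, mul_one_div, div_self hnz, one_mul]
      push_cast
      ring
    have hnorm : ‖((-2) * (π:ℂ) * Complex.I * (n:ℂ))‖ * ‖c n‖
        = ‖(-(2 * (π:ℂ)))‖ * ‖c' n‖ := by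
      rw [← norm_mul, ← norm_mul]
      exact congrArg norm hmul
    have h1 : ‖((-2) * (π:ℂ) * Complex.I * (n:ℂ))‖ = 2 * π * |(n:ℝ)| := by
      simp [norm_mul, Complex.norm_I, Complex.norm_real, abs_of_pos pi_pos]
    have h2 : ‖(-(2 * (π:ℂ)))‖ = 2 * π := by
      simp [norm_mul, abs_of_pos pi_pos]
    rw [h1, h2] at hnorm
    have hn1 : (1:ℝ) ≤ |(n:ℝ)| := by
      rw [← Int.cast_abs]
      exact_mod_cast Int.one_le_abs hn
    have h3 : |(n:ℝ)| * ‖c n‖ = ‖c' n‖ := by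
      apply mul_left_cancel₀ (show (2 * π : ℝ) ≠ 0 by positivity)
      linear_combination hnorm
    calc ‖c n‖ = 1 * ‖c n‖ := (one_mul _).symm
      _ ≤ |(n:ℝ)| * ‖c n‖ := mul_le_mul_of_nonneg_right hn1 (norm_nonneg _)
      _ = ‖c' n‖ := h3
  have comp : ∀ n : ℤ, ‖c n‖ ^ 2 ≤ ‖c' n‖ ^ 2 := by
    intro n
    by_cases hn : n = 0
    · subst hn
      rw [hc0, norm_zero]
      simpa using sq_nonneg ‖c' 0‖
    · exact pow_le_pow_left₀ (norm_nonneg _) (hrel n hn) 2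
  have hts := Summable.tsum_le_tsum comp S1 S2
  rw [E1, E2] at hts
  have h2π : (0:ℝ) < 1 / (2 * π) := by positivity
  exact le_of_mul_le_mul_left (by simpa [mul_comm] using hts) h2π

theorem stmt_11 (p P Q : ℝ → ℝ) (hp : ContDiff ℝ (⊤ : ℕ∞) p)
    (hper : ∀ θ : ℝ, p (θ + 2 * π) = p θ)
    (hpos : ∀ θ : ℝ, p θ + deriv (deriv p) θ > 0)
    (L A : ℝ) (hL : L = ∫ θ in (0:ℝ)..(2 * π), p θ)
    (hA : A = (1 / 2) * ∫ θ in (0:ℝ)..(2 * π), (p θ ^ 2 - deriv p θ ^ 2))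
    (hP : ∀ θ : ℝ, P θ = (p θ - p (θ + π)) / 2)
    (hQ : ∀ θ : ℝ, Q θ = p θ + p (θ + π) - L / π) :
    (∫ θ in (0:ℝ)..(2 * π), (P θ ^ 2 - deriv P θ ^ 2)) ≤ 0 ∧
    (∫ θ in (0:ℝ)..(2 * π), (Q θ ^ 2 - deriv Q θ ^ 2)) ≤ 0 ∧
    L ^ 2 = 4 * π * A
      - 2 * π * (∫ θ in (0:ℝ)..(2 * π), (P θ ^ 2 - deriv P θ ^ 2))
      - (π / 2) * (∫ θ in (0:ℝ)..(2 * π), (Q θ ^ 2 - deriv Q θ ^ 2)) := by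
  have hπ : (0:ℝ) < π := pi_pos
  have hdiff : Differentiable ℝ p := hp.differentiable (by simp)
  have hcp : Continuous p := hp.continuous
  have hcp' : Continuous (deriv p) := hp.continuous_deriv (by simp)
  obtain rfl : P = fun θ => (p θ - p (θ + π)) / 2 := funext hP
  obtain rfl : Q = fun θ => p θ + p (θ + π) - L / π := funext hQ
  subst hA
  -- derivative of shifted function
  have hshift : ∀ x : ℝ, HasDerivAt (fun y => p (y + π)) (deriv p (x + π)) x := fun x =>
    HasDerivAt.comp_add_const x π ((hdiff (x + π)).hasDerivAt)
  have hdP : ∀ θ : ℝ, HasDerivAt (fun θ => (p θ - p (θ + π)) / 2)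
      ((deriv p θ - deriv p (θ + π)) / 2) θ := fun θ =>
    (((hdiff θ).hasDerivAt.sub (hshift θ)).div_const 2)
  have hdQ : ∀ θ : ℝ, HasDerivAt (fun θ => p θ + p (θ + π) - L / π)
      (deriv p θ + deriv p (θ + π)) θ := fun θ =>
    (((hdiff θ).hasDerivAt.add (hshift θ)).sub_const _)
  have hP' : deriv (fun θ => (p θ - p (θ + π)) / 2)
      = fun θ => (deriv p θ - deriv p (θ + π)) / 2 := funext fun θ => (hdP θ).deriv
  have hQ' : deriv (fun θ => p θ + p (θ + π) - L / π)
      = fun θ => deriv p θ + deriv p (θ + π) := funext fun θ => (hdQ θ).deriv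
  -- periodicity of deriv p
  have hperp' : ∀ x, deriv p (x + 2 * π) = deriv p x := by
    intro x
    have hfun : (fun y => p (y + 2 * π)) = p := funext hper
    conv_lhs => rw [← deriv_comp_add_const p (2 * π) x]
    rw [hfun]
  have hper2 : ∀ x, p (x + π + π) = p x := fun x => by
    rw [show x + π + π = x + 2 * π by ring, hper]
  have hperp2 : ∀ x, deriv p (x + π + π) = deriv p x := fun x => by
    rw [show x + π + π = x + 2 * π by ring, hperp']
  -- continuity facts
  have hcs : Continuous (fun θ => p (θ + π)) := hcp.comp (continuous_id.add continuous_const)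
  have hcs' : Continuous (fun θ => deriv p (θ + π)) :=
    hcp'.comp (continuous_id.add continuous_const)
  have cP : Continuous (fun θ => (p θ - p (θ + π)) / 2) := (hcp.sub hcs).div_const 2
  have cQ : Continuous (fun θ => p θ + p (θ + π) - L / π) := (hcp.add hcs).sub continuous_const
  have cdP : Continuous (fun θ => (deriv p θ - deriv p (θ + π)) / 2) :=
    (hcp'.sub hcs').div_const 2
  have cdQ : Continuous (fun θ => deriv p θ + deriv p (θ + π)) := hcp'.add hcs'
  -- smoothness
  have hPsm : ContDiff ℝ (⊤ : ℕ∞) (fun θ => (p θ - p (θ + π)) / 2) :=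
    (hp.sub (hp.comp (contDiff_id.add contDiff_const))).div_const 2
  have hQsm : ContDiff ℝ (⊤ : ℕ∞) (fun θ => p θ + p (θ + π) - L / π) :=
    (hp.add (hp.comp (contDiff_id.add contDiff_const))).sub contDiff_const
  -- zero means
  have hmP : (∫ θ in (0:ℝ)..(2 * π), (p θ - p (θ + π)) / 2) = 0 := by
    rw [intervalIntegral.integral_div,
      intervalIntegral.integral_sub (hcp.intervalIntegrable _ _) (hcs.intervalIntegrable _ _),
      my_shift_integral p hcp hper]
    simp
  have hmQ : (∫ θ in (0:ℝ)..(2 * π), (p θ + p (θ + π) - L / π)) = 0 := by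
    rw [intervalIntegral.integral_sub (f := fun θ => p θ + p (θ + π)) ((hcp.add hcs).intervalIntegrable _ _)
        (intervalIntegrable_const),
      intervalIntegral.integral_add (hcp.intervalIntegrable _ _) (hcs.intervalIntegrable _ _),
      my_shift_integral p hcp hper, intervalIntegral.integral_const, ← hL]
    field_simp
    linear_combination (-(2:ℝ) * L) * mul_inv_cancel₀ hπ.ne'
  -- periodicity of P and Q
  have hPper : ∀ θ : ℝ, (fun θ => (p θ - p (θ + π)) / 2) (θ + 2 * π)
      = (fun θ => (p θ - p (θ + π)) / 2) θ := fun θ => by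
    simp only
    rw [hper θ, show θ + 2 * π + π = (θ + π) + 2 * π by ring, hper (θ + π)]
  have hQper : ∀ θ : ℝ, (fun θ => p θ + p (θ + π) - L / π) (θ + 2 * π)
      = (fun θ => p θ + p (θ + π) - L / π) θ := fun θ => by
    simp only
    rw [hper θ, show θ + 2 * π + π = (θ + π) + 2 * π by ring, hper (θ + π)]
  have W1 := my_wirtinger _ hPsm hPper hmP
  have W2 := my_wirtinger _ hQsm hQper hmQ
  rw [hP'] at W1
  rw [hQ'] at W2
  -- first conjunct
  have G1 : (∫ θ in (0:ℝ)..(2 * π),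
      (((p θ - p (θ + π)) / 2) ^ 2 - ((deriv p θ - deriv p (θ + π)) / 2) ^ 2)) ≤ 0 := by
    rw [intervalIntegral.integral_sub (f := fun θ => ((p θ - p (θ + π)) / 2) ^ 2)
      (g := fun θ => ((deriv p θ - deriv p (θ + π)) / 2) ^ 2) ((cP.pow 2).intervalIntegrable _ _)
      ((cdP.pow 2).intervalIntegrable _ _)]
    exact sub_nonpos.mpr W1
  have G2 : (∫ θ in (0:ℝ)..(2 * π),
      ((p θ + p (θ + π) - L / π) ^ 2 - (deriv p θ + deriv p (θ + π)) ^ 2)) ≤ 0 := by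
    rw [intervalIntegral.integral_sub (f := fun θ => (p θ + p (θ + π) - L / π) ^ 2)
      (g := fun θ => (deriv p θ + deriv p (θ + π)) ^ 2) ((cQ.pow 2).intervalIntegrable _ _)
      ((cdQ.pow 2).intervalIntegrable _ _)]
    exact sub_nonpos.mpr W2
  -- main identity
  have point : ∀ θ : ℝ, p θ ^ 2 - deriv p θ ^ 2
      = (((p θ - p (θ + π)) / 2) ^ 2 - ((deriv p θ - deriv p (θ + π)) / 2) ^ 2)
      + ((1/4) * ((p θ + p (θ + π) - L / π) ^ 2 - (deriv p θ + deriv p (θ + π)) ^ 2)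
      + ((((p θ - p (θ + π)) / 2) * (p θ + p (θ + π) - L / π)
          - ((deriv p θ - deriv p (θ + π)) / 2) * (deriv p θ + deriv p (θ + π)))
      + ((L / π) * ((p θ - p (θ + π)) / 2)
      + ((L / (2 * π)) * (p θ + p (θ + π) - L / π)
      + L ^ 2 / (4 * π ^ 2))))) := by
    intro θ
    field_simp
    ring
  have Z1 : (∫ θ in (0:ℝ)..(2 * π),
      (((p θ - p (θ + π)) / 2) * (p θ + p (θ + π) - L / π)
        - ((deriv p θ - deriv p (θ + π)) / 2) * (deriv p θ + deriv p (θ + π)))) = 0 := by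
    apply my_anti_integral _ ((cP.mul cQ).sub (cdP.mul cdQ))
    intro x
    simp only [Pi.mul_apply, Pi.sub_apply]
    rw [hper2 x, hperp2 x]
    ring
  have Z2 : (∫ θ in (0:ℝ)..(2 * π), (L / π) * ((p θ - p (θ + π)) / 2)) = 0 := by
    rw [intervalIntegral.integral_const_mul, hmP, mul_zero]
  have Z3 : (∫ θ in (0:ℝ)..(2 * π), (L / (2 * π)) * (p θ + p (θ + π) - L / π)) = 0 := by
    rw [intervalIntegral.integral_const_mul, hmQ, mul_zero]
  have E1 : (∫ θ in (0:ℝ)..(2 * π), (p θ ^ 2 - deriv p θ ^ 2))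
      = (∫ θ in (0:ℝ)..(2 * π),
          (((p θ - p (θ + π)) / 2) ^ 2 - ((deriv p θ - deriv p (θ + π)) / 2) ^ 2))
      + ((1/4) * (∫ θ in (0:ℝ)..(2 * π),
          ((p θ + p (θ + π) - L / π) ^ 2 - (deriv p θ + deriv p (θ + π)) ^ 2))
      + (2 * π) * (L ^ 2 / (4 * π ^ 2))) := by
    have i1 : IntervalIntegrable (fun θ =>
        (((p θ - p (θ + π)) / 2) ^ 2 - ((deriv p θ - deriv p (θ + π)) / 2) ^ 2))
        volume 0 (2 * π) := ((cP.pow 2).sub (cdP.pow 2)).intervalIntegrable _ _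
    have i2 : IntervalIntegrable (fun θ =>
        (1/4) * ((p θ + p (θ + π) - L / π) ^ 2 - (deriv p θ + deriv p (θ + π)) ^ 2))
        volume 0 (2 * π) :=
      (continuous_const.mul ((cQ.pow 2).sub (cdQ.pow 2))).intervalIntegrable _ _
    have i3 : IntervalIntegrable (fun θ =>
        ((p θ - p (θ + π)) / 2) * (p θ + p (θ + π) - L / π)
          - ((deriv p θ - deriv p (θ + π)) / 2) * (deriv p θ + deriv p (θ + π)))
        volume 0 (2 * π) := ((cP.mul cQ).sub (cdP.mul cdQ)).intervalIntegrable _ _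
    have i4 : IntervalIntegrable (fun θ => (L / π) * ((p θ - p (θ + π)) / 2))
        volume 0 (2 * π) := (continuous_const.mul cP).intervalIntegrable _ _
    have i5 : IntervalIntegrable (fun θ => (L / (2 * π)) * (p θ + p (θ + π) - L / π))
        volume 0 (2 * π) := (continuous_const.mul cQ).intervalIntegrable _ _
    have i6 : IntervalIntegrable (fun _ : ℝ => L ^ 2 / (4 * π ^ 2)) volume 0 (2 * π) :=
      intervalIntegrable_const
    rw [intervalIntegral.integral_congr (fun θ _ => point θ)]
    rw [intervalIntegral.integral_add i1 (i2.add (i3.add (i4.add (i5.add i6)))),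
      intervalIntegral.integral_add i2 (i3.add (i4.add (i5.add i6))),
      intervalIntegral.integral_add i3 (i4.add (i5.add i6)),
      intervalIntegral.integral_add i4 (i5.add i6),
      intervalIntegral.integral_add i5 i6,
      Z1, Z2, Z3, intervalIntegral.integral_const_mul, intervalIntegral.integral_const]
    simp only [sub_zero, smul_eq_mul]
    ring
  refine ⟨?_, ?_, ?_⟩
  · simpa only [hP'] using G1
  · simpa only [hQ'] using G2
  · simp only [hP', hQ']
    rw [E1]
    field_simp
    ring
end

section
/- (Isoperimetric equality 2, convex case.) Let p : ℝ → ℝ be a C^∞ function with p(θ + 2π) = p(θ) for all θ and p(θ) + p''(θ) > 0 for all θ. Set L = ∫₀^{2π} p(θ) dθ, A = (1/2)∫₀^{2π}(p(θ)² − p'(θ)²) dθ and S = (1/2)∫₀^{2π}((p(θ) − L/(2π))² − p'(θ)²) dθ. Then S ≤ 0 and L² = 4πA − 4πS; that is, the oriented area of the Spherical Measure Set equals A_M − L_M²/(4π), and L_M² = 4πA_M + 4π|Ã_{SMS(M)}|. -/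
open Real
open Real MeasureTheory Filter intervalIntegral Complex Set
open scoped Interval ENNReal

lemma periodic_deriv'' {f : ℝ → ℝ} (c : ℝ) (hper : Function.Periodic f c) :
    Function.Periodic (deriv f) c := fun x => by
  rw [← deriv_comp_add_const f c x]
  congr 1
  funext y
  exact hper y


lemma parseval_cont {T : ℝ} [hT : Fact (0 < T)] (F : C(AddCircle T, ℂ)) :
    Summable (fun i : ℤ => ‖fourierCoeff (⇑F) i‖^2) ∧
    ∑' i : ℤ, ‖fourierCoeff (⇑F) i‖^2 = ∫ t, ‖F t‖^2 ∂AddCircle.haarAddCircle := by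
  have h1 := tsum_sq_fourierCoeff (ContinuousMap.toLp (E := ℂ) 2 AddCircle.haarAddCircle ℂ F)
  simp only [fourierCoeff_toLp] at h1
  constructor
  · have hu := lp.memℓp (fourierBasis.repr (ContinuousMap.toLp (E := ℂ) 2 AddCircle.haarAddCircle ℂ F))
    have hs := hu.summable (by norm_num)
    have he : ∀ i : ℤ, ‖fourierBasis.repr (ContinuousMap.toLp (E := ℂ) 2 AddCircle.haarAddCircle ℂ F) i‖ ^ (ENNReal.toReal 2)
        = ‖fourierCoeff (⇑F) i‖^2 := by
      intro i
      rw [fourierBasis_repr, fourierCoeff_toLp]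
      rw [show (ENNReal.toReal 2) = ((2:ℕ):ℝ) by norm_num, Real.rpow_natCast]
    exact (summable_congr he).mp hs
  · rw [h1]
    apply MeasureTheory.integral_congr_ae
    filter_upwards [ContinuousMap.coeFn_toLp (E := ℂ) (p := 2) (μ := AddCircle.haarAddCircle) (𝕜 := ℂ) F] with t ht
    rw [ht]

lemma haar_int {T : ℝ} [hT : Fact (0 < T)] (φ : AddCircle T → ℝ)
    (hφ : Continuous φ) :
    ∫ t, φ t ∂AddCircle.haarAddCircle = (1/T) * ∫ x in (0:ℝ)..T, φ (x : AddCircle T) := by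
  have h := AddCircle.intervalIntegral_preimage T 0 φ
  rw [zero_add] at h
  rw [AddCircle.volume_eq_smul_haarAddCircle, MeasureTheory.integral_smul_measure,
    ENNReal.toReal_ofReal hT.out.le] at h
  have hT0 : T ≠ 0 := hT.out.ne'
  rw [smul_eq_mul] at h
  rw [h]
  field_simp

lemma wirtinger (q : ℝ → ℝ) (hq : ContDiff ℝ (⊤:ℕ∞) q) (hper : Function.Periodic q (2*π))
    (hmean : (∫ θ in (0:ℝ)..(2*π), q θ) = 0) :
    (∫ θ in (0:ℝ)..(2*π), q θ ^ 2) ≤ ∫ θ in (0:ℝ)..(2*π), deriv q θ ^ 2 := by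
  have hπ : (0:ℝ) < 2*π := by positivity
  haveI hT : Fact ((0:ℝ) < 2*π) := ⟨hπ⟩
  have hq' : ContDiff ℝ (⊤:ℕ∞) (deriv q) := (contDiff_infty_iff_deriv.mp hq).2
  have hqc : Continuous q := hq.continuous
  have hq'c : Continuous (deriv q) := hq'.continuous
  have hper' : Function.Periodic (deriv q) (2*π) := periodic_deriv'' _ hper
  set f : ℝ → ℂ := fun x => (q x : ℂ) with hfdef
  set g : ℝ → ℂ := fun x => ((deriv q x : ℝ) : ℂ) with hgdef
  have hfper : Function.Periodic f (2*π) := fun x => by simp [hfdef, hper x]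
  have hgper : Function.Periodic g (2*π) := fun x => by simp [hgdef, hper' x]
  have hfc : Continuous f := Complex.continuous_ofReal.comp hqc
  have hgc : Continuous g := Complex.continuous_ofReal.comp hq'c
  have hderiv : ∀ x : ℝ, HasDerivAt f (g x) x := fun x =>
    (((contDiff_infty_iff_deriv.mp hq).1 x).hasDerivAt).ofReal_comp
  set F : C(AddCircle (2*π), ℂ) := ⟨hfper.lift, continuous_coinduced_dom.mpr hfc⟩ with hFdef
  set G : C(AddCircle (2*π), ℂ) := ⟨hgper.lift, continuous_coinduced_dom.mpr hgc⟩ with hGdef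
  have hF : ∀ x : ℝ, F (x : AddCircle (2*π)) = f x := fun x => hfper.lift_coe x
  have hG : ∀ x : ℝ, G (x : AddCircle (2*π)) = g x := fun x => hgper.lift_coe x
  -- Fourier coefficients as interval integrals
  have hcF : ∀ n : ℤ, fourierCoeff (⇑F) n
      = (1 / (2*π) : ℝ) • ∫ x in (0:ℝ)..(2*π), fourier (-n) (x : AddCircle (2*π)) • f x := by
    intro n
    rw [fourierCoeff_eq_intervalIntegral (⇑F) n 0, zero_add]
    simp only [hF]
  have hcG : ∀ n : ℤ, fourierCoeff (⇑G) n
      = (1 / (2*π) : ℝ) • ∫ x in (0:ℝ)..(2*π), fourier (-n) (x : AddCircle (2*π)) • g x := by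
    intro n
    rw [fourierCoeff_eq_intervalIntegral (⇑G) n 0, zero_add]
    simp only [hG]
  -- mean zero : coefficient 0 of F vanishes
  have hf0 : fourierCoeff (⇑F) 0 = 0 := by
    rw [hcF 0]
    simp only [neg_zero, fourier_zero, one_smul]
    rw [intervalIntegral.integral_ofReal, hmean]
    simp
  -- derivative relation
  have hrel : ∀ n : ℤ, fourierCoeff (⇑G) n = (Complex.I * n) * fourierCoeff (⇑F) n := by
    intro n
    rcases eq_or_ne n 0 with rfl | hn
    · rw [hcG 0]
      simp only [neg_zero, fourier_zero, one_smul, Int.cast_zero, mul_zero, zero_mul]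
      rw [intervalIntegral.integral_ofReal]
      have : (∫ x in (0:ℝ)..(2*π), deriv q x) = q (2*π) - q 0 :=
        intervalIntegral.integral_deriv_eq_sub (fun x _ => (contDiff_infty_iff_deriv.mp hq).1 x)
          (hq'c.intervalIntegrable 0 (2*π))
      rw [this]
      have : q (2*π) = q 0 := by simpa using hper 0
      rw [this]
      simp
    · -- integration by parts
      have key : (∫ x in (0:ℝ)..(2*π), f x * fourier (-n) (x : AddCircle (2*π)))
          = ((2*π : ℝ) : ℂ) / (2 * π * Complex.I * n)
            * ∫ x in (0:ℝ)..(2*π), g x * fourier (-n) (x : AddCircle (2*π)) := by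
        have hv : ∀ x ∈ [[ (0:ℝ), 2*π ]], HasDerivAt
            (fun y : ℝ => ((2*π : ℝ) : ℂ) / (-2 * π * Complex.I * n)
              * fourier (-n) (y : AddCircle (2*π))) (fourier (-n) (x : AddCircle (2*π))) x :=
          fun x _ => has_antideriv_at_fourier_neg hT hn x
        have hu : ∀ x ∈ [[ (0:ℝ), 2*π ]], HasDerivAt f (g x) x := fun x _ => hderiv x
        have hIBP := intervalIntegral.integral_mul_deriv_eq_deriv_mul hu hv
          (hgc.intervalIntegrable 0 (2*π))
          (((map_continuous (fourier (-n))).comp (AddCircle.continuous_mk' _)).intervalIntegrable 0 (2*π))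
        have hcoe : ((2*π : ℝ) : AddCircle (2*π)) = ((0:ℝ) : AddCircle (2*π)) := by
          simpa using AddCircle.coe_add_period (2*π) 0
        have hb : f (2*π) = f 0 := by simpa using hfper 0
        rw [hcoe, hb] at hIBP
        rw [hIBP]
        rw [sub_self, zero_sub]
        rw [← intervalIntegral.integral_const_mul]
        rw [← intervalIntegral.integral_neg]
        apply intervalIntegral.integral_congr
        intro x _
        have h2 : ((2*π:ℝ):ℂ) / (-2 * π * Complex.I * n) = -(((2*π:ℝ):ℂ) / (2 * π * Complex.I * n)) := by
          rw [← div_neg]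
          ring_nf
        rw [h2]
        ring
      rw [hcF n, hcG n]
      have hsm : ∀ h : ℝ → ℂ, (∫ x in (0:ℝ)..(2*π), fourier (-n) (x : AddCircle (2*π)) • h x)
          = ∫ x in (0:ℝ)..(2*π), h x * fourier (-n) (x : AddCircle (2*π)) := by
        intro h
        apply intervalIntegral.integral_congr
        intro x _
        exact mul_comm _ _
      rw [hsm f, hsm g, key]
      rw [real_smul, real_smul]
      generalize (∫ x in (0:ℝ)..(2*π), g x * fourier (-n) (x : AddCircle (2*π))) = Z
      have hne : (2 * π * Complex.I * (n:ℂ)) ≠ 0 := by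
        apply mul_ne_zero
        apply mul_ne_zero
        · simp [Real.pi_ne_zero]
        · exact Complex.I_ne_zero
        · exact_mod_cast hn
      have hπc : (π:ℂ) ≠ 0 := by exact_mod_cast Real.pi_ne_zero
      have hnc : (n:ℂ) ≠ 0 := by exact_mod_cast hn
      have hIc : Complex.I ≠ 0 := Complex.I_ne_zero
      field_simp
      push_cast
      ring
  obtain ⟨hsumF, hparF⟩ := parseval_cont F
  obtain ⟨hsumG, hparG⟩ := parseval_cont G
  have hterm : ∀ i : ℤ, ‖fourierCoeff (⇑F) i‖^2 ≤ ‖fourierCoeff (⇑G) i‖^2 := by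
    intro i
    rcases eq_or_ne i 0 with rfl | hi
    · simp [hf0]
    · have h2 : ‖fourierCoeff (⇑G) i‖ = ‖(i:ℂ)‖ * ‖fourierCoeff (⇑F) i‖ := by
        rw [hrel i, norm_mul, norm_mul, Complex.norm_I, one_mul]
      have h1 : (1:ℝ) ≤ ‖(i:ℂ)‖ := by
        rw [Complex.norm_intCast]
        exact_mod_cast Int.one_le_abs (by exact_mod_cast hi)
      have h4 : (1:ℝ) ≤ ‖(i:ℂ)‖^2 := by nlinarith
      calc ‖fourierCoeff (⇑F) i‖^2 = 1 * ‖fourierCoeff (⇑F) i‖^2 := by ring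
        _ ≤ ‖(i:ℂ)‖^2 * ‖fourierCoeff (⇑F) i‖^2 :=
            mul_le_mul_of_nonneg_right h4 (sq_nonneg _)
        _ = ‖fourierCoeff (⇑G) i‖^2 := by rw [h2, mul_pow]
  have hts : ∑' i : ℤ, ‖fourierCoeff (⇑F) i‖^2 ≤ ∑' i : ℤ, ‖fourierCoeff (⇑G) i‖^2 :=
    Summable.tsum_le_tsum hterm hsumF hsumG
  rw [hparF, hparG] at hts
  have hFi : ∫ t, ‖F t‖^2 ∂AddCircle.haarAddCircle = (1/(2*π)) * ∫ x in (0:ℝ)..(2*π), q x ^ 2 := by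
    rw [haar_int (fun t => ‖F t‖^2) (F.continuous.norm.pow 2)]
    congr 1
    apply intervalIntegral.integral_congr
    intro x _
    simp only [hF x, hfdef]
    rw [Complex.norm_real]
    exact sq_abs (q x)
  have hGi : ∫ t, ‖G t‖^2 ∂AddCircle.haarAddCircle = (1/(2*π)) * ∫ x in (0:ℝ)..(2*π), deriv q x ^ 2 := by
    rw [haar_int (fun t => ‖G t‖^2) (G.continuous.norm.pow 2)]
    congr 1
    apply intervalIntegral.integral_congr
    intro x _
    simp only [hG x, hgdef]
    rw [Complex.norm_real]
    exact sq_abs (deriv q x)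
  rw [hFi, hGi] at hts
  have h2π : (0:ℝ) < 1/(2*π) := by positivity
  calc (∫ θ in (0:ℝ)..(2*π), q θ ^ 2)
      = (2*π) * ((1/(2*π)) * ∫ x in (0:ℝ)..(2*π), q x ^ 2) := by field_simp
    _ ≤ (2*π) * ((1/(2*π)) * ∫ x in (0:ℝ)..(2*π), deriv q x ^ 2) := by
        apply mul_le_mul_of_nonneg_left hts (by positivity)
    _ = ∫ θ in (0:ℝ)..(2*π), deriv q θ ^ 2 := by field_simp


theorem stmt_12 (p : ℝ → ℝ) (hp : ContDiff ℝ (⊤ : ℕ∞) p)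
    (hper : ∀ θ : ℝ, p (θ + 2 * π) = p θ)
    (hpos : ∀ θ : ℝ, p θ + deriv (deriv p) θ > 0)
    (L A S : ℝ) (hL : L = ∫ θ in (0:ℝ)..(2 * π), p θ)
    (hA : A = (1 / 2) * ∫ θ in (0:ℝ)..(2 * π), (p θ ^ 2 - deriv p θ ^ 2))
    (hS : S = (1 / 2) * ∫ θ in (0:ℝ)..(2 * π), ((p θ - L / (2 * π)) ^ 2 - deriv p θ ^ 2)) :
    S ≤ 0 ∧ L ^ 2 = 4 * π * A - 4 * π * S := by
  have hπ : (0:ℝ) < π := Real.pi_pos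
  have hp' : ContDiff ℝ (⊤:ℕ∞) p := hp.of_le (by simp)
  set c : ℝ := L / (2 * π) with hc
  have hpc : Continuous p := hp'.continuous
  have hp'c : Continuous (deriv p) := hp'.continuous_deriv (by exact_mod_cast le_top)
  have hintp : IntervalIntegrable p volume 0 (2*π) := hpc.intervalIntegrable _ _
  -- mean-zero shifted function
  have hqcd : ContDiff ℝ (⊤:ℕ∞) (fun θ => p θ - c) := hp'.sub contDiff_const
  have hqper : Function.Periodic (fun θ => p θ - c) (2*π) := fun x => by simp [hper x]
  have hderiv_eq : ∀ x : ℝ, deriv (fun θ => p θ - c) x = deriv p x := fun x => by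
    simp [deriv_sub_const]
  have hconst : (∫ θ in (0:ℝ)..(2*π), c) = 2 * π * c := by
    rw [intervalIntegral.integral_const, smul_eq_mul, sub_zero]
  have hmean : (∫ θ in (0:ℝ)..(2*π), (p θ - c)) = 0 := by
    rw [intervalIntegral.integral_sub hintp (intervalIntegrable_const), hconst, ← hL, hc]
    field_simp
    ring
  have hW := wirtinger (fun θ => p θ - c) hqcd hqper hmean
  have hWr : (∫ θ in (0:ℝ)..(2*π), (p θ - c) ^ 2) ≤ ∫ θ in (0:ℝ)..(2*π), deriv p θ ^ 2 := by
    refine hW.trans_eq ?_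
    apply intervalIntegral.integral_congr
    intro x _
    simp only []
    rw [hderiv_eq x]
  -- integrability of pieces
  have hi1 : IntervalIntegrable (fun θ => (p θ - c)^2) volume 0 (2*π) :=
    ((hpc.sub continuous_const).pow 2).intervalIntegrable _ _
  have hi2 : IntervalIntegrable (fun θ => deriv p θ ^ 2) volume 0 (2*π) :=
    (hp'c.pow 2).intervalIntegrable _ _
  have hi3 : IntervalIntegrable (fun θ => p θ ^ 2 - deriv p θ ^ 2) volume 0 (2*π) :=
    ((hpc.pow 2).sub (hp'c.pow 2)).intervalIntegrable _ _
  have hi4 : IntervalIntegrable (fun θ => (-2*c) * p θ + c^2) volume 0 (2*π) :=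
    ((hintp.const_mul _).add intervalIntegrable_const)
  have hsplit : (∫ θ in (0:ℝ)..(2*π), ((p θ - c) ^ 2 - deriv p θ ^ 2))
      = (∫ θ in (0:ℝ)..(2*π), ((p θ - c) ^ 2)) - ∫ θ in (0:ℝ)..(2*π), deriv p θ ^ 2 :=
    intervalIntegral.integral_sub hi1 hi2
  have hS' : S = (1/2) * ((∫ θ in (0:ℝ)..(2*π), ((p θ - c) ^ 2)) - ∫ θ in (0:ℝ)..(2*π), deriv p θ ^ 2) := by
    rw [hS, ← hsplit]
  constructor
  · rw [hS']
    nlinarith [hWr]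
  · -- algebraic identity
    have hkey : (∫ θ in (0:ℝ)..(2*π), ((p θ - c) ^ 2 - deriv p θ ^ 2))
        = (∫ θ in (0:ℝ)..(2*π), (p θ ^ 2 - deriv p θ ^ 2))
          + (∫ θ in (0:ℝ)..(2*π), ((-2*c) * p θ + c^2)) := by
      rw [← intervalIntegral.integral_add hi3 hi4]
      apply intervalIntegral.integral_congr
      intro x _
      ring
    have h2 : (∫ θ in (0:ℝ)..(2*π), ((-2*c) * p θ + c^2))
        = (-2*c) * L + 2 * π * c^2 := by
      rw [intervalIntegral.integral_add (hintp.const_mul _) intervalIntegrable_const,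
        intervalIntegral.integral_const_mul, ← hL, intervalIntegral.integral_const,
        smul_eq_mul, sub_zero]
    have hSval : S = A + (1/2) * ((-2*c) * L + 2 * π * c^2) := by
      rw [hS, hkey, h2, hA]
      ring
    rw [hSval, hc]
    field_simp
    ring
end

section
/- (Isoperimetric equality 2, general closed curves.) Let L > 0 and let γ : ℝ → ℝ² be a C^∞ L-periodic curve with ‖γ'(s)‖ = 1 for all s. Let J(x, y) = (−y, x) be the rotation by π/2, let κ : ℝ → ℝ satisfy γ''(s) = κ(s)·J(γ'(s)), and assume ∫₀^L κ(s) ds = 2π (rotation index one). Define δ(s) = γ(s) + (L/(2π))·J(γ'(s)). Then (1/2)∫₀^L det(δ(s), δ'(s)) ds = (1/2)∫₀^L det(γ(s), γ'(s)) ds − L²/(4π); that is, the oriented area of the Spherical Measure Set SMS(M) equals A_M − L_M²/(4π), so L_M² = 4πA_M + 4π|Ã_{SMS(M)}| when M is a simple closed curve. -/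
open Real intervalIntegral

private lemma hasDerivAt_fst' {f : ℝ → ℝ × ℝ} {d : ℝ × ℝ} {x : ℝ} (h : HasDerivAt f d x) :
    HasDerivAt (fun t => (f t).1) d.1 x := by
  simpa using (h.hasFDerivAt.fst).hasDerivAt

private lemma hasDerivAt_snd' {f : ℝ → ℝ × ℝ} {d : ℝ × ℝ} {x : ℝ} (h : HasDerivAt f d x) :
    HasDerivAt (fun t => (f t).2) d.2 x := by
  simpa using (h.hasFDerivAt.snd).hasDerivAt

theorem stmt_13 (L : ℝ) (hL : 0 < L) (γ : ℝ → ℝ × ℝ) (hγ : ContDiff ℝ (⊤ : ℕ∞) γ)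
    (hper : ∀ s : ℝ, γ (s + L) = γ s)
    (hunit : ∀ s : ℝ, Real.sqrt ((deriv γ s).1 ^ 2 + (deriv γ s).2 ^ 2) = 1)
    (κ : ℝ → ℝ)
    (hκ : ∀ s : ℝ, deriv (deriv γ) s = κ s • (-(deriv γ s).2, (deriv γ s).1))
    (hrot : (∫ s in (0:ℝ)..L, κ s) = 2 * π)
    (δ : ℝ → ℝ × ℝ)
    (hδ : ∀ s : ℝ, δ s = γ s + (L / (2 * π)) • (-(deriv γ s).2, (deriv γ s).1)) :
    (1 / 2) * (∫ s in (0:ℝ)..L, ((δ s).1 * (deriv δ s).2 - (δ s).2 * (deriv δ s).1))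
      = (1 / 2) * (∫ s in (0:ℝ)..L, ((γ s).1 * (deriv γ s).2 - (γ s).2 * (deriv γ s).1))
        - L ^ 2 / (4 * π) := by
  have hπ : (π:ℝ) ≠ 0 := Real.pi_ne_zero
  set r : ℝ := L / (2 * π) with hr
  have hdγ : Differentiable ℝ γ := hγ.differentiable (by simp)
  have hγi := contDiff_infty_iff_deriv.mp (hγ.of_le (by simp))
  have hγ'cd := hγi.2
  have hdγ' : Differentiable ℝ (deriv γ) := hγ'cd.differentiable (by simp)
  have hγ''c : Continuous (deriv (deriv γ)) := (contDiff_infty_iff_deriv.mp hγ'cd).2.continuous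
  have hγ'c : Continuous (deriv γ) := hγ'cd.continuous
  have hγc : Continuous γ := hγ.continuous
  have hsq : ∀ s, (deriv γ s).1 ^ 2 + (deriv γ s).2 ^ 2 = 1 := by
    intro s
    have h := hunit s
    have h0 : (0:ℝ) ≤ (deriv γ s).1 ^ 2 + (deriv γ s).2 ^ 2 := by positivity
    nlinarith [Real.sq_sqrt h0]
  -- κ is continuous
  have hκeq : κ = fun s => (deriv (deriv γ) s).2 * (deriv γ s).1
      - (deriv (deriv γ) s).1 * (deriv γ s).2 := by
    funext s
    rw [hκ s]
    simp only [Prod.smul_mk, smul_eq_mul]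
    linear_combination (-κ s) * hsq s
  have hκc : Continuous κ := by
    rw [hκeq]
    fun_prop
  -- derivative of δ
  have hδderiv : ∀ s, deriv δ s = (1 - r * κ s) • deriv γ s := by
    intro s
    have h1 : HasDerivAt γ (deriv γ s) s := (hdγ s).hasDerivAt
    have h2 : HasDerivAt (deriv γ) (deriv (deriv γ) s) s := (hdγ' s).hasDerivAt
    have hδ' : HasDerivAt δ
        (deriv γ s + r • (-(deriv (deriv γ) s).2, (deriv (deriv γ) s).1)) s := by
      have heq : δ = fun t => γ t + r • (-(deriv γ t).2, (deriv γ t).1) := funext hδ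
      rw [heq]
      exact h1.add (((hasDerivAt_snd' h2).neg.prodMk (hasDerivAt_fst' h2)).const_smul r)
    rw [hδ'.deriv, hκ s]
    apply Prod.ext <;>
      simp only [Prod.smul_mk, smul_eq_mul, Prod.fst_add, Prod.snd_add, Prod.smul_fst,
        Prod.smul_snd] <;> ring
  -- notation for the determinant integrand of γ
  set D : ℝ → ℝ := fun s => (γ s).1 * (deriv γ s).2 - (γ s).2 * (deriv γ s).1 with hD
  have hDc : Continuous D := by rw [hD]; fun_prop
  have hκDc : Continuous (fun s => κ s * D s) := hκc.mul hDc
  -- pointwise identity for the δ-integrand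
  have hpt : ∀ s, (δ s).1 * (deriv δ s).2 - (δ s).2 * (deriv δ s).1
      = D s + (r ^ 2 * κ s - r * (κ s * D s) - r) := by
    intro s
    rw [hδ s, hδderiv s]
    simp only [hD, Prod.fst_add, Prod.snd_add, Prod.smul_mk, smul_eq_mul,
      Prod.smul_fst, Prod.smul_snd]
    linear_combination (r ^ 2 * κ s - r) * hsq s
  -- FTC ingredient: ∫ κ D = L
  set g : ℝ → ℝ := fun s => (γ s).1 * (deriv γ s).1 + (γ s).2 * (deriv γ s).2 with hgdef
  have hg : ∀ s, HasDerivAt g (1 - κ s * D s) s := by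
    intro s
    have h1 : HasDerivAt γ (deriv γ s) s := (hdγ s).hasDerivAt
    have h2 : HasDerivAt (deriv γ) (deriv (deriv γ) s) s := (hdγ' s).hasDerivAt
    have h := (((hasDerivAt_fst' h1).mul (hasDerivAt_fst' h2)).add
      ((hasDerivAt_snd' h1).mul (hasDerivAt_snd' h2)))
    have hval : (deriv γ s).1 * (deriv γ s).1 + (γ s).1 * (deriv (deriv γ) s).1
        + ((deriv γ s).2 * (deriv γ s).2 + (γ s).2 * (deriv (deriv γ) s).2)
        = 1 - κ s * D s := by
      rw [hκ s]
      simp only [hD, Prod.smul_mk, smul_eq_mul]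
      linear_combination hsq s
    rw [← hval]
    exact h
  have hper' : ∀ s, deriv γ (s + L) = deriv γ s := by
    intro s
    conv_rhs => rw [show γ = fun t => γ (t + L) from funext fun t => (hper t).symm]
    rw [deriv_comp_add_const]
  have hgL : g L = g 0 := by
    simp only [hgdef]
    rw [show (L:ℝ) = 0 + L by ring, hper 0, hper' 0]
  have hFTC : (∫ s in (0:ℝ)..L, (1 - κ s * D s)) = 0 := by
    rw [integral_eq_sub_of_hasDerivAt (fun s _ => hg s)
      ((continuous_const.sub hκDc).intervalIntegrable 0 L), hgL, sub_self]
  have hκD : (∫ s in (0:ℝ)..L, κ s * D s) = L := by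
    have h := hFTC
    rw [integral_sub (intervalIntegrable_const) (hκDc.intervalIntegrable 0 L),
      integral_const] at h
    simp at h
    linarith
  -- put everything together
  have hrestc : Continuous (fun s => r ^ 2 * κ s - r * (κ s * D s) - r) := by fun_prop
  have hsplit : (∫ s in (0:ℝ)..L, ((δ s).1 * (deriv δ s).2 - (δ s).2 * (deriv δ s).1))
      = (∫ s in (0:ℝ)..L, D s) + ∫ s in (0:ℝ)..L, (r ^ 2 * κ s - r * (κ s * D s) - r) := by
    rw [← integral_add (hDc.intervalIntegrable 0 L) (hrestc.intervalIntegrable 0 L)]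
    exact integral_congr fun s _ => hpt s
  have hrest : (∫ s in (0:ℝ)..L, (r ^ 2 * κ s - r * (κ s * D s) - r))
      = r ^ 2 * (2 * π) - r * L - r * L := by
    rw [integral_sub (f := fun s => r ^ 2 * κ s - r * (κ s * D s)) (((continuous_const.mul hκc).sub (continuous_const.mul hκDc)).intervalIntegrable 0 L)
        (intervalIntegrable_const),
      integral_sub (f := fun s => r ^ 2 * κ s) (g := fun s => r * (κ s * D s)) ((continuous_const.mul hκc).intervalIntegrable 0 L)
        ((continuous_const.mul hκDc).intervalIntegrable 0 L),
      integral_const_mul, integral_const_mul, hrot, hκD, integral_const]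
    simp
    ring
  rw [hsplit, hrest, hr]
  have : (∫ s in (0:ℝ)..L, ((γ s).1 * (deriv γ s).2 - (γ s).2 * (deriv γ s).1))
      = ∫ s in (0:ℝ)..L, D s := by rw [hD]
  rw [this]
  field_simp
  ring
end

section
/- Let p : ℝ → ℝ be a C^∞ function with p(θ + 2π) = p(θ) for all θ and p(θ) + p''(θ) > 0 for all θ. Set L = ∫₀^{2π} p(θ) dθ, P(θ) = (p(θ) − p(θ+π))/2 and Q(θ) = p(θ) + p(θ+π) − L/π. Then ∫₀^{2π}((p(θ) − L/(2π))² − p'(θ)²) dθ = ∫₀^{2π}(P(θ)² − P'(θ)²) dθ + (1/4)∫₀^{2π}(Q(θ)² − Q'(θ)²) dθ; equivalently, 4|Ã_{SMS(M)}| = 8|Ã_{E_{1/2}}(M)| + |Ã_{CWMS(M)}|. -/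
open Real intervalIntegral

theorem stmt_14 (p P Q : ℝ → ℝ) (hp : ContDiff ℝ (⊤ : ℕ∞) p)
    (hper : ∀ θ : ℝ, p (θ + 2 * π) = p θ)
    (hpos : ∀ θ : ℝ, p θ + deriv (deriv p) θ > 0)
    (L : ℝ) (hL : L = ∫ θ in (0:ℝ)..(2 * π), p θ)
    (hP : ∀ θ : ℝ, P θ = (p θ - p (θ + π)) / 2)
    (hQ : ∀ θ : ℝ, Q θ = p θ + p (θ + π) - L / π) :
    (∫ θ in (0:ℝ)..(2 * π), ((p θ - L / (2 * π)) ^ 2 - deriv p θ ^ 2))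
      = (∫ θ in (0:ℝ)..(2 * π), (P θ ^ 2 - deriv P θ ^ 2))
        + (1 / 4) * ∫ θ in (0:ℝ)..(2 * π), (Q θ ^ 2 - deriv Q θ ^ 2) := by
  have hpd : Differentiable ℝ p := hp.differentiable (by simp)
  have hpc : Continuous p := hp.continuous
  have hdc : Continuous (deriv p) := hp.continuous_deriv (by simp)
  have hPfun : P = fun θ => (p θ - p (θ + π)) / 2 := funext hP
  have hQfun : Q = fun θ => p θ + p (θ + π) - L / π := funext hQ
  have hshift : Differentiable ℝ (fun θ : ℝ => p (θ + π)) :=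
    hpd.comp (differentiable_id.add_const π)
  -- derivative of P and Q
  have hPd : ∀ θ, deriv P θ = (deriv p θ - deriv p (θ + π)) / 2 := by
    intro θ
    rw [hPfun, deriv_div_const, deriv_fun_sub (hpd θ) (hshift θ), deriv_comp_add_const]
  have hQd : ∀ θ, deriv Q θ = deriv p θ + deriv p (θ + π) := by
    intro θ
    rw [hQfun, deriv_sub_const, deriv_fun_add (hpd θ) (hshift θ), deriv_comp_add_const]
  -- periodicity
  have hperF : Function.Periodic p (2 * π) := hper
  have hdper : Function.Periodic (deriv p) (2 * π) := by
    intro θ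
    have : deriv (fun x => p (x + 2 * π)) θ = deriv p θ := by rw [hperF.funext]
    rw [← this, deriv_comp_add_const]
  set g : ℝ → ℝ := fun θ => (p θ - L / (2 * π)) ^ 2 - deriv p θ ^ 2 with hg
  have hgper : Function.Periodic g (2 * π) := by
    intro θ; simp only [hg, hper θ, hdper θ]
  have hgc : Continuous g := by
    apply Continuous.sub <;> fun_prop
  -- rewrite the two RHS integrals in terms of p
  have e1 : (∫ θ in (0:ℝ)..(2 * π), (P θ ^ 2 - deriv P θ ^ 2))
      = ∫ θ in (0:ℝ)..(2 * π),
          (((p θ - p (θ + π)) / 2) ^ 2 - ((deriv p θ - deriv p (θ + π)) / 2) ^ 2) :=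
    integral_congr fun θ _ => by rw [hP, hPd]
  have e2 : (∫ θ in (0:ℝ)..(2 * π), (Q θ ^ 2 - deriv Q θ ^ 2))
      = ∫ θ in (0:ℝ)..(2 * π),
          ((p θ + p (θ + π) - L / π) ^ 2 - (deriv p θ + deriv p (θ + π)) ^ 2) :=
    integral_congr fun θ _ => by rw [hQ, hQd]
  rw [e1, e2]
  have hi1 : IntervalIntegrable
      (fun θ => ((p θ - p (θ + π)) / 2) ^ 2 - ((deriv p θ - deriv p (θ + π)) / 2) ^ 2)
      MeasureTheory.volume 0 (2 * π) := by
    apply Continuous.intervalIntegrable; fun_prop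
  have hi2 : IntervalIntegrable
      (fun θ => (1/4 : ℝ) * ((p θ + p (θ + π) - L / π) ^ 2 - (deriv p θ + deriv p (θ + π)) ^ 2))
      MeasureTheory.volume 0 (2 * π) := by
    apply Continuous.intervalIntegrable; fun_prop
  rw [← integral_const_mul, ← integral_add hi1 hi2]
  have key : ∀ θ : ℝ,
      (((p θ - p (θ + π)) / 2) ^ 2 - ((deriv p θ - deriv p (θ + π)) / 2) ^ 2)
        + (1/4 : ℝ) * ((p θ + p (θ + π) - L / π) ^ 2 - (deriv p θ + deriv p (θ + π)) ^ 2)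
      = (1/2 : ℝ) * (g θ + g (θ + π)) := by
    intro θ
    simp only [hg]
    have hπ : (π : ℝ) ≠ 0 := pi_ne_zero
    field_simp
    ring
  rw [integral_congr fun θ _ => key θ, integral_const_mul]
  have hshiftint : (∫ θ in (0:ℝ)..(2 * π), g (θ + π)) = ∫ θ in (0:ℝ)..(2 * π), g θ := by
    rw [intervalIntegral.integral_comp_add_right]
    have := hgper.intervalIntegral_add_eq π 0
    simpa [two_mul, add_assoc, add_comm, add_left_comm] using this
  have hsplit : (∫ θ in (0:ℝ)..(2 * π), (g θ + g (θ + π)))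
      = (∫ θ in (0:ℝ)..(2 * π), g θ) + ∫ θ in (0:ℝ)..(2 * π), g (θ + π) := by
    apply integral_add
    · exact hgc.intervalIntegrable _ _
    · exact (hgc.comp (continuous_id.add continuous_const)).intervalIntegrable _ _
  rw [hsplit, hshiftint]
  ring
end

section
/- Let p : ℝ → ℝ be a C^∞ function with p(θ + 2π) = p(θ) for all θ and p(θ) + p''(θ) > 0 for all θ. Set L = ∫₀^{2π} p(θ) dθ and ρ(θ) = p(θ) + p''(θ). Then ∫₀^{2π} |ρ(θ) − L/(2π)| dθ ≤ (1/2)∫₀^{2π} |ρ(θ) + ρ(θ+π) − L/π| dθ + (1/2)∫₀^{2π} |ρ(θ) − ρ(θ+π)| dθ; that is, L_{SMS(M)} ≤ (1/2)·L_{CWMS(M)} + 2·L_{E_{1/2}}(M). -/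
open Real

theorem stmt_15 (p ρ : ℝ → ℝ) (hp : ContDiff ℝ (⊤ : ℕ∞) p)
    (hper : ∀ θ : ℝ, p (θ + 2 * π) = p θ)
    (hpos : ∀ θ : ℝ, p θ + deriv (deriv p) θ > 0)
    (L : ℝ) (hL : L = ∫ θ in (0:ℝ)..(2 * π), p θ)
    (hρ : ∀ θ : ℝ, ρ θ = p θ + deriv (deriv p) θ) :
    (∫ θ in (0:ℝ)..(2 * π), |ρ θ - L / (2 * π)|)
      ≤ (1 / 2) * (∫ θ in (0:ℝ)..(2 * π), |ρ θ + ρ (θ + π) - L / π|)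
        + (1 / 2) * ∫ θ in (0:ℝ)..(2 * π), |ρ θ - ρ (θ + π)| := by
  have hρc : Continuous ρ := by
    have h2 : Continuous (deriv (deriv p)) := by
      have hp' : ContDiff ℝ (⊤ : ℕ∞) p := hp.of_le (by simp)
      have : ContDiff ℝ (⊤ : ℕ∞) (deriv^[2] p) := hp'.iterate_deriv 2
      have := this.continuous
      simpa [Function.iterate_succ, Function.comp] using this
    have : Continuous fun θ => p θ + deriv (deriv p) θ :=
      hp.continuous.add h2
    exact this.congr fun θ => (hρ θ).symm
  have hπ : (π : ℝ) ≠ 0 := Real.pi_ne_zero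
  have key : ∀ θ : ℝ, |ρ θ - L / (2 * π)| ≤
      (1/2) * |ρ θ + ρ (θ + π) - L / π| + (1/2) * |ρ θ - ρ (θ + π)| := by
    intro θ
    have h : ρ θ - L / (2 * π) =
        (1/2) * (ρ θ + ρ (θ + π) - L / π) + (1/2) * (ρ θ - ρ (θ + π)) := by
      field_simp
      ring
    rw [h]
    calc |(1/2) * (ρ θ + ρ (θ + π) - L / π) + (1/2) * (ρ θ - ρ (θ + π))|
        ≤ |(1/2) * (ρ θ + ρ (θ + π) - L / π)| + |(1/2) * (ρ θ - ρ (θ + π))| :=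
          abs_add_le _ _
      _ = (1/2) * |ρ θ + ρ (θ + π) - L / π| + (1/2) * |ρ θ - ρ (θ + π)| := by
          rw [abs_mul, abs_mul, abs_of_pos (by norm_num : (0:ℝ) < 1/2)]
  have hcA : Continuous fun θ => |ρ θ + ρ (θ + π) - L / π| :=
    ((hρc.add (hρc.comp (continuous_id.add continuous_const))).sub continuous_const).abs
  have hcB : Continuous fun θ => |ρ θ - ρ (θ + π)| :=
    (hρc.sub (hρc.comp (continuous_id.add continuous_const))).abs
  have hle : (0:ℝ) ≤ 2 * π := by positivity
  have hmono : (∫ θ in (0:ℝ)..(2 * π), |ρ θ - L / (2 * π)|)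
      ≤ ∫ θ in (0:ℝ)..(2 * π),
          ((1/2) * |ρ θ + ρ (θ + π) - L / π| + (1/2) * |ρ θ - ρ (θ + π)|) := by
    apply intervalIntegral.integral_mono_on hle
    · exact ((hρc.sub continuous_const).abs).intervalIntegrable _ _
    · exact ((continuous_const.mul hcA).add (continuous_const.mul hcB)).intervalIntegrable _ _
    · intro θ _; exact key θ
  calc (∫ θ in (0:ℝ)..(2 * π), |ρ θ - L / (2 * π)|)
      ≤ ∫ θ in (0:ℝ)..(2 * π),
          ((1/2) * |ρ θ + ρ (θ + π) - L / π| + (1/2) * |ρ θ - ρ (θ + π)|) := hmono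
    _ = (1 / 2) * (∫ θ in (0:ℝ)..(2 * π), |ρ θ + ρ (θ + π) - L / π|)
        + (1 / 2) * ∫ θ in (0:ℝ)..(2 * π), |ρ θ - ρ (θ + π)| := by
        rw [intervalIntegral.integral_add ((hcA.intervalIntegrable _ _).const_mul (1/2))
          ((hcB.intervalIntegrable _ _).const_mul (1/2)),
          intervalIntegral.integral_const_mul, intervalIntegral.integral_const_mul]
end

section
/- (Improved isoperimetric inequality 1, with equality case.) Let p : ℝ → ℝ be a C^∞ function with p(θ + 2π) = p(θ) for all θ and p(θ) + p''(θ) > 0 for all θ. Set L = ∫₀^{2π} p(θ) dθ, A = (1/2)∫₀^{2π}(p(θ)² − p'(θ)²) dθ and P(θ) = (p(θ) − p(θ+π))/2. Then L² ≥ 4πA − 2π ∫₀^{2π}(P(θ)² − P'(θ)²) dθ (i.e. L_M² ≥ 4πA_M + 8π|Ã_{E_{1/2}}(M)|), and equality holds if and only if p(θ) + p(θ+π) = L/π for all θ, i.e. if and only if the oval M is a curve of constant width. -/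
open Real intervalIntegral Set Filter

lemma tendsto_div_sin (g : ℝ → ℝ) (a : ℝ) (hg : Differentiable ℝ g) (hga : g a = 0)
    (hsa : Real.sin a = 0) :
    Tendsto (fun θ => g θ / Real.sin θ) (nhdsWithin a {a}ᶜ)
      (nhds (deriv g a / Real.cos a)) := by
  have hca : Real.cos a ≠ 0 := by
    intro h
    have := Real.sin_sq_add_cos_sq a
    rw [hsa, h] at this; norm_num at this
  have h1 : Tendsto (slope g a) (nhdsWithin a {a}ᶜ) (nhds (deriv g a)) :=
    hasDerivAt_iff_tendsto_slope.mp (hg a).hasDerivAt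
  have h2 : Tendsto (slope Real.sin a) (nhdsWithin a {a}ᶜ) (nhds (Real.cos a)) :=
    hasDerivAt_iff_tendsto_slope.mp (Real.hasDerivAt_sin a)
  have h3 := h1.div h2 hca
  refine h3.congr' ?_
  filter_upwards [self_mem_nhdsWithin] with θ hθ
  have hta : θ - a ≠ 0 := sub_ne_zero.mpr hθ
  have e1 : slope g a θ = g θ / (θ - a) := by
    rw [slope_def_field, hga, sub_zero]
  have e2 : slope Real.sin a θ = Real.sin θ / (θ - a) := by
    rw [slope_def_field, hsa, sub_zero]
  simp only [Pi.div_apply, e1, e2]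
  rw [div_div_div_eq, mul_comm (θ - a) (Real.sin θ), mul_div_mul_right _ _ hta]

lemma wirtinger_aux (f : ℝ → ℝ) (hf : ContDiff ℝ (⊤ : ℕ∞) f) (h0 : f 0 = 0) (hpi : f π = 0)
    (hmean : ∫ θ in (0:ℝ)..π, f θ = 0) :
    (∫ θ in (0:ℝ)..π, (f θ ^ 2 - deriv f θ ^ 2)) ≤ 0 ∧
    ((∫ θ in (0:ℝ)..π, (f θ ^ 2 - deriv f θ ^ 2)) = 0 → ∀ θ ∈ Set.Icc (0:ℝ) π, f θ = 0) := by
  have hfi : ContDiff ℝ (⊤:ℕ∞) f := hf.of_le (by simp)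
  have hfd : Differentiable ℝ f := hfi.differentiable (by norm_num)
  have hf1 : ContDiff ℝ (⊤:ℕ∞) (deriv f) := (contDiff_infty_iff_deriv.mp hfi).2
  have hf1d : Differentiable ℝ (deriv f) := hf1.differentiable (by norm_num)
  have hfc : Continuous f := hfd.continuous
  have hf1c : Continuous (deriv f) := hf1d.continuous
  set u : ℝ → ℝ := fun θ => deriv f θ * Real.sin θ - f θ * Real.cos θ with hu_def
  have hud : ∀ θ, HasDerivAt u ((deriv (deriv f) θ + f θ) * Real.sin θ) θ := by
    intro θ
    have h1 := ((hf1d θ).hasDerivAt.mul (Real.hasDerivAt_sin θ)).sub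
      ((hfd θ).hasDerivAt.mul (Real.hasDerivAt_cos θ))
    refine h1.congr_deriv ?_; ring
  have huc : Continuous u := (hf1c.mul Real.continuous_sin).sub (hfc.mul Real.continuous_cos)
  have hud' : Differentiable ℝ u := fun θ => (hud θ).differentiableAt
  set F : ℝ → ℝ := fun θ => (u θ / Real.sin θ) ^ 2 with hF_def
  set G : ℝ → ℝ := fun θ => f θ ^ 2 * Real.cos θ / Real.sin θ with hG_def
  have hsin_ne : ∀ x ∈ Set.Ioo (0:ℝ) π, Real.sin x ≠ 0 := fun x hx =>
    (Real.sin_pos_of_pos_of_lt_pi hx.1 hx.2).ne'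
  -- endpoint limits
  have hFlim : ∀ a : ℝ, f a = 0 → Real.sin a = 0 → Tendsto F (nhdsWithin a {a}ᶜ) (nhds 0) := by
    intro a hfa hsa
    have hua : u a = 0 := by simp [hu_def, hfa, hsa]
    have hu'a : deriv u a = 0 := by rw [(hud a).deriv, hsa]; ring
    have h1 := tendsto_div_sin u a hud' hua hsa
    rw [hu'a, zero_div] at h1
    have := h1.pow 2
    simpa using this
  have hGlim : ∀ a : ℝ, f a = 0 → Real.sin a = 0 → Tendsto G (nhdsWithin a {a}ᶜ) (nhds 0) := by
    intro a hfa hsa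
    set g : ℝ → ℝ := fun θ => f θ ^ 2 * Real.cos θ with hg_def
    have hgd : Differentiable ℝ g := ((hfd.pow 2).mul Real.differentiable_cos)
    have hgderiv : HasDerivAt g (2 * f a * deriv f a * Real.cos a + f a ^ 2 * (-Real.sin a)) a := by
      have := (((hfd a).hasDerivAt.pow 2).mul (Real.hasDerivAt_cos a))
      refine this.congr_deriv ?_; push_cast; simp only [Pi.pow_apply]; ring
    have hg'a : deriv g a = 0 := by rw [hgderiv.deriv, hfa]; ring
    have hga : g a = 0 := by simp [hg_def, hfa]
    have h1 := tendsto_div_sin g a hgd hga hsa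
    rw [hg'a, zero_div] at h1
    exact h1
  have hcwe : ∀ (H : ℝ → ℝ) (a : ℝ), a ∈ Set.Icc (0:ℝ) π → H a = 0 →
      Tendsto H (nhdsWithin a {a}ᶜ) (nhds 0) → ContinuousWithinAt H (Set.Icc (0:ℝ) π) a := by
    intro H a _ hHa ht
    rw [← continuousWithinAt_diff_self]
    unfold ContinuousWithinAt
    rw [hHa]
    exact ht.mono_left (nhdsWithin_mono _ (fun y hy => hy.2))
  have hpi0 : (0:ℝ) < π := Real.pi_pos
  have hmemcases : ∀ x ∈ Set.Icc (0:ℝ) π, x = 0 ∨ x = π ∨ x ∈ Set.Ioo (0:ℝ) π := by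
    intro x hx
    rcases eq_or_ne x 0 with h | h
    · exact Or.inl h
    rcases eq_or_ne x π with h' | h'
    · exact Or.inr (Or.inl h')
    · exact Or.inr (Or.inr ⟨lt_of_le_of_ne hx.1 (Ne.symm h), lt_of_le_of_ne hx.2 h'⟩)
  have hF0 : F 0 = 0 := by simp [hF_def, hu_def, h0]
  have hFpi : F π = 0 := by simp [hF_def, hu_def, hpi]
  have hG0 : G 0 = 0 := by simp [hG_def, h0]
  have hGpi : G π = 0 := by simp [hG_def, hpi]
  have hFc : ContinuousOn F (Set.Icc 0 π) := by
    intro x hx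
    rcases hmemcases x hx with rfl | rfl | hxI
    · exact hcwe F 0 hx hF0 (hFlim 0 h0 Real.sin_zero)
    · exact hcwe F π hx hFpi (hFlim π hpi Real.sin_pi)
    · exact (((huc.continuousAt.div Real.continuous_sin.continuousAt
        (hsin_ne x hxI)).pow 2)).continuousWithinAt
  have hGc : ContinuousOn G (Set.Icc 0 π) := by
    intro x hx
    rcases hmemcases x hx with rfl | rfl | hxI
    · exact hcwe G 0 hx hG0 (hGlim 0 h0 Real.sin_zero)
    · exact hcwe G π hx hGpi (hGlim π hpi Real.sin_pi)
    · exact (((hfc.pow 2).mul Real.continuous_cos).continuousAt.div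
        Real.continuous_sin.continuousAt (hsin_ne x hxI)).continuousWithinAt
  have hG'd : ∀ x ∈ Set.Ioo (0:ℝ) π, HasDerivAt G (deriv f x ^ 2 - f x ^ 2 - F x) x := by
    intro x hx
    have hs := hsin_ne x hx
    have h1 : HasDerivAt (fun θ => f θ ^ 2 * Real.cos θ)
        (2 * f x * deriv f x * Real.cos x + f x ^ 2 * (-Real.sin x)) x := by
      have := (((hfd x).hasDerivAt.pow 2).mul (Real.hasDerivAt_cos x))
      refine this.congr_deriv ?_; push_cast; simp only [Pi.pow_apply]; ring
    have h2 := h1.div (Real.hasDerivAt_sin x) hs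
    refine h2.congr_deriv ?_
    have hpy := Real.sin_sq_add_cos_sq x
    rw [show F x = (u x / Real.sin x) ^ 2 from rfl,
      show u x = deriv f x * Real.sin x - f x * Real.cos x from rfl]
    field_simp [hF_def, hu_def]
    nlinarith [hpy]
  have h0pi : (0:ℝ) ≤ π := hpi0.le
  have hFint : IntervalIntegrable F MeasureTheory.volume 0 π :=
    hFc.intervalIntegrable_of_Icc h0pi
  have hcont2 : Continuous (fun θ => deriv f θ ^ 2 - f θ ^ 2) :=
    (hf1c.pow 2).sub (hfc.pow 2)
  have hint2 : IntervalIntegrable (fun θ => deriv f θ ^ 2 - f θ ^ 2) MeasureTheory.volume 0 π :=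
    hcont2.intervalIntegrable _ _
  have key : ∫ θ in (0:ℝ)..π, (deriv f θ ^ 2 - f θ ^ 2 - F θ) = G π - G 0 :=
    integral_eq_sub_of_hasDerivAt_of_le h0pi hGc (fun x hx => hG'd x hx) (hint2.sub hFint)
  rw [hGpi, hG0, sub_zero] at key
  rw [integral_sub hint2 hFint] at key
  have e1 : ∫ θ in (0:ℝ)..π, (deriv f θ ^ 2 - f θ ^ 2) = ∫ θ in (0:ℝ)..π, F θ := by
    linarith [key]
  have etarget : (∫ θ in (0:ℝ)..π, (f θ ^ 2 - deriv f θ ^ 2)) = - ∫ θ in (0:ℝ)..π, F θ := by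
    have : (fun θ => f θ ^ 2 - deriv f θ ^ 2) = fun θ => -(deriv f θ ^ 2 - f θ ^ 2) := by
      funext θ; ring
    rw [this, integral_neg, e1]
  have hFnonneg : ∀ x, 0 ≤ F x := fun x => sq_nonneg _
  have hFint_nonneg : 0 ≤ ∫ θ in (0:ℝ)..π, F θ :=
    integral_nonneg h0pi (fun x _ => hFnonneg x)
  constructor
  · rw [etarget]; linarith
  · intro heq
    rw [etarget] at heq
    have hIF : ∫ θ in (0:ℝ)..π, F θ = 0 := by linarith
    have hFzero : ∀ x ∈ Set.Ioo (0:ℝ) π, F x = 0 := by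
      intro x hx
      by_contra hne
      have hFx : 0 < F x := lt_of_le_of_ne (hFnonneg x) (Ne.symm hne)
      have := integral_pos hpi0 hFc (fun y _ => hFnonneg y) ⟨x, ⟨hx.1.le, hx.2.le⟩, hFx⟩
      linarith
    have hu0 : ∀ x ∈ Set.Ioo (0:ℝ) π, u x = 0 := by
      intro x hx
      have hs := hsin_ne x hx
      have := hFzero x hx
      have h2 : u x / Real.sin x = 0 := by
        have := sq_eq_zero_iff.mp this
        exact this
      rcases div_eq_zero_iff.mp h2 with h | h
      · exact h
      · exact absurd h hs
    have hvd : ∀ x ∈ Set.Ioo (0:ℝ) π, HasDerivAt (fun θ => f θ / Real.sin θ) 0 x := by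
      intro x hx
      have hs := hsin_ne x hx
      have hdd := (hfd x).hasDerivAt.div (Real.hasDerivAt_sin x) hs
      have hux : deriv f x * Real.sin x - f x * Real.cos x = 0 := hu0 x hx
      rw [hux, zero_div] at hdd
      exact hdd
    have hvcont : ∀ x ∈ Set.Ioo (0:ℝ) π, ContinuousAt (fun θ => f θ / Real.sin θ) x := by
      intro x hx
      exact hfc.continuousAt.div Real.continuous_sin.continuousAt (hsin_ne x hx)
    have hconst : ∀ x ∈ Set.Ioo (0:ℝ) π, ∀ y ∈ Set.Ioo (0:ℝ) π, x < y →
        f x / Real.sin x = f y / Real.sin y := by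
      intro x hx y hy hxy
      have hsub : Set.Icc x y ⊆ Set.Ioo (0:ℝ) π := fun t ht =>
        ⟨lt_of_lt_of_le hx.1 ht.1, lt_of_le_of_lt ht.2 hy.2⟩
      have hsub' : Set.Ioo x y ⊆ Set.Ioo (0:ℝ) π := fun t ht =>
        hsub ⟨ht.1.le, ht.2.le⟩
      obtain ⟨c, hc, hceq⟩ := exists_hasDerivAt_eq_slope (fun θ => f θ / Real.sin θ)
        (fun _ => (0:ℝ)) hxy
        (fun t ht => (hvcont t (hsub ht)).continuousWithinAt)
        (fun t ht => hvd t (hsub' ht))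
      have hyx : y - x ≠ 0 := sub_ne_zero.mpr hxy.ne'
      have := hceq.symm
      rw [div_eq_zero_iff] at this
      rcases this with h | h
      · linarith [sub_eq_zero.mp h]
      · exact absurd h hyx
    have hmid : π/2 ∈ Set.Ioo (0:ℝ) π := ⟨by linarith, by linarith⟩
    set s : ℝ := f (π/2) / Real.sin (π/2) with hs_def
    have hfs : ∀ x ∈ Set.Ioo (0:ℝ) π, f x = s * Real.sin x := by
      intro x hx
      have hvx : f x / Real.sin x = s := by
        rcases lt_trichotomy x (π/2) with h | h | h
        · exact hconst x hx (π/2) hmid h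
        · rw [h]
        · exact (hconst (π/2) hmid x hx h).symm
      have hs' := hsin_ne x hx
      rw [← hvx, div_mul_cancel₀ _ hs']
    have hfsin : ∀ θ ∈ Set.uIcc (0:ℝ) π, f θ = s * Real.sin θ := by
      intro θ hθ
      rw [Set.uIcc_of_le h0pi] at hθ
      rcases hmemcases θ hθ with rfl | rfl | hI
      · simp [h0]
      · simp [hpi]
      · exact hfs θ hI
    have hs0 : s = 0 := by
      have : ∫ θ in (0:ℝ)..π, f θ = ∫ θ in (0:ℝ)..π, s * Real.sin θ :=
        integral_congr hfsin
      rw [hmean] at this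
      rw [integral_const_mul, integral_sin] at this
      norm_num [Real.cos_pi] at this
      linarith
    intro θ hθ
    rcases hmemcases θ hθ with rfl | rfl | hI
    · exact h0
    · exact hpi
    · rw [hfs θ hI, hs0]; ring

lemma antiper_integral (g : ℝ → ℝ) (hg : Continuous g) (hap : ∀ θ, g (θ + π) = -g θ) :
    ∫ θ in (0:ℝ)..(2*π), g θ = 0 := by
  have h1 : IntervalIntegrable g MeasureTheory.volume 0 π := hg.intervalIntegrable _ _
  have h2 : IntervalIntegrable g MeasureTheory.volume π (2*π) := hg.intervalIntegrable _ _
  have hsplit := integral_add_adjacent_intervals h1 h2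
  have hshift : ∫ θ in (0:ℝ)..π, g (θ + π) = ∫ θ in π..(2*π), g θ := by
    rw [integral_comp_add_right]
    norm_num [two_mul]
  have hneg : ∫ θ in (0:ℝ)..π, g (θ + π) = - ∫ θ in (0:ℝ)..π, g θ := by
    rw [← integral_neg]
    exact integral_congr (fun θ _ => hap θ)
  linarith

lemma per_integral_double (g : ℝ → ℝ) (hg : Continuous g) (hpp : ∀ θ, g (θ + π) = g θ) :
    ∫ θ in (0:ℝ)..(2*π), g θ = 2 * ∫ θ in (0:ℝ)..π, g θ := by
  have h1 : IntervalIntegrable g MeasureTheory.volume 0 π := hg.intervalIntegrable _ _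
  have h2 : IntervalIntegrable g MeasureTheory.volume π (2*π) := hg.intervalIntegrable _ _
  have hsplit := integral_add_adjacent_intervals h1 h2
  have hshift : ∫ θ in (0:ℝ)..π, g (θ + π) = ∫ θ in π..(2*π), g θ := by
    rw [integral_comp_add_right]
    norm_num [two_mul]
  have heq : ∫ θ in (0:ℝ)..π, g (θ + π) = ∫ θ in (0:ℝ)..π, g θ :=
    integral_congr (fun θ _ => hpp θ)
  linarith

lemma exists_zero_of_integral_zero (g : ℝ → ℝ) (hg : Continuous g)
    (hint : ∫ θ in (0:ℝ)..π, g θ = 0) : ∃ a ∈ Set.Icc (0:ℝ) π, g a = 0 := by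
  by_contra hcon
  push_neg at hcon
  have hpi0 : (0:ℝ) < π := Real.pi_pos
  have h0mem : (0:ℝ) ∈ Set.Icc (0:ℝ) π := ⟨le_refl _, hpi0.le⟩
  have hIcc : ContinuousOn g (Set.Icc 0 π) := hg.continuousOn
  have hsame : ∀ x ∈ Set.Icc (0:ℝ) π, ∀ y ∈ Set.Icc (0:ℝ) π, g x < 0 → 0 < g y → False := by
    intro x hx y hy hxneg hypos
    have hsub : Set.uIcc x y ⊆ Set.Icc (0:ℝ) π := Set.uIcc_subset_Icc hx hy
    have hiv := intermediate_value_uIcc (hIcc.mono hsub)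
    have h0m : (0:ℝ) ∈ Set.uIcc (g x) (g y) := by
      rw [Set.mem_uIcc]; exact Or.inl ⟨hxneg.le, hypos.le⟩
    obtain ⟨c, hc, hgc⟩ := hiv h0m
    exact hcon c (hsub hc) hgc
  rcases lt_or_gt_of_ne (hcon 0 h0mem) with hneg | hposs
  · have hall : ∀ x ∈ Set.Icc (0:ℝ) π, g x < 0 := by
      intro x hx
      rcases lt_or_gt_of_ne (hcon x hx) with h | h
      · exact h
      · exact absurd (hsame 0 h0mem x hx hneg h) (not_false)
    have hpos2 : 0 < ∫ θ in (0:ℝ)..π, -g θ := by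
      apply integral_pos hpi0 (hg.neg.continuousOn)
      · exact fun y hy => (neg_pos.mpr (hall y ⟨hy.1.le, hy.2⟩)).le
      · exact ⟨0, h0mem, neg_pos.mpr hneg⟩
    rw [integral_neg, hint] at hpos2
    norm_num at hpos2
  · have hall : ∀ x ∈ Set.Icc (0:ℝ) π, 0 < g x := by
      intro x hx
      rcases lt_or_gt_of_ne (hcon x hx) with h | h
      · exact absurd (hsame x hx 0 h0mem h hposs) (not_false)
      · exact h
    have hpos2 : 0 < ∫ θ in (0:ℝ)..π, g θ := by
      apply integral_pos hpi0 hIcc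
      · exact fun y hy => (hall y ⟨hy.1.le, hy.2⟩).le
      · exact ⟨0, h0mem, hposs⟩
    rw [hint] at hpos2
    norm_num at hpos2

theorem stmt_16 (p P : ℝ → ℝ) (hp : ContDiff ℝ (⊤ : ℕ∞) p)
    (hper : ∀ θ : ℝ, p (θ + 2 * π) = p θ)
    (hpos : ∀ θ : ℝ, p θ + deriv (deriv p) θ > 0)
    (L A : ℝ) (hL : L = ∫ θ in (0:ℝ)..(2 * π), p θ)
    (hA : A = (1 / 2) * ∫ θ in (0:ℝ)..(2 * π), (p θ ^ 2 - deriv p θ ^ 2))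
    (hP : ∀ θ : ℝ, P θ = (p θ - p (θ + π)) / 2) :
    L ^ 2 ≥ 4 * π * A - 2 * π * (∫ θ in (0:ℝ)..(2 * π), (P θ ^ 2 - deriv P θ ^ 2)) ∧
    (L ^ 2 = 4 * π * A - 2 * π * (∫ θ in (0:ℝ)..(2 * π), (P θ ^ 2 - deriv P θ ^ 2)) ↔
      ∀ θ : ℝ, p θ + p (θ + π) = L / π) := by
  have hπ : (0:ℝ) < π := Real.pi_pos
  have hπne : (π:ℝ) ≠ 0 := hπ.ne'
  have hPfun : P = fun θ => (p θ - p (θ + π)) / 2 := funext hP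
  have hpi_ : ContDiff ℝ (⊤:ℕ∞) p := hp.of_le (by simp)
  have hpd : Differentiable ℝ p := hpi_.differentiable (by norm_num)
  have hp1 : ContDiff ℝ (⊤:ℕ∞) (deriv p) := (contDiff_infty_iff_deriv.mp hpi_).2
  have hp1d : Differentiable ℝ (deriv p) := hp1.differentiable (by norm_num)
  have hpc : Continuous p := hpd.continuous
  have hp1c : Continuous (deriv p) := hp1d.continuous
  have hds : ∀ (c θ : ℝ), HasDerivAt (fun t => p (t + c)) (deriv p (θ + c)) θ := by
    intro c θ
    simpa [Function.comp_def] using (hpd (θ + c)).hasDerivAt.comp θ ((hasDerivAt_id θ).add_const c)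
  set c₀ : ℝ := L / (2*π) with hc₀
  set q : ℝ → ℝ := fun θ => (p θ + p (θ + π)) / 2 with hq
  set h : ℝ → ℝ := fun θ => q θ - c₀ with hh
  -- derivatives
  have hqD : ∀ θ, HasDerivAt q ((deriv p θ + deriv p (θ + π)) / 2) θ := fun θ =>
    ((hpd θ).hasDerivAt.add (hds π θ)).div_const 2
  have hq' : ∀ θ, deriv q θ = (deriv p θ + deriv p (θ + π)) / 2 := fun θ => (hqD θ).deriv
  have hPD : ∀ θ, HasDerivAt P ((deriv p θ - deriv p (θ + π)) / 2) θ := by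
    rw [hPfun]; exact fun θ => ((hpd θ).hasDerivAt.sub (hds π θ)).div_const 2
  have hP' : ∀ θ, deriv P θ = (deriv p θ - deriv p (θ + π)) / 2 := fun θ => (hPD θ).deriv
  have hhD : ∀ θ, HasDerivAt h ((deriv p θ + deriv p (θ + π)) / 2) θ := fun θ =>
    (hqD θ).sub_const c₀
  have hh' : ∀ θ, deriv h θ = deriv q θ := fun θ => by rw [(hhD θ).deriv, hq']
  have hhd : Differentiable ℝ h := fun θ => (hhD θ).differentiableAt
  -- periodicity
  have hper2 : ∀ θ, p (θ + π + π) = p θ := fun θ => by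
    rw [show θ + π + π = θ + 2*π by ring]; exact hper θ
  have hperD : ∀ θ, deriv p (θ + 2*π) = deriv p θ := by
    intro θ
    have hfun : (fun t => p (t + 2*π)) = p := funext hper
    have h1 := hds (2*π) θ
    rw [hfun] at h1
    exact h1.deriv.symm ▸ rfl
  have hperD2 : ∀ θ, deriv p (θ + π + π) = deriv p θ := fun θ => by
    rw [show θ + π + π = θ + 2*π by ring]; exact hperD θ
  have hqper : ∀ θ, q (θ + π) = q θ := fun θ => by
    simp only [hq]; rw [hper2]; ring
  have hq'per : ∀ θ, deriv q (θ + π) = deriv q θ := fun θ => by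
    rw [hq', hq', hperD2]; ring
  have hPper : ∀ θ, P (θ + π) = -P θ := fun θ => by
    rw [hP, hP, hper2]; ring
  have hP'per : ∀ θ, deriv P (θ + π) = -deriv P θ := fun θ => by
    rw [hP', hP', hperD2]; ring
  have hhper : ∀ θ, h (θ + π) = h θ := fun θ => by
    simp only [hh]; rw [hqper]
  have hh'per : ∀ θ, deriv h (θ + π) = deriv h θ := fun θ => by
    rw [hh', hh', hq'per]
  -- continuity
  have hshiftc : Continuous (fun θ => p (θ + π)) := hpc.comp (continuous_id.add continuous_const)
  have hshiftc' : Continuous (fun θ => deriv p (θ + π)) :=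
    hp1c.comp (continuous_id.add continuous_const)
  have hqc : Continuous q := (hpc.add hshiftc).div_const 2
  have hq'c : Continuous (deriv q) := by
    have : deriv q = fun θ => (deriv p θ + deriv p (θ + π)) / 2 := funext hq'
    rw [this]; exact (hp1c.add hshiftc').div_const 2
  have hPc : Continuous P := by rw [hPfun]; exact (hpc.sub hshiftc).div_const 2
  have hP'c : Continuous (deriv P) := by
    have : deriv P = fun θ => (deriv p θ - deriv p (θ + π)) / 2 := funext hP'
    rw [this]; exact (hp1c.sub hshiftc').div_const 2
  have hhc : Continuous h := hqc.sub continuous_const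
  have hh'c : Continuous (deriv h) := by
    have : deriv h = deriv q := funext hh'
    rw [this]; exact hq'c
  -- integral identities
  have IP : ∫ θ in (0:ℝ)..(2*π), P θ = 0 := antiper_integral P hPc hPper
  have IX : ∫ θ in (0:ℝ)..(2*π), (q θ * P θ - deriv q θ * deriv P θ) = 0 := by
    apply antiper_integral _ ((hqc.mul hPc).sub (hq'c.mul hP'c))
    intro θ
    simp only [Pi.sub_apply, Pi.mul_apply]
    rw [hqper, hq'per, hPper, hP'per]; ring
  have int_q2 : IntervalIntegrable (fun θ => q θ ^ 2 - deriv q θ ^ 2)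
      MeasureTheory.volume 0 (2*π) := ((hqc.pow 2).sub (hq'c.pow 2)).intervalIntegrable _ _
  have int_P2 : IntervalIntegrable (fun θ => P θ ^ 2 - deriv P θ ^ 2)
      MeasureTheory.volume 0 (2*π) := ((hPc.pow 2).sub (hP'c.pow 2)).intervalIntegrable _ _
  have int_X : IntervalIntegrable (fun θ => 2 * (q θ * P θ - deriv q θ * deriv P θ))
      MeasureTheory.volume 0 (2*π) :=
    (continuous_const.mul ((hqc.mul hPc).sub (hq'c.mul hP'c))).intervalIntegrable _ _
  have Isplit : ∫ θ in (0:ℝ)..(2*π), (p θ ^ 2 - deriv p θ ^ 2) =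
      (∫ θ in (0:ℝ)..(2*π), (q θ ^ 2 - deriv q θ ^ 2)) +
      (∫ θ in (0:ℝ)..(2*π), (P θ ^ 2 - deriv P θ ^ 2)) := by
    have hpt : ∀ θ, p θ ^ 2 - deriv p θ ^ 2 = (q θ ^ 2 - deriv q θ ^ 2) +
        ((P θ ^ 2 - deriv P θ ^ 2) + 2 * (q θ * P θ - deriv q θ * deriv P θ)) := by
      intro θ
      rw [hq', hP', hP]
      simp only [hq]
      ring
    rw [integral_congr (fun θ _ => hpt θ), integral_add int_q2 (int_P2.add int_X),
      integral_add int_P2 int_X]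
    have : ∫ θ in (0:ℝ)..(2*π), 2 * (q θ * P θ - deriv q θ * deriv P θ) = 0 := by
      rw [integral_const_mul, IX]; ring
    rw [this]; ring
  have Iq : ∫ θ in (0:ℝ)..(2*π), q θ = L := by
    have hpt : ∀ θ, p θ = q θ + P θ := by
      intro θ; rw [hP]; simp only [hq]; ring
    rw [hL, integral_congr (fun θ _ => hpt θ),
      integral_add (hqc.intervalIntegrable _ _) (hPc.intervalIntegrable _ _), IP, add_zero]
  have Ih : ∫ θ in (0:ℝ)..(2*π), h θ = 0 := by
    have : ∫ θ in (0:ℝ)..(2*π), h θ =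
        (∫ θ in (0:ℝ)..(2*π), q θ) - ∫ θ in (0:ℝ)..(2*π), (c₀ : ℝ) :=
      integral_sub (hqc.intervalIntegrable _ _) (intervalIntegrable_const)
    rw [this, Iq, integral_const, hc₀]
    simp
    field_simp
    ring
  have Iq2 : ∫ θ in (0:ℝ)..(2*π), (q θ ^ 2 - deriv q θ ^ 2) =
      L^2/(2*π) + ∫ θ in (0:ℝ)..(2*π), (h θ ^ 2 - deriv h θ ^ 2) := by
    have hpt : ∀ θ, q θ ^ 2 - deriv q θ ^ 2 =
        (h θ ^ 2 - deriv h θ ^ 2) + (2 * c₀ * h θ + c₀ ^ 2) := by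
      intro θ
      rw [hh']
      simp only [hh]
      ring
    have int_h2 : IntervalIntegrable (fun θ => h θ ^ 2 - deriv h θ ^ 2)
        MeasureTheory.volume 0 (2*π) := ((hhc.pow 2).sub (hh'c.pow 2)).intervalIntegrable _ _
    have int_lin : IntervalIntegrable (fun θ => 2 * c₀ * h θ + c₀ ^ 2)
        MeasureTheory.volume 0 (2*π) :=
      ((continuous_const.mul hhc).add continuous_const).intervalIntegrable _ _
    rw [integral_congr (fun θ _ => hpt θ), integral_add int_h2 int_lin]
    have : ∫ θ in (0:ℝ)..(2*π), (2 * c₀ * h θ + c₀ ^ 2) = L^2/(2*π) := by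
      rw [integral_add (f := fun θ => 2 * c₀ * h θ) (g := fun _ => c₀ ^ 2)
          ((continuous_const.mul hhc).intervalIntegrable _ _) intervalIntegrable_const,
        integral_const_mul, Ih, integral_const]
      simp [hc₀]
      field_simp
    rw [this]; ring
  have Idouble : ∫ θ in (0:ℝ)..(2*π), (h θ ^ 2 - deriv h θ ^ 2) =
      2 * ∫ θ in (0:ℝ)..π, (h θ ^ 2 - deriv h θ ^ 2) := by
    apply per_integral_double _ ((hhc.pow 2).sub (hh'c.pow 2))
    intro θ; simp only [Pi.sub_apply, Pi.pow_apply]; rw [hhper, hh'per]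
  have Ihπ : ∫ θ in (0:ℝ)..π, h θ = 0 := by
    have := per_integral_double h hhc hhper
    rw [Ih] at this
    linarith
  obtain ⟨a, ha, hza⟩ := exists_zero_of_integral_zero h hhc Ihπ
  set h₁ : ℝ → ℝ := fun θ => h (θ + a) with hh₁
  have hh₁D : ∀ θ, HasDerivAt h₁ (deriv h (θ + a)) θ := by
    intro θ
    simpa [Function.comp_def] using (hhd (θ + a)).hasDerivAt.comp θ ((hasDerivAt_id θ).add_const a)
  have hh₁' : ∀ θ, deriv h₁ θ = deriv h (θ + a) := fun θ => (hh₁D θ).deriv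
  have hperiodic_h : Function.Periodic h π := hhper
  have hperiodic_int : Function.Periodic (fun θ => h θ ^ 2 - deriv h θ ^ 2) π := by
    intro θ; simp only; rw [hhper, hh'per]
  have Icomp : ∫ θ in (0:ℝ)..π, (h₁ θ ^ 2 - deriv h₁ θ ^ 2) =
      ∫ θ in (0:ℝ)..π, (h θ ^ 2 - deriv h θ ^ 2) := by
    have e1 : ∀ θ, h₁ θ ^ 2 - deriv h₁ θ ^ 2 = h (θ + a) ^ 2 - deriv h (θ + a) ^ 2 := by
      intro θ; rw [hh₁']
    have e2 : ∫ θ in (0:ℝ)..π, (h (θ + a) ^ 2 - deriv h (θ + a) ^ 2) =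
        ∫ θ in ((0:ℝ)+a)..(π+a), (h θ ^ 2 - deriv h θ ^ 2) :=
      integral_comp_add_right (f := fun t => h t ^ 2 - deriv h t ^ 2) a
    rw [integral_congr (fun θ _ => e1 θ), e2, zero_add]
    have := hperiodic_int.intervalIntegral_add_eq a 0
    rw [zero_add] at this
    rw [show π + a = a + π by ring, this]
  have Imean1 : ∫ θ in (0:ℝ)..π, h₁ θ = 0 := by
    have e2 : ∫ θ in (0:ℝ)..π, h (θ + a) =
        ∫ θ in ((0:ℝ)+a)..(π+a), h θ := integral_comp_add_right (f := h) a
    have e1 : ∀ θ ∈ Set.uIcc (0:ℝ) π, h₁ θ = h (θ + a) := fun θ _ => rfl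
    rw [integral_congr e1, e2, zero_add]
    have := hperiodic_h.intervalIntegral_add_eq a 0
    rw [zero_add] at this
    rw [show π + a = a + π by ring, this, Ihπ]
  have hsm : ContDiff ℝ (⊤ : ℕ∞) h₁ := by
    have hq_smooth : ContDiff ℝ (⊤ : ℕ∞) q :=
      ((hp.add (hp.comp (contDiff_id.add contDiff_const))).div_const 2)
    have hh_smooth : ContDiff ℝ (⊤ : ℕ∞) h := hq_smooth.sub contDiff_const
    exact hh_smooth.comp (contDiff_id.add contDiff_const)
  have h₁0 : h₁ 0 = 0 := by simp only [hh₁, zero_add]; exact hza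
  have h₁π : h₁ π = 0 := by
    simp only [hh₁]
    rw [show π + a = a + π by ring, hhper a]
    exact hza
  obtain ⟨W1, W2⟩ := wirtinger_aux h₁ hsm h₁0 h₁π Imean1
  -- master identity
  have master : 4 * π * A - 2 * π * (∫ θ in (0:ℝ)..(2 * π), (P θ ^ 2 - deriv P θ ^ 2)) =
      L ^ 2 + 4 * π * ∫ θ in (0:ℝ)..π, (h₁ θ ^ 2 - deriv h₁ θ ^ 2) := by
    rw [hA, Isplit, Iq2, Idouble, Icomp]
    field_simp
    ring
  constructor
  · rw [ge_iff_le, master]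
    nlinarith [W1, hπ]
  · rw [master]
    constructor
    · intro heq
      have h4 : 4 * π * (∫ θ in (0:ℝ)..π, (h₁ θ ^ 2 - deriv h₁ θ ^ 2)) = 0 := by linarith
      have hI0 : ∫ θ in (0:ℝ)..π, (h₁ θ ^ 2 - deriv h₁ θ ^ 2) = 0 := by
        rcases mul_eq_zero.mp h4 with h' | h'
        · nlinarith
        · exact h'
      have hz := W2 hI0
      have hall : ∀ θ, h θ = 0 := by
        intro θ
        set k : ℤ := ⌈(a - θ)/π⌉ with hk
        have hk1 : (a - θ)/π ≤ (k:ℝ) := Int.le_ceil _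
        have hk2 : (k:ℝ) < (a - θ)/π + 1 := Int.ceil_lt_add_one _
        have hb1 : a ≤ θ + k*π := by
          rw [div_le_iff₀ hπ] at hk1; linarith
        have hb2 : θ + k*π ≤ a + π := by
          have := mul_lt_mul_of_pos_right hk2 hπ
          rw [add_mul, div_mul_cancel₀ _ hπne] at this
          linarith
        have hmem : θ + k*π - a ∈ Set.Icc (0:ℝ) π := ⟨by linarith, by linarith⟩
        have e1 : h₁ (θ + k*π - a) = h (θ + k*π) := by
          simp only [hh₁]; congr 1; ring
        have e2 : h (θ + k*π) = h θ := (hperiodic_h.int_mul k) θ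
        have := hz _ hmem
        rw [e1, e2] at this
        exact this
      intro θ
      have := hall θ
      simp only [hh, hq, hc₀] at this
      field_simp at this
      field_simp
      linarith
    · intro hcw
      have hh0 : ∀ θ, h θ = 0 := by
        intro θ
        simp only [hh, hq, hc₀]
        rw [hcw θ]
        field_simp
        ring
      have h₁eq : h₁ = fun _ => (0:ℝ) := by
        funext θ; simp only [hh₁]; exact hh0 _
      have : ∫ θ in (0:ℝ)..π, (h₁ θ ^ 2 - deriv h₁ θ ^ 2) = 0 := by
        rw [h₁eq]
        simp
      rw [this]; ring
end
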